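/- arXiv:2201.11564 — 9 statements merged into one kernel-verified Lean document; each statement's English description precedes it below -/
import Mathlib

section
/- Let λ ∈ (0,1) and f, g, h : ℝⁿ → ℝ≥0 be measurable functions such that h((1-λ)x + λy) ≥ f(x)^(1-λ) g(y)^λ for all x, y ∈ ℝⁿ. Then ∫ h ≥ (∫ f)^(1-λ) (∫ g)^λ. -/
open MeasureTheory ENNReal NNReal
open scoped Pointwise

namespace PrekopaLeindlerAux

/-- Weighted AM-GM for two extended nonnegative reals. -/
lemma amgm2 {u v : ℝ} (hu : 0 < u) (hv : 0 < v) (huv : u + v = 1) (a b : ℝ≥0∞) :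
    a ^ u * b ^ v ≤ ENNReal.ofReal u * a + ENNReal.ofReal v * b := by
  rcases eq_or_ne a 0 with rfl | ha0
  · rw [ENNReal.zero_rpow_of_pos hu, zero_mul]; exact zero_le
  rcases eq_or_ne b 0 with rfl | hb0
  · rw [ENNReal.zero_rpow_of_pos hv, mul_zero]; exact zero_le
  rcases eq_or_ne a ⊤ with rfl | ha
  · have : ENNReal.ofReal u * ⊤ = ⊤ := by
      simp [ENNReal.mul_top, (ENNReal.ofReal_pos.mpr hu).ne']
    rw [this, top_add]; exact le_top
  rcases eq_or_ne b ⊤ with rfl | hb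
  · have : ENNReal.ofReal v * ⊤ = ⊤ := by
      simp [ENNReal.mul_top, (ENNReal.ofReal_pos.mpr hv).ne']
    rw [this, add_top]; exact le_top
  lift a to ℝ≥0 using ha
  lift b to ℝ≥0 using hb
  have key := NNReal.geom_mean_le_arith_mean2_weighted (w₁ := u.toNNReal)
    (w₂ := v.toNNReal) (p₁ := a) (p₂ := b) (by
      rw [← Real.toNNReal_add hu.le hv.le, huv, Real.toNNReal_one])
  rw [Real.coe_toNNReal _ hu.le, Real.coe_toNNReal _ hv.le] at key
  calc (a : ℝ≥0∞) ^ u * (b : ℝ≥0∞) ^ v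
      = ((a ^ u * b ^ v : ℝ≥0) : ℝ≥0∞) := by
        rw [ENNReal.coe_mul, ENNReal.coe_rpow_of_nonneg _ hu.le,
          ENNReal.coe_rpow_of_nonneg _ hv.le]
    _ ≤ ((u.toNNReal * a + v.toNNReal * b : ℝ≥0) : ℝ≥0∞) := ENNReal.coe_le_coe.mpr key
    _ = ENNReal.ofReal u * a + ENNReal.ofReal v * b := by
        simp [ENNReal.coe_mul, ENNReal.ofReal]

/-- One-dimensional Brunn–Minkowski: the (outer) measure of a sumset of two nonempty
measurable sets is at least the sum of the measures. -/
lemma sumset_one_dim {A B : Set ℝ} (hA : A.Nonempty) (hB : B.Nonempty)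
    (mA : MeasurableSet A) (mB : MeasurableSet B) :
    volume A + volume B ≤ volume (A + B) := by
  obtain ⟨a0, ha0⟩ := hA
  obtain ⟨b0, hb0⟩ := hB
  -- inclusion facts for translates
  have hsub_right : ∀ (c : ℝ), c ∈ A → ∀ {L : Set ℝ}, L ⊆ B → c +ᵥ L ⊆ A + B := by
    intro c hc L hLB x hx
    obtain ⟨y, hy, rfl⟩ := hx
    exact Set.add_mem_add hc (hLB hy)
  have hsub_left : ∀ (c : ℝ), c ∈ B → ∀ {K : Set ℝ}, K ⊆ A → c +ᵥ K ⊆ A + B := by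
    intro c hc K hKA x hx
    obtain ⟨y, hy, rfl⟩ := hx
    show c + y ∈ A + B
    have hmem : y + c ∈ A + B := Set.add_mem_add (hKA hy) hc
    rwa [add_comm y c] at hmem
  have key : ∀ K L : Set ℝ, IsCompact K → IsCompact L → K ⊆ A → L ⊆ B →
      volume K + volume L ≤ volume (A + B) := by
    intro K L hK hL hKA hLB
    rcases K.eq_empty_or_nonempty with rfl | hKne
    · rw [measure_empty, zero_add, ← measure_vadd volume a0 L]
      exact measure_mono (hsub_right a0 ha0 hLB)
    rcases L.eq_empty_or_nonempty with rfl | hLne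
    · rw [measure_empty, add_zero, ← measure_vadd volume b0 K]
      exact measure_mono (hsub_left b0 hb0 hKA)
    set a := sSup K with ha_def
    set b := sInf L with hb_def
    have ha : a ∈ K := hK.sSup_mem hKne
    have hb : b ∈ L := hL.sInf_mem hLne
    set U : Set ℝ := b +ᵥ K with hU_def
    set V : Set ℝ := a +ᵥ L with hV_def
    have hUm : MeasurableSet U := by
      have : IsCompact U := hK.image (continuous_const.add continuous_id)
      exact this.measurableSet
    have hVm : MeasurableSet V := by
      have : IsCompact V := hL.image (continuous_const.add continuous_id)
      exact this.measurableSet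
    have hUV : U ∩ V ⊆ {b + a} := by
      rintro x ⟨⟨k, hk, rfl⟩, ⟨m, hm, hx⟩⟩
      have h1 : b + k ≤ b + a := by
        have : k ≤ a := le_csSup hK.bddAbove hk
        linarith
      have h2 : b + a ≤ b + k := by
        have hbm : b ≤ m := csInf_le hL.bddBelow hm
        have hx' : a + m = b + k := hx
        linarith
      simp [le_antisymm h1 h2]
    have hunion : U ∪ V ⊆ A + B := by
      rintro x (hx | hx)
      · exact hsub_left b (hLB hb) hKA (by simpa [hU_def] using hx)
      · exact hsub_right a (hKA ha) hLB (by simpa [hV_def] using hx)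
    calc volume K + volume L = volume U + volume V := by
          rw [measure_vadd, measure_vadd]
      _ = volume (U ∪ V) + volume (U ∩ V) := (measure_union_add_inter U hVm).symm
      _ ≤ volume (A + B) + volume {b + a} :=
          add_le_add (measure_mono hunion) (measure_mono hUV)
      _ = volume (A + B) := by rw [Real.volume_singleton, add_zero]
  -- pass to suprema over compact subsets
  rw [mA.measure_eq_iSup_isCompact, mB.measure_eq_iSup_isCompact]
  refine iSup_add_iSup_le fun K L => ?_
  have hKside : (⨆ (_ : K ⊆ A), ⨆ (_ : IsCompact K), volume K) + 
      (⨆ (_ : L ⊆ B), ⨆ (_ : IsCompact L), volume L) ≤ volume (A + B) := by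
    by_cases hKA : K ⊆ A
    · by_cases hK : IsCompact K
      · by_cases hLB : L ⊆ B
        · by_cases hL : IsCompact L
          · simp only [hKA, hK, hLB, hL, iSup_pos]
            exact key K L hK hL hKA hLB
          · simp only [hKA, hK, hLB, iSup_pos, iSup_neg hL, add_zero]
            exact le_trans (by simp) (key K {b0} hK isCompact_singleton hKA
              (Set.singleton_subset_iff.mpr hb0))
        · simp only [hKA, hK, iSup_pos, iSup_neg hLB, add_zero]
          exact le_trans (by simp) (key K {b0} hK isCompact_singleton hKA
            (Set.singleton_subset_iff.mpr hb0))
      · simp only [hKA, iSup_pos, iSup_neg hK, zero_add]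
        by_cases hLB : L ⊆ B
        · by_cases hL : IsCompact L
          · simp only [hLB, hL, iSup_pos]
            exact le_trans (by simp) (key {a0} L isCompact_singleton hL
              (Set.singleton_subset_iff.mpr ha0) hLB)
          · simp [iSup_neg hL]
        · simp [iSup_neg hLB]
    · simp only [iSup_neg hKA, zero_add]
      by_cases hLB : L ⊆ B
      · by_cases hL : IsCompact L
        · simp only [hLB, hL, iSup_pos]
          exact le_trans (by simp) (key {a0} L isCompact_singleton hL
            (Set.singleton_subset_iff.mpr ha0) hLB)
        · simp [iSup_neg hL]
      · simp [iSup_neg hLB]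
  exact hKside

/-- The 1-dimensional Prékopa–Leindler inequality, additive form, for normalized functions. -/
lemma dim1_norm {l : ℝ} (hl : l ∈ Set.Ioo (0:ℝ) 1) (f g h : ℝ → ℝ≥0)
    (hf : Measurable f) (hg : Measurable g) (hh : Measurable h)
    (hf1 : ∀ x, f x ≤ 1) (hg1 : ∀ x, g x ≤ 1)
    (hfs : ∀ t : ℝ≥0, t < 1 → ∃ x, t < f x) (hgs : ∀ t : ℝ≥0, t < 1 → ∃ x, t < g x)
    (hcond : ∀ x y : ℝ, f x ^ (1 - l) * g y ^ l ≤ h ((1 - l) * x + l * y)) :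
    ENNReal.ofReal (1 - l) * (∫⁻ x, (f x : ℝ≥0∞)) + ENNReal.ofReal l * (∫⁻ x, (g x : ℝ≥0∞))
      ≤ ∫⁻ x, (h x : ℝ≥0∞) := by
  obtain ⟨hl0, hl1⟩ := hl
  have h1l : 0 < 1 - l := by linarith
  -- layer cake representations
  have layf : (∫⁻ x, (f x : ℝ≥0∞)) = ∫⁻ t in Set.Ioi (0:ℝ), volume {a : ℝ | t < (f a : ℝ)} := by
    rw [← lintegral_eq_lintegral_meas_lt volume (Filter.Eventually.of_forall fun x => (f x).coe_nonneg)
      (hf.coe_nnreal_real.aemeasurable)]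
    simp [ENNReal.ofReal_coe_nnreal]
  have layg : (∫⁻ x, (g x : ℝ≥0∞)) = ∫⁻ t in Set.Ioi (0:ℝ), volume {a : ℝ | t < (g a : ℝ)} := by
    rw [← lintegral_eq_lintegral_meas_lt volume (Filter.Eventually.of_forall fun x => (g x).coe_nonneg)
      (hg.coe_nnreal_real.aemeasurable)]
    simp [ENNReal.ofReal_coe_nnreal]
  have layh : (∫⁻ x, (h x : ℝ≥0∞)) = ∫⁻ t in Set.Ioi (0:ℝ), volume {a : ℝ | t < (h a : ℝ)} := by
    rw [← lintegral_eq_lintegral_meas_lt volume (Filter.Eventually.of_forall fun x => (h x).coe_nonneg)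
      (hh.coe_nnreal_real.aemeasurable)]
    simp [ENNReal.ofReal_coe_nnreal]
  have Fm : Measurable fun t : ℝ => volume {a : ℝ | t < (f a : ℝ)} := by
    apply Antitone.measurable
    intro s t hst
    exact measure_mono fun a ha => lt_of_le_of_lt hst ha
  have Gm : Measurable fun t : ℝ => volume {a : ℝ | t < (g a : ℝ)} := by
    apply Antitone.measurable
    intro s t hst
    exact measure_mono fun a ha => lt_of_le_of_lt hst ha
  rw [layf, layg, layh, ← lintegral_const_mul _ Fm, ← lintegral_const_mul _ Gm,
    ← lintegral_add_left (Fm.const_mul _)]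
  refine lintegral_mono_ae ?_
  rw [ae_restrict_iff' measurableSet_Ioi]
  refine Filter.Eventually.of_forall fun t ht => ?_
  rw [Set.mem_Ioi] at ht
  by_cases ht1 : t < 1
  · -- the sets are nonempty and the sumset inclusion holds
    set tn : ℝ≥0 := ⟨t, ht.le⟩ with htn
    have htn0 : tn ≠ 0 := by
      intro hcontra
      rw [← NNReal.coe_eq_zero.mpr hcontra] at ht
      exact lt_irrefl _ ht
    have htn1 : tn < 1 := by
      rw [← NNReal.coe_lt_coe]; exact ht1
    set A : Set ℝ := {a : ℝ | t < (f a : ℝ)} with hA_def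
    set B : Set ℝ := {a : ℝ | t < (g a : ℝ)} with hB_def
    have hAne : A.Nonempty := by
      obtain ⟨x, hx⟩ := hfs tn htn1
      exact ⟨x, by exact (NNReal.coe_lt_coe.mpr hx : (tn : ℝ) < f x)⟩
    have hBne : B.Nonempty := by
      obtain ⟨x, hx⟩ := hgs tn htn1
      exact ⟨x, by exact (NNReal.coe_lt_coe.mpr hx : (tn : ℝ) < g x)⟩
    have hAm : MeasurableSet A := measurableSet_lt measurable_const hf.coe_nnreal_real
    have hBm : MeasurableSet B := measurableSet_lt measurable_const hg.coe_nnreal_real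
    have hincl : (1 - l) • A + l • B ⊆ {a : ℝ | t < (h a : ℝ)} := by
      rintro u ⟨p, hp, q, hq, rfl⟩
      obtain ⟨x, hx, rfl⟩ := hp
      obtain ⟨y, hy, rfl⟩ := hq
      have hxf : tn < f x := by rw [← NNReal.coe_lt_coe]; exact hx
      have hyg : tn < g y := by rw [← NNReal.coe_lt_coe]; exact hy
      have hlt : tn < f x ^ (1 - l) * g y ^ l := by
        have h1 : tn ^ (1 - l) < f x ^ (1 - l) := NNReal.rpow_lt_rpow hxf h1l
        have h2 : tn ^ l < g y ^ l := NNReal.rpow_lt_rpow hyg hl0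
        have := mul_lt_mul'' h1 h2 zero_le zero_le
        rwa [← NNReal.rpow_add htn0, sub_add_cancel, NNReal.rpow_one] at this
      have := lt_of_lt_of_le hlt (hcond x y)
      simp only [smul_eq_mul, Set.mem_setOf_eq]
      rw [← NNReal.coe_lt_coe] at this
      exact this
    have hstep : ENNReal.ofReal (1 - l) * volume A + ENNReal.ofReal l * volume B
        ≤ volume {a : ℝ | t < (h a : ℝ)} := by
      have e1 : volume ((1 - l) • A) = ENNReal.ofReal (1 - l) * volume A := by
        rw [Measure.addHaar_smul]
        congr 2
        rw [Module.finrank_self, pow_one, abs_of_pos h1l]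
      have e2 : volume (l • B) = ENNReal.ofReal l * volume B := by
        rw [Measure.addHaar_smul]
        congr 2
        rw [Module.finrank_self, pow_one, abs_of_pos hl0]
      calc ENNReal.ofReal (1 - l) * volume A + ENNReal.ofReal l * volume B
          = volume ((1 - l) • A) + volume (l • B) := by rw [e1, e2]
        _ ≤ volume ((1 - l) • A + l • B) :=
            sumset_one_dim (hAne.smul_set) (hBne.smul_set)
              (hAm.const_smul_of_ne_zero h1l.ne') (hBm.const_smul_of_ne_zero hl0.ne')
        _ ≤ volume {a : ℝ | t < (h a : ℝ)} := measure_mono hincl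
    exact hstep
  · -- the superlevel sets of f and g are empty
    push_neg at ht1
    have hAe : {a : ℝ | t < (f a : ℝ)} = ∅ := by
      ext a
      simp only [Set.mem_setOf_eq, Set.mem_empty_iff_false, iff_false, not_lt]
      calc (f a : ℝ) ≤ 1 := by exact_mod_cast hf1 a
        _ ≤ t := ht1
    have hBe : {a : ℝ | t < (g a : ℝ)} = ∅ := by
      ext a
      simp only [Set.mem_setOf_eq, Set.mem_empty_iff_false, iff_false, not_lt]
      calc (g a : ℝ) ≤ 1 := by exact_mod_cast hg1 a
        _ ≤ t := ht1
    rw [hAe, hBe]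
    simp


lemma iSup_mul_iSup_of_monotone {a b : ℕ → ℝ≥0∞} (ha : Monotone a) (hb : Monotone b) :
    (⨆ n, a n) * (⨆ n, b n) = ⨆ n, a n * b n := by
  apply le_antisymm
  · rw [ENNReal.iSup_mul]
    refine iSup_le fun i => ?_
    rw [ENNReal.mul_iSup]
    refine iSup_le fun j => ?_
    refine le_iSup_of_le (max i j) ?_
    exact mul_le_mul' (ha (le_max_left i j)) (hb (le_max_right i j))
  · exact iSup_le fun n => mul_le_mul' (le_iSup a n) (le_iSup b n)

lemma rpow_iSup {p : ℝ} (hp : 0 < p) (a : ℕ → ℝ≥0∞) :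
    (⨆ n, a n) ^ p = ⨆ n, a n ^ p := by
  have hiso := OrderIso.map_iSup (ENNReal.orderIsoRpow p hp) a
  simp_rw [ENNReal.orderIsoRpow_apply] at hiso
  exact hiso

lemma iSup_min_nat (a : ℝ≥0∞) : ⨆ n : ℕ, min a (n : ℝ≥0∞) = a := by
  apply le_antisymm (iSup_le fun n => min_le_left _ _)
  rcases eq_or_ne a ⊤ with rfl | ha
  · have : ∀ n : ℕ, min (⊤ : ℝ≥0∞) (n : ℝ≥0∞) = n := fun n => min_eq_right le_top
    simp_rw [this]
    rw [ENNReal.iSup_natCast]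
  · obtain ⟨m, hm⟩ := ENNReal.exists_nat_gt ha
    refine le_iSup_of_le m ?_
    rw [min_eq_left hm.le]

/-- The 1-dimensional Prékopa–Leindler inequality for bounded functions. -/
lemma dim1_bdd {l : ℝ} (hl : l ∈ Set.Ioo (0:ℝ) 1) (f g h : ℝ → ℝ≥0)
    (hf : Measurable f) (hg : Measurable g) (hh : Measurable h)
    (C : ℝ≥0) (hfb : ∀ x, f x ≤ C) (hgb : ∀ x, g x ≤ C)
    (hcond : ∀ x y : ℝ, f x ^ (1 - l) * g y ^ l ≤ h ((1 - l) * x + l * y)) :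
    (∫⁻ x, (f x : ℝ≥0∞)) ^ (1 - l) * (∫⁻ x, (g x : ℝ≥0∞)) ^ l ≤ ∫⁻ x, (h x : ℝ≥0∞) := by
  obtain ⟨hl0, hl1⟩ := hl
  have h1l : 0 < 1 - l := by linarith
  rcases eq_or_ne (∫⁻ x, (f x : ℝ≥0∞)) 0 with hIf | hIf
  · rw [hIf, ENNReal.zero_rpow_of_pos h1l, zero_mul]; exact zero_le
  rcases eq_or_ne (∫⁻ x, (g x : ℝ≥0∞)) 0 with hIg | hIg
  · rw [hIg, ENNReal.zero_rpow_of_pos hl0, mul_zero]; exact zero_le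
  have hbddf : BddAbove (Set.range f) := ⟨C, by rintro _ ⟨x, rfl⟩; exact hfb x⟩
  have hbddg : BddAbove (Set.range g) := ⟨C, by rintro _ ⟨x, rfl⟩; exact hgb x⟩
  set sf : ℝ≥0 := ⨆ x, f x with hsf
  set sg : ℝ≥0 := ⨆ x, g x with hsg
  have hsf0 : 0 < sf := by
    by_contra hcon
    push_neg at hcon
    have hz : ∀ x, f x = 0 := fun x =>
      le_antisymm (le_trans (le_ciSup hbddf x) hcon) zero_le
    exact hIf (by simp [hz])
  have hsg0 : 0 < sg := by
    by_contra hcon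
    push_neg at hcon
    have hz : ∀ x, g x = 0 := fun x =>
      le_antisymm (le_trans (le_ciSup hbddg x) hcon) zero_le
    exact hIg (by simp [hz])
  set D : ℝ≥0 := sf ^ (1 - l) * sg ^ l with hD
  have hD0 : 0 < D := mul_pos (NNReal.rpow_pos hsf0) (NNReal.rpow_pos hsg0)
  set f' : ℝ → ℝ≥0 := fun x => f x / sf with hf'
  set g' : ℝ → ℝ≥0 := fun x => g x / sg with hg'
  set h' : ℝ → ℝ≥0 := fun x => h x / D with hh'
  have mf' : Measurable f' := hf.div measurable_const
  have mg' : Measurable g' := hg.div measurable_const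
  have mh' : Measurable h' := hh.div measurable_const
  have hf1 : ∀ x, f' x ≤ 1 := fun x => (div_le_one hsf0).mpr (le_ciSup hbddf x)
  have hg1 : ∀ x, g' x ≤ 1 := fun x => (div_le_one hsg0).mpr (le_ciSup hbddg x)
  have hfs : ∀ t : ℝ≥0, t < 1 → ∃ x, t < f' x := by
    intro t ht
    have : t * sf < sf := by
      calc t * sf < 1 * sf := by exact mul_lt_mul_of_pos_right ht hsf0
        _ = sf := one_mul sf
    have h2 : t * sf < ⨆ x, f x := lt_of_lt_of_le this (le_of_eq hsf)
    obtain ⟨x, hx⟩ := exists_lt_of_lt_ciSup h2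
    exact ⟨x, (lt_div_iff₀ hsf0).mpr hx⟩
  have hgs : ∀ t : ℝ≥0, t < 1 → ∃ x, t < g' x := by
    intro t ht
    have : t * sg < sg := by
      calc t * sg < 1 * sg := by exact mul_lt_mul_of_pos_right ht hsg0
        _ = sg := one_mul sg
    have h2 : t * sg < ⨆ x, g x := lt_of_lt_of_le this (le_of_eq hsg)
    obtain ⟨x, hx⟩ := exists_lt_of_lt_ciSup h2
    exact ⟨x, (lt_div_iff₀ hsg0).mpr hx⟩
  have hcond' : ∀ x y : ℝ, f' x ^ (1 - l) * g' y ^ l ≤ h' ((1 - l) * x + l * y) := by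
    intro x y
    rw [hf', hg', hh']
    simp only
    rw [NNReal.div_rpow, NNReal.div_rpow, div_mul_div_comm, ← hD]
    gcongr
    exact hcond x y
  have key := dim1_norm ⟨hl0, hl1⟩ f' g' h' mf' mg' mh' hf1 hg1 hfs hgs hcond'
  have hamgm := amgm2 h1l hl0 (by ring) (∫⁻ x, (f' x : ℝ≥0∞)) (∫⁻ x, (g' x : ℝ≥0∞))
  have key2 : (∫⁻ x, (f' x : ℝ≥0∞)) ^ (1 - l) * (∫⁻ x, (g' x : ℝ≥0∞)) ^ l
      ≤ ∫⁻ x, (h' x : ℝ≥0∞) := le_trans hamgm key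
  have ef : (∫⁻ x, (f' x : ℝ≥0∞)) = (∫⁻ x, (f x : ℝ≥0∞)) / (sf : ℝ≥0∞) := by
    simp_rw [hf', ENNReal.coe_div hsf0.ne', div_eq_mul_inv]
    rw [lintegral_mul_const _ hf.coe_nnreal_ennreal]
  have eg : (∫⁻ x, (g' x : ℝ≥0∞)) = (∫⁻ x, (g x : ℝ≥0∞)) / (sg : ℝ≥0∞) := by
    simp_rw [hg', ENNReal.coe_div hsg0.ne', div_eq_mul_inv]
    rw [lintegral_mul_const _ hg.coe_nnreal_ennreal]
  have eh : (∫⁻ x, (h' x : ℝ≥0∞)) = (∫⁻ x, (h x : ℝ≥0∞)) / (D : ℝ≥0∞) := by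
    simp_rw [hh', ENNReal.coe_div hD0.ne', div_eq_mul_inv]
    rw [lintegral_mul_const _ hh.coe_nnreal_ennreal]
  rw [ef, eg, eh] at key2
  have hDcoe : ((D : ℝ≥0∞)) = (sf : ℝ≥0∞) ^ (1 - l) * (sg : ℝ≥0∞) ^ l := by
    rw [hD, ENNReal.coe_mul, ENNReal.coe_rpow_of_nonneg _ h1l.le,
      ENNReal.coe_rpow_of_nonneg _ hl0.le]
  rw [ENNReal.div_rpow_of_nonneg _ _ h1l.le, ENNReal.div_rpow_of_nonneg _ _ hl0.le] at key2
  have hD0' : (D : ℝ≥0∞) ≠ 0 := by exact_mod_cast hD0.ne'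
  have hDt : (D : ℝ≥0∞) ≠ ⊤ := ENNReal.coe_ne_top
  have hA0 : ((sf : ℝ≥0∞)) ^ (1 - l) ≠ 0 := by
    have : (0:ℝ≥0∞) < (sf : ℝ≥0∞) ^ (1 - l) :=
      ENNReal.rpow_pos (by exact_mod_cast hsf0) ENNReal.coe_ne_top
    exact this.ne'
  have hAt : ((sf : ℝ≥0∞)) ^ (1 - l) ≠ ⊤ :=
    ENNReal.rpow_ne_top_of_nonneg h1l.le ENNReal.coe_ne_top
  have expand : (∫⁻ x, (f x : ℝ≥0∞)) ^ (1 - l) / (sf : ℝ≥0∞) ^ (1 - l)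
      * ((∫⁻ x, (g x : ℝ≥0∞)) ^ l / (sg : ℝ≥0∞) ^ l)
      = ((∫⁻ x, (f x : ℝ≥0∞)) ^ (1 - l) * (∫⁻ x, (g x : ℝ≥0∞)) ^ l) / (D : ℝ≥0∞) := by
    rw [hDcoe, div_eq_mul_inv, div_eq_mul_inv, div_eq_mul_inv, mul_mul_mul_comm,
      ← ENNReal.mul_inv (Or.inl hA0) (Or.inl hAt)]
  rw [expand] at key2
  calc (∫⁻ x, (f x : ℝ≥0∞)) ^ (1 - l) * (∫⁻ x, (g x : ℝ≥0∞)) ^ l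
      = (∫⁻ x, (f x : ℝ≥0∞)) ^ (1 - l) * (∫⁻ x, (g x : ℝ≥0∞)) ^ l / (D:ℝ≥0∞) * (D:ℝ≥0∞) :=
        (ENNReal.div_mul_cancel hD0' hDt).symm
    _ ≤ (∫⁻ x, (h x : ℝ≥0∞)) / (D:ℝ≥0∞) * (D:ℝ≥0∞) := mul_le_mul_left key2 _
    _ = ∫⁻ x, (h x : ℝ≥0∞) := ENNReal.div_mul_cancel hD0' hDt

/-- The 1-dimensional Prékopa–Leindler inequality for `ℝ≥0∞`-valued functions. -/
lemma dim1E {l : ℝ} (hl : l ∈ Set.Ioo (0:ℝ) 1) (f g h : ℝ → ℝ≥0∞)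
    (hf : Measurable f) (hg : Measurable g) (hh : Measurable h)
    (hcond : ∀ x y : ℝ, f x ^ (1 - l) * g y ^ l ≤ h ((1 - l) * x + l * y)) :
    (∫⁻ x, f x) ^ (1 - l) * (∫⁻ x, g x) ^ l ≤ ∫⁻ x, h x := by
  obtain ⟨hl0, hl1⟩ := hl
  have h1l : 0 < 1 - l := by linarith
  set fn : ℕ → ℝ → ℝ≥0 := fun n x => (min (f x) n).toNNReal with hfn
  set gn : ℕ → ℝ → ℝ≥0 := fun n x => (min (g x) n).toNNReal with hgn
  set hn : ℕ → ℝ → ℝ≥0 := fun n x => (min (h x) n).toNNReal with hhn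
  have hfc : ∀ n x, ((fn n x : ℝ≥0∞)) = min (f x) n := fun n x =>
    ENNReal.coe_toNNReal (ne_top_of_le_ne_top (ENNReal.natCast_ne_top n) (min_le_right _ _))
  have hgc : ∀ n x, ((gn n x : ℝ≥0∞)) = min (g x) n := fun n x =>
    ENNReal.coe_toNNReal (ne_top_of_le_ne_top (ENNReal.natCast_ne_top n) (min_le_right _ _))
  have hhc : ∀ n x, ((hn n x : ℝ≥0∞)) = min (h x) n := fun n x =>
    ENNReal.coe_toNNReal (ne_top_of_le_ne_top (ENNReal.natCast_ne_top n) (min_le_right _ _))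
  have mfn : ∀ n, Measurable (fn n) := fun n => (hf.min measurable_const).ennreal_toNNReal
  have mgn : ∀ n, Measurable (gn n) := fun n => (hg.min measurable_const).ennreal_toNNReal
  have mhn : ∀ n, Measurable (hn n) := fun n => (hh.min measurable_const).ennreal_toNNReal
  have condn : ∀ (n : ℕ) (x y : ℝ),
      fn n x ^ (1 - l) * gn n y ^ l ≤ hn n ((1 - l) * x + l * y) := by
    intro n x y
    rw [← ENNReal.coe_le_coe, ENNReal.coe_mul, ENNReal.coe_rpow_of_nonneg _ h1l.le,
      ENNReal.coe_rpow_of_nonneg _ hl0.le, hfc, hgc, hhc]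
    refine le_min ?_ ?_
    · calc min (f x) n ^ (1 - l) * min (g y) n ^ l
          ≤ f x ^ (1 - l) * g y ^ l :=
            mul_le_mul' (ENNReal.rpow_le_rpow (min_le_left _ _) h1l.le)
              (ENNReal.rpow_le_rpow (min_le_left _ _) hl0.le)
        _ ≤ h ((1 - l) * x + l * y) := hcond x y
    · calc min (f x) n ^ (1 - l) * min (g y) n ^ l
          ≤ (n : ℝ≥0∞) ^ (1 - l) * (n : ℝ≥0∞) ^ l :=
            mul_le_mul' (ENNReal.rpow_le_rpow (min_le_right _ _) h1l.le)
              (ENNReal.rpow_le_rpow (min_le_right _ _) hl0.le)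
        _ = (n : ℝ≥0∞) := by
            rw [← ENNReal.rpow_add_of_nonneg _ _ h1l.le hl0.le, sub_add_cancel,
              ENNReal.rpow_one]
  have bdn : ∀ (n : ℕ) (x : ℝ), fn n x ≤ (n : ℝ≥0) := by
    intro n x
    rw [← ENNReal.coe_le_coe, hfc]
    exact le_trans (min_le_right _ _) (by simp)
  have bdn' : ∀ (n : ℕ) (x : ℝ), gn n x ≤ (n : ℝ≥0) := by
    intro n x
    rw [← ENNReal.coe_le_coe, hgc]
    exact le_trans (min_le_right _ _) (by simp)
  have step : ∀ n : ℕ,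
      (∫⁻ x, min (f x) n) ^ (1 - l) * (∫⁻ x, min (g x) n) ^ l ≤ ∫⁻ x, h x := by
    intro n
    have := dim1_bdd ⟨hl0, hl1⟩ (fn n) (gn n) (hn n) (mfn n) (mgn n) (mhn n)
      (n : ℝ≥0) (bdn n) (bdn' n) (condn n)
    simp_rw [hfc, hgc, hhc] at this
    exact le_trans this (lintegral_mono fun x => min_le_left _ _)
  set an : ℕ → ℝ≥0∞ := fun n => ∫⁻ x, min (f x) n with han
  set bn : ℕ → ℝ≥0∞ := fun n => ∫⁻ x, min (g x) n with hbn
  have amono : Monotone an := by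
    intro i j hij
    exact lintegral_mono fun x =>
      le_min (min_le_left _ _) (le_trans (min_le_right _ _) (by exact_mod_cast Nat.cast_le.mpr hij))
  have bmono : Monotone bn := by
    intro i j hij
    exact lintegral_mono fun x =>
      le_min (min_le_left _ _) (le_trans (min_le_right _ _) (by exact_mod_cast Nat.cast_le.mpr hij))
  have haf : (⨆ n, an n) = ∫⁻ x, f x := by
    rw [han]
    simp only
    rw [← lintegral_iSup (fun n => hf.min measurable_const)
      (fun i j hij => fun x => le_min (min_le_left _ _)
        (le_trans (min_le_right _ _) (by exact_mod_cast Nat.cast_le.mpr hij)))]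
    congr 1
    funext x
    exact iSup_min_nat (f x)
  have hbg : (⨆ n, bn n) = ∫⁻ x, g x := by
    rw [hbn]
    simp only
    rw [← lintegral_iSup (fun n => hg.min measurable_const)
      (fun i j hij => fun x => le_min (min_le_left _ _)
        (le_trans (min_le_right _ _) (by exact_mod_cast Nat.cast_le.mpr hij)))]
    congr 1
    funext x
    exact iSup_min_nat (g x)
  rw [← haf, ← hbg, rpow_iSup h1l, rpow_iSup hl0,
    iSup_mul_iSup_of_monotone
      (fun i j hij => ENNReal.rpow_le_rpow (amono hij) h1l.le)
      (fun i j hij => ENNReal.rpow_le_rpow (bmono hij) hl0.le)]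
  exact iSup_le fun n => step n

/-- The Prékopa–Leindler inequality for `ℝ≥0∞`-valued functions. -/
theorem PLE {n : ℕ} (l : ℝ) (hl : l ∈ Set.Ioo (0:ℝ) 1)
    (f g h : (Fin n → ℝ) → ℝ≥0∞) (hf : Measurable f) (hg : Measurable g) (hh : Measurable h)
    (hcond : ∀ x y : Fin n → ℝ, f x ^ (1 - l) * g y ^ l ≤ h ((1 - l) • x + l • y)) :
    (∫⁻ x, f x) ^ (1 - l) * (∫⁻ x, g x) ^ l ≤ ∫⁻ x, h x := by
  induction n with
  | zero =>
    have hvol : volume (Set.univ : Set (Fin 0 → ℝ)) = 1 := by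
      simp [MeasureTheory.volume_pi, Measure.pi_univ]
    rw [lintegral_unique f, lintegral_unique g, lintegral_unique h, hvol, mul_one, mul_one,
      mul_one]
    have hdef : ∀ a : Fin 0 → ℝ, f a ^ (1 - l) * g a ^ l ≤ h a := fun a => by
      have hc := hcond a a
      rwa [Subsingleton.elim ((1 - l) • a + l • a) a] at hc
    exact hdef _
  | succ n ih =>
    set e := MeasurableEquiv.piFinSuccAbove (fun _ : Fin (n + 1) => ℝ) 0 with he_def
    have hes : ∀ (t : ℝ) (z : Fin n → ℝ), e.symm (t, z) = Fin.cons t z := by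
      intro t z
      rw [he_def]
      simp [MeasurableEquiv.piFinSuccAbove_symm_apply, Fin.insertNthEquiv,
        Fin.insertNth_zero']
    have hmp : MeasurePreserving (⇑e.symm) volume volume :=
      (volume_preserving_piFinSuccAbove (fun _ : Fin (n + 1) => ℝ) 0).symm e
    have hcons_meas : Measurable fun p : ℝ × (Fin n → ℝ) => (Fin.cons p.1 p.2 : Fin (n+1) → ℝ) := by
      rw [measurable_pi_iff]
      intro j
      refine Fin.cases ?_ (fun i => ?_) j
      · simpa using measurable_fst
      · simpa [Function.comp_def] using (measurable_pi_apply i).comp measurable_snd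
    have key : ∀ (t s : ℝ) (x y : Fin n → ℝ),
        (1 - l) • (Fin.cons t x : Fin (n+1) → ℝ) + l • (Fin.cons s y : Fin (n+1) → ℝ)
          = Fin.cons ((1 - l) * t + l * s) ((1 - l) • x + l • y) := by
      intro t s x y
      funext j
      refine Fin.cases ?_ (fun i => ?_) j <;>
        simp [Fin.cons_zero, Fin.cons_succ]
    set F : ℝ → ℝ≥0∞ := fun t => ∫⁻ z, f (Fin.cons t z) with hF
    set G : ℝ → ℝ≥0∞ := fun t => ∫⁻ z, g (Fin.cons t z) with hG
    set H : ℝ → ℝ≥0∞ := fun t => ∫⁻ z, h (Fin.cons t z) with hH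
    have mF : Measurable F := Measurable.lintegral_prod_right (hf.comp hcons_meas)
    have mG : Measurable G := Measurable.lintegral_prod_right (hg.comp hcons_meas)
    have mH : Measurable H := Measurable.lintegral_prod_right (hh.comp hcons_meas)
    have cond1 : ∀ t s : ℝ, F t ^ (1 - l) * G s ^ l ≤ H ((1 - l) * t + l * s) := by
      intro t s
      refine ih (fun z => f (Fin.cons t z)) (fun z => g (Fin.cons s z))
        (fun z => h (Fin.cons ((1 - l) * t + l * s) z))
        (hf.comp (measurable_pi_iff.mpr fun j => ?_))
        (hg.comp (measurable_pi_iff.mpr fun j => ?_))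
        (hh.comp (measurable_pi_iff.mpr fun j => ?_)) (fun x y => ?_)
      · refine Fin.cases ?_ (fun i => ?_) j
        · simp
        · simpa using measurable_pi_apply i
      · refine Fin.cases ?_ (fun i => ?_) j
        · simp
        · simpa using measurable_pi_apply i
      · refine Fin.cases ?_ (fun i => ?_) j
        · simp
        · simpa using measurable_pi_apply i
      · have := hcond (Fin.cons t x) (Fin.cons s y)
        rwa [key] at this
    have dle := dim1E ⟨hl.1, hl.2⟩ F G H mF mG mH cond1
    have convf : (∫⁻ x, f x) = ∫⁻ t, F t := by
      calc ∫⁻ x, f x = ∫⁻ p : ℝ × (Fin n → ℝ), f (e.symm p) :=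
            (hmp.lintegral_comp_emb e.symm.measurableEmbedding f).symm
        _ = ∫⁻ t, ∫⁻ z, f (e.symm (t, z)) := by
            rw [MeasureTheory.Measure.volume_eq_prod _ _,
              lintegral_prod (fun p => f (e.symm p)) ((hf.comp e.symm.measurable).aemeasurable)]
        _ = ∫⁻ t, F t := by simp_rw [hes]; rfl
    have convg : (∫⁻ x, g x) = ∫⁻ t, G t := by
      calc ∫⁻ x, g x = ∫⁻ p : ℝ × (Fin n → ℝ), g (e.symm p) :=
            (hmp.lintegral_comp_emb e.symm.measurableEmbedding g).symm
        _ = ∫⁻ t, ∫⁻ z, g (e.symm (t, z)) := by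
            rw [MeasureTheory.Measure.volume_eq_prod _ _,
              lintegral_prod (fun p => g (e.symm p)) ((hg.comp e.symm.measurable).aemeasurable)]
        _ = ∫⁻ t, G t := by simp_rw [hes]; rfl
    have convh : (∫⁻ x, h x) = ∫⁻ t, H t := by
      calc ∫⁻ x, h x = ∫⁻ p : ℝ × (Fin n → ℝ), h (e.symm p) :=
            (hmp.lintegral_comp_emb e.symm.measurableEmbedding h).symm
        _ = ∫⁻ t, ∫⁻ z, h (e.symm (t, z)) := by
            rw [MeasureTheory.Measure.volume_eq_prod _ _,
              lintegral_prod (fun p => h (e.symm p)) ((hh.comp e.symm.measurable).aemeasurable)]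
        _ = ∫⁻ t, H t := by simp_rw [hes]; rfl
    rw [convf, convg, convh]
    exact dle

end PrekopaLeindlerAux

/-- The Prékopa–Leindler inequality. -/
theorem prekopa_leindler {n : ℕ} (l : ℝ) (hl : l ∈ Set.Ioo (0:ℝ) 1)
    (f g h : (Fin n → ℝ) → ℝ≥0) (hf : Measurable f) (hg : Measurable g) (hh : Measurable h)
    (hcond : ∀ x y : Fin n → ℝ, f x ^ (1 - l) * g y ^ l ≤ h ((1 - l) • x + l • y)) :
    (∫⁻ x, (f x : ℝ≥0∞)) ^ (1 - l) * (∫⁻ x, (g x : ℝ≥0∞)) ^ l ≤ ∫⁻ x, (h x : ℝ≥0∞) := by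
  refine PrekopaLeindlerAux.PLE l hl (fun x => (f x : ℝ≥0∞)) (fun x => (g x : ℝ≥0∞))
    (fun x => (h x : ℝ≥0∞)) hf.coe_nnreal_ennreal hg.coe_nnreal_ennreal
    hh.coe_nnreal_ennreal (fun x y => ?_)
  calc ((f x : ℝ≥0∞)) ^ (1 - l) * ((g y : ℝ≥0∞)) ^ l
      = ((f x ^ (1 - l) * g y ^ l : ℝ≥0) : ℝ≥0∞) := by
        rw [ENNReal.coe_mul, ENNReal.coe_rpow_of_nonneg _ (by linarith [hl.2] : (0:ℝ) ≤ 1 - l),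
          ENNReal.coe_rpow_of_nonneg _ hl.1.le]
    _ ≤ ((h ((1 - l) • x + l • y) : ℝ≥0∞)) := ENNReal.coe_le_coe.mpr (hcond x y)
end

section
/- Let τ ∈ (0, 1/2], λ ∈ [τ, 1-τ], and a, b > 0. Then (1-λ)a + λb - a^(1-λ) b^λ ≥ τ (√a - √b)². -/
/-!
Split the weights as `1 - λ = (1 - λ - τ) + τ` and `λ = (λ - τ) + τ`, and merge the two parts of
weight `τ` into the single point `√(ab)` of weight `2τ`. The three-point weighted AM-GM inequality
for `a, b, √(ab)` with weights `1 - λ - τ, λ - τ, 2τ` has the same geometric mean `a^(1-λ) b^λ`,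
and its arithmetic mean falls short of `(1 - λ)a + λb` by exactly `τ(a + b) - 2τ√(ab) = τ(√a - √b)²`.
-/

open Real

lemma sqrt_mul_rpow_two_mul {a b : ℝ} (ha : 0 ≤ a) (hb : 0 ≤ b) (t : ℝ) :
    √(a * b) ^ (2 * t) = a ^ t * b ^ t := by
  rw [sqrt_eq_rpow, ← rpow_mul (mul_nonneg ha hb), show 1 / 2 * (2 * t) = t by ring,
    mul_rpow ha hb]

lemma rpow_sub_mul_rpow_sub_mul_rpow_mul_rpow {a b : ℝ} (ha : 0 < a) (hb : 0 < b) (p q t : ℝ) :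
    a ^ (p - t) * b ^ (q - t) * (a ^ t * b ^ t) = a ^ p * b ^ q := by
  calc a ^ (p - t) * b ^ (q - t) * (a ^ t * b ^ t)
      = a ^ (p - t + t) * b ^ (q - t + t) := by rw [rpow_add ha, rpow_add hb]; ring
    _ = a ^ p * b ^ q := by simp only [sub_add_cancel]

lemma rpow_one_sub_mul_rpow_le_add_sqrt_mul {t l a b : ℝ} (ht : 0 ≤ t) (htl : t ≤ l)
    (hlt : l ≤ 1 - t) (ha : 0 < a) (hb : 0 < b) :
    a ^ (1 - l) * b ^ l ≤ (1 - l - t) * a + (l - t) * b + 2 * t * √(a * b) := by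
  have amgm := geom_mean_le_arith_mean3_weighted (w₁ := 1 - l - t) (w₂ := l - t) (w₃ := 2 * t)
    (by linarith) (by linarith) (by positivity) ha.le hb.le (sqrt_nonneg (a * b)) (by ring)
  rwa [sqrt_mul_rpow_two_mul ha.le hb.le, rpow_sub_mul_rpow_sub_mul_rpow_mul_rpow ha hb] at amgm

/-- Stability of the weighted AM–GM inequality. -/
theorem amgm_stability (τ l a b : ℝ) (hτ : τ ∈ Set.Ioc (0:ℝ) (1/2))
    (hl : l ∈ Set.Icc τ (1 - τ)) (ha : 0 < a) (hb : 0 < b) :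
    τ * (Real.sqrt a - Real.sqrt b) ^ 2 ≤ (1 - l) * a + l * b - a ^ (1 - l) * b ^ l := by
  have amgm := rpow_one_sub_mul_rpow_le_add_sqrt_mul hτ.1.le hl.1 hl.2 ha hb
  have gap : τ * (√a - √b) ^ 2 = τ * a + τ * b - 2 * τ * √(a * b) := by
    rw [sqrt_mul ha.le, sub_sq, sq_sqrt ha.le, sq_sqrt hb.le]
    ring
  rw [gap]
  linarith
end

section
/- Let φ : ℝ → ℝ≥0 be log-concave with 0 < ∫_ℝ φ < ∞. Then for every s with 0 < s < ‖φ‖_∞, the superlevel set {φ > ‖φ‖_∞ - s} has Lebesgue measure at least (‖φ‖₁ / ‖φ‖_∞²) · s. -/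
open MeasureTheory Set Filter

/-- A function `φ : ℝ → ℝ≥0` is log-concave. -/
def IsLogConcave (φ : ℝ → ℝ) : Prop :=
  ∀ x y t : ℝ, t ∈ Set.Ioo (0:ℝ) 1 → φ x ^ (1 - t) * φ y ^ t ≤ φ ((1 - t) * x + t * y)

private lemma expInt_Ioi {c : ℝ} (hc : 0 < c) (A : ℝ) :
    IntegrableOn (fun y => Real.exp (-(c * y))) (Ioi A) ∧
      ∫ y in Ioi A, Real.exp (-(c * y)) = Real.exp (-(c * A)) / c := by
  constructor
  · simpa [neg_mul] using exp_neg_integrableOn_Ioi A hc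
  · have h := MeasureTheory.integral_comp_mul_left_Ioi (fun u => Real.exp (-u)) A hc
    simp only [smul_eq_mul] at h
    rw [h, integral_exp_neg_Ioi]
    field_simp

private lemma expInt_Iic {c : ℝ} (hc : 0 < c) (A : ℝ) :
    IntegrableOn (fun y => Real.exp (c * y)) (Iic A) ∧
      ∫ y in Iic A, Real.exp (c * y) = Real.exp (c * A) / c := by
  have h1 : IntegrableOn (fun x => Real.exp (-(c * x))) (Ioi (-A)) := (expInt_Ioi hc (-A)).1
  constructor
  · have h2 := (MeasurePreserving.integrableOn_comp_preimage
      (Measure.measurePreserving_neg (volume : Measure ℝ))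
      (Homeomorph.neg ℝ).measurableEmbedding).2 h1
    have h3 : IntegrableOn (fun y : ℝ => Real.exp (c * y)) (Iio A) := by
      have : (Neg.neg ⁻¹' (Ioi (-A)) : Set ℝ) = Iio A := by
        ext x; simp [lt_neg]
      rw [this] at h2
      refine h2.congr_fun (fun x _ => ?_) measurableSet_Iio
      simp [Function.comp, mul_comm]
    exact h3.congr_set_ae Iio_ae_eq_Iic.symm
  · have h := integral_comp_neg_Iic A (fun u => Real.exp (-(c * u)))
    have heq : ∀ x : ℝ, Real.exp (-(c * -x)) = Real.exp (c * x) := by intro x; ring_nf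
    calc ∫ y in Iic A, Real.exp (c * y) = ∫ y in Iic A, Real.exp (-(c * -y)) := by
          refine setIntegral_congr_fun measurableSet_Iic (fun x _ => ?_)
          rw [heq]
      _ = ∫ x in Ioi (-A), Real.exp (-(c * x)) := h
      _ = Real.exp (-(c * -A)) / c := (expInt_Ioi hc (-A)).2
      _ = Real.exp (c * A) / c := by rw [heq]

set_option maxHeartbeats 1000000 in
theorem superlevel_measure_lower_bound (φ : ℝ → ℝ) (hφ0 : ∀ x, 0 ≤ φ x)
    (hφ : IsLogConcave φ) (hmeas : Measurable φ) (hint : Integrable φ)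
    (hpos : 0 < ∫ x, φ x) (s : ℝ) (hs : 0 < s) (hsM : s < sSup (Set.range φ)) :
    ENNReal.ofReal ((∫ x, φ x) / (sSup (Set.range φ)) ^ 2 * s)
      ≤ volume {x | sSup (Set.range φ) - s < φ x} := by
  set M := sSup (Set.range φ) with hMdef
  have hM0 : 0 < M := hs.trans hsM
  have hbdd : BddAbove (Set.range φ) := by
    by_contra h
    rw [Real.sSup_of_not_bddAbove h] at hMdef
    exact hM0.ne' hMdef
  have hle : ∀ x, φ x ≤ M := fun x => le_csSup hbdd ⟨x, rfl⟩
  have hMs : 0 < M - s := sub_pos.2 hsM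
  set J := {x | M - s < φ x} with hJdef
  have hJconv : ∀ ⦃x⦄, x ∈ J → ∀ ⦃y⦄, y ∈ J → ∀ ⦃z⦄, x ≤ z → z ≤ y → z ∈ J := by
    intro x hx y hy z hxz hzy
    rcases eq_or_lt_of_le hxz with rfl | hxz
    · exact hx
    rcases eq_or_lt_of_le hzy with rfl | hzy
    · exact hy
    have hxy : x < y := hxz.trans hzy
    set t := (z - x) / (y - x) with htdef
    have ht : t ∈ Ioo (0:ℝ) 1 :=
      ⟨div_pos (by linarith) (by linarith), (div_lt_one (by linarith)).2 (by linarith)⟩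
    have hne : y - x ≠ 0 := sub_ne_zero.2 hxy.ne'
    have hz : (1 - t) * x + t * y = z := by
      rw [htdef]
      field_simp
      ring
    have h1 := hφ x y t ht
    rw [hz] at h1
    have hA : (M - s) ^ (1 - t) < φ x ^ (1 - t) :=
      Real.rpow_lt_rpow hMs.le hx (by linarith [ht.2])
    have hB : (M - s) ^ t < φ y ^ t := Real.rpow_lt_rpow hMs.le hy ht.1
    have h2 : (M - s) ^ (1 - t) * (M - s) ^ t < φ x ^ (1 - t) * φ y ^ t :=
      mul_lt_mul'' hA hB (Real.rpow_nonneg hMs.le _) (Real.rpow_nonneg hMs.le _)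
    have h3 : (M - s) ^ (1 - t) * (M - s) ^ t = M - s := by
      rw [← Real.rpow_add hMs]
      simp
    show M - s < φ z
    rw [← h3]
    exact h2.trans_le h1
  rcases eq_top_or_lt_top (volume J) with htop | hfin
  · rw [htop]; exact le_top
  set L := (volume J).toReal with hLdef
  have hL0 : 0 ≤ L := ENNReal.toReal_nonneg
  -- J is nonempty
  obtain ⟨w, hwJ⟩ : J.Nonempty := by
    obtain ⟨_, ⟨w, rfl⟩, hw⟩ := exists_lt_of_lt_csSup (Set.range_nonempty φ)
      (show M - s < M by linarith)
    exact ⟨w, hw⟩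
  -- J is bounded
  have hJbddA : BddAbove J := by
    by_contra h
    have hsub : Ioi w ⊆ J := by
      intro y hy
      obtain ⟨u, huJ, hu⟩ := not_bddAbove_iff.1 h y
      exact hJconv hwJ huJ (le_of_lt hy) hu.le
    have hm : volume (Ioi w) ≤ volume J := measure_mono hsub
    rw [Real.volume_Ioi] at hm
    exact absurd (top_le_iff.1 hm) hfin.ne
  have hJbddB : BddBelow J := by
    by_contra h
    have hsub : Iio w ⊆ J := by
      intro y hy
      obtain ⟨u, huJ, hu⟩ := not_bddBelow_iff.1 h y
      exact hJconv huJ hwJ hu.le (le_of_lt hy)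
    have hm : volume (Iio w) ≤ volume J := measure_mono hsub
    rw [Real.volume_Iio] at hm
    exact absurd (top_le_iff.1 hm) hfin.ne
  set a := sInf J with hadef
  set b := sSup J with hbdef
  have hab : Ioo a b ⊆ J := by
    intro z hz
    obtain ⟨u, huJ, hu⟩ := exists_lt_of_csInf_lt ⟨w, hwJ⟩ hz.1
    obtain ⟨v, hvJ, hv⟩ := exists_lt_of_lt_csSup ⟨w, hwJ⟩ hz.2
    exact hJconv huJ hvJ hu.le hv.le
  have hba : b - a ≤ L := by
    have h1 : volume (Ioo a b) ≤ volume J := measure_mono hab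
    rw [Real.volume_Ioo] at h1
    exact (ENNReal.ofReal_le_iff_le_toReal hfin.ne).1 h1
  have hlogpos : 0 < Real.log (M / (M - s)) :=
    Real.log_pos ((one_lt_div hMs).2 (by linarith))
  -- The key bound for each ε
  have key : ∀ ε ∈ Ioo (0:ℝ) s,
      (∫ x, φ x) ≤ (M + (M - s) / Real.log ((M - ε) / (M - s))) * L := by
    intro ε hε
    set p := M - ε with hpdef
    set q := M - s with hqdef
    have hq0 : 0 < q := hMs
    have hqp : q < p := by simp only [hpdef, hqdef]; linarith [hε.2]
    have hp0 : 0 < p := hq0.trans hqp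
    have hlogr : 0 < Real.log (p / q) := Real.log_pos ((one_lt_div hq0).2 hqp)
    obtain ⟨x₀, hx₀⟩ : ∃ x₀, p < φ x₀ := by
      obtain ⟨_, ⟨x₀, rfl⟩, h⟩ := exists_lt_of_lt_csSup (Set.range_nonempty φ)
        (show p < M by simp only [hpdef]; linarith [hε.1])
      exact ⟨x₀, h⟩
    have hx₀J : x₀ ∈ J := by
      show M - s < φ x₀
      have : q < p := hqp
      linarith
    have hax : a ≤ x₀ := csInf_le hJbddB hx₀J
    have hxb : x₀ ≤ b := le_csSup hJbddA hx₀J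
    -- the decay lemma
    have decay : ∀ t ∈ Ioo (0:ℝ) 1, ∀ y : ℝ, φ ((1 - t) * x₀ + t * y) ≤ q →
        φ y ≤ p * (q / p) ^ (1 / t) := by
      intro t ht y hyz
      have h1 : φ x₀ ^ (1 - t) * φ y ^ t ≤ q := (hφ x₀ y t ht).trans hyz
      have hp1 : p ^ (1 - t) ≤ φ x₀ ^ (1 - t) :=
        Real.rpow_le_rpow hp0.le hx₀.le (by linarith [ht.2])
      have h2 : p ^ (1 - t) * φ y ^ t ≤ q :=
        le_trans (mul_le_mul_of_nonneg_right hp1 (Real.rpow_nonneg (hφ0 y) t)) h1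
      have hpt : 0 < p ^ (1 - t) := Real.rpow_pos_of_pos hp0 _
      have h3 : φ y ^ t ≤ q / p ^ (1 - t) := by
        rw [le_div_iff₀ hpt, mul_comm]
        exact h2
      have h4 : φ y = (φ y ^ t) ^ (1 / t) := by
        rw [← Real.rpow_mul (hφ0 y), mul_one_div, div_self ht.1.ne', Real.rpow_one]
      rw [h4]
      calc (φ y ^ t) ^ (1 / t) ≤ (q / p ^ (1 - t)) ^ (1 / t) :=
            Real.rpow_le_rpow (Real.rpow_nonneg (hφ0 y) t) h3 (one_div_pos.2 ht.1).le
        _ = p * (q / p) ^ (1 / t) := by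
            rw [Real.div_rpow hq0.le hpt.le, ← Real.rpow_mul hp0.le,
              Real.div_rpow hq0.le hp0.le]
            have he : (1 - t) * (1 / t) = 1 / t - 1 := by
              rw [mul_one_div, sub_div, div_self ht.1.ne']
            rw [he, Real.rpow_sub hp0, Real.rpow_one]
            have hpe : 0 < p ^ (1 / t) := Real.rpow_pos_of_pos hp0 _
            field_simp
    -- The bound for each δ > 0
    have bound : ∀ δ : ℝ, 0 < δ →
        (∫ x, φ x) ≤ (M + q / Real.log (p / q)) * (L + 2 * δ) := by
      intro δ hδ
      set β := max (b - x₀) δ with hβdef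
      set β' := max (x₀ - a) δ with hβ'def
      have hβ0 : 0 < β := lt_max_of_lt_right hδ
      have hβ'0 : 0 < β' := lt_max_of_lt_right hδ
      have hβb : b - x₀ ≤ β := le_max_left _ _
      have hβ'a : x₀ - a ≤ β' := le_max_left _ _
      have hsum : β + β' ≤ L + 2 * δ := by
        have h1 : β ≤ (b - x₀) + δ := max_le (by linarith) (by linarith)
        have h2 : β' ≤ (x₀ - a) + δ := max_le (by linarith) (by linarith)
        linarith
      set c := Real.log (p / q) / β with hcdef
      set c' := Real.log (p / q) / β' with hc'def
      have hc0 : 0 < c := div_pos hlogr hβ0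
      have hc'0 : 0 < c' := div_pos hlogr hβ'0
      have hlogqp : Real.log (q / p) = -Real.log (p / q) := by
        rw [← Real.log_inv, inv_div]
      -- right pointwise bound
      have hright : ∀ y ∈ Ioi (x₀ + β), φ y ≤ p * Real.exp (-(c * (y - x₀))) := by
        intro y hy
        rw [mem_Ioi] at hy
        have keyz : ∀ z ∈ Ioo (x₀ + β) y, φ y ≤ p * (q / p) ^ ((y - x₀) / (z - x₀)) := by
          intro z hz
          have hz1 : x₀ + β < z := hz.1
          have hz2 : z < y := hz.2
          have hznJ : z ∉ J := by
            intro h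
            have := le_csSup hJbddA h
            have : z ≤ b := this
            linarith
          have hφz : φ z ≤ q := le_of_not_gt hznJ
          set t := (z - x₀) / (y - x₀) with htdef
          have ht : t ∈ Ioo (0:ℝ) 1 :=
            ⟨div_pos (by linarith) (by linarith), (div_lt_one (by linarith)).2 (by linarith)⟩
          have hne : y - x₀ ≠ 0 := sub_ne_zero.2 (by linarith)
          have hzeq : (1 - t) * x₀ + t * y = z := by
            rw [htdef]
            field_simp
            ring
          have h5 := decay t ht y (by rw [hzeq]; exact hφz)
          have hinv : 1 / t = (y - x₀) / (z - x₀) := by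
            rw [htdef, one_div_div]
          rwa [hinv] at h5
        have hcont : ContinuousAt (fun z => p * (q / p) ^ ((y - x₀) / (z - x₀))) (x₀ + β) := by
          have h1 : ContinuousAt (fun z : ℝ => (y - x₀) / (z - x₀)) (x₀ + β) := by
            apply ContinuousAt.div continuousAt_const
              (continuousAt_id.sub continuousAt_const)
            simp only [Pi.sub_apply, id]
            intro h
            rw [sub_eq_zero] at h
            nlinarith [hβ0]
          exact continuousAt_const.mul
            ((Real.continuousAt_const_rpow (div_pos hq0 hp0).ne').comp h1)
        have hval : (y - x₀) / (x₀ + β - x₀) = (y - x₀) / β := by ring_nf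
        have lim : Tendsto (fun z => p * (q / p) ^ ((y - x₀) / (z - x₀)))
            (nhdsWithin (x₀ + β) (Ioi (x₀ + β)))
            (nhds (p * (q / p) ^ ((y - x₀) / β))) := by
          have h2 : Tendsto (fun z => p * (q / p) ^ ((y - x₀) / (z - x₀)))
              (nhdsWithin (x₀ + β) (Ioi (x₀ + β)))
              (nhds (p * (q / p) ^ ((y - x₀) / (x₀ + β - x₀)))) :=
            hcont.tendsto.mono_left nhdsWithin_le_nhds
          rwa [hval] at h2
        have hle' : φ y ≤ p * (q / p) ^ ((y - x₀) / β) :=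
          ge_of_tendsto lim (mem_of_superset (Ioo_mem_nhdsGT hy) keyz)
        have hexp : (q / p : ℝ) ^ ((y - x₀) / β) = Real.exp (-(c * (y - x₀))) := by
          rw [Real.rpow_def_of_pos (div_pos hq0 hp0), hlogqp, hcdef]
          congr 1
          field_simp
        rwa [hexp] at hle'
      -- left pointwise bound
      have hleft : ∀ y ∈ Iic (x₀ - β'), y < x₀ - β' →
          φ y ≤ p * Real.exp (-(c' * (x₀ - y))) := by
        intro y _ hy
        have keyz : ∀ z ∈ Ioo y (x₀ - β'), φ y ≤ p * (q / p) ^ ((x₀ - y) / (x₀ - z)) := by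
          intro z hz
          have hz1 : y < z := hz.1
          have hz2 : z < x₀ - β' := hz.2
          have hznJ : z ∉ J := by
            intro h
            have : a ≤ z := csInf_le hJbddB h
            linarith
          have hφz : φ z ≤ q := le_of_not_gt hznJ
          set t := (x₀ - z) / (x₀ - y) with htdef
          have hzx : z < x₀ := by linarith
          have hyx : y < x₀ := by linarith
          have ht : t ∈ Ioo (0:ℝ) 1 :=
            ⟨div_pos (by linarith) (by linarith), (div_lt_one (by linarith)).2 (by linarith)⟩
          have hne : x₀ - y ≠ 0 := sub_ne_zero.2 (by linarith)
          have hzeq : (1 - t) * x₀ + t * y = z := by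
            rw [htdef]
            field_simp
            ring
          have h5 := decay t ht y (by rw [hzeq]; exact hφz)
          have hinv : 1 / t = (x₀ - y) / (x₀ - z) := by
            rw [htdef, one_div_div]
          rwa [hinv] at h5
        have hcont : ContinuousAt (fun z => p * (q / p) ^ ((x₀ - y) / (x₀ - z))) (x₀ - β') := by
          have h1 : ContinuousAt (fun z : ℝ => (x₀ - y) / (x₀ - z)) (x₀ - β') := by
            apply ContinuousAt.div continuousAt_const
              (continuousAt_const.sub continuousAt_id)
            simp only [Pi.sub_apply, id]
            intro h
            rw [sub_eq_zero] at h
            nlinarith [hβ'0]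
          exact continuousAt_const.mul
            ((Real.continuousAt_const_rpow (div_pos hq0 hp0).ne').comp h1)
        have hval : (x₀ - y) / (x₀ - (x₀ - β')) = (x₀ - y) / β' := by ring_nf
        have lim : Tendsto (fun z => p * (q / p) ^ ((x₀ - y) / (x₀ - z)))
            (nhdsWithin (x₀ - β') (Iio (x₀ - β')))
            (nhds (p * (q / p) ^ ((x₀ - y) / β'))) := by
          have h2 : Tendsto (fun z => p * (q / p) ^ ((x₀ - y) / (x₀ - z)))
              (nhdsWithin (x₀ - β') (Iio (x₀ - β')))
              (nhds (p * (q / p) ^ ((x₀ - y) / (x₀ - (x₀ - β'))))) :=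
            hcont.tendsto.mono_left nhdsWithin_le_nhds
          rwa [hval] at h2
        have hle' : φ y ≤ p * (q / p) ^ ((x₀ - y) / β') :=
          ge_of_tendsto lim (mem_of_superset (Ioo_mem_nhdsLT hy) keyz)
        have hexp : (q / p : ℝ) ^ ((x₀ - y) / β') = Real.exp (-(c' * (x₀ - y))) := by
          rw [Real.rpow_def_of_pos (div_pos hq0 hp0), hlogqp, hc'def]
          congr 1
          field_simp
        rwa [hexp] at hle'
      -- integral bounds
      have gright_eq : (fun y : ℝ => p * Real.exp (-(c * (y - x₀)))) =
          fun y : ℝ => (p * Real.exp (c * x₀)) * Real.exp (-(c * y)) := by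
        funext y
        rw [mul_assoc, ← Real.exp_add]
        ring_nf
      have gright_int : IntegrableOn (fun y : ℝ => p * Real.exp (-(c * (y - x₀))))
          (Ioi (x₀ + β)) := by
        rw [gright_eq]
        exact ((expInt_Ioi hc0 (x₀ + β)).1.const_mul _)
      have gleft_eq : (fun y : ℝ => p * Real.exp (-(c' * (x₀ - y)))) =
          fun y : ℝ => (p * Real.exp (-(c' * x₀))) * Real.exp (c' * y) := by
        funext y
        rw [mul_assoc, ← Real.exp_add]
        ring_nf
      have gleft_int : IntegrableOn (fun y : ℝ => p * Real.exp (-(c' * (x₀ - y))))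
          (Iic (x₀ - β')) := by
        rw [gleft_eq]
        exact ((expInt_Iic hc'0 (x₀ - β')).1.const_mul _)
      have hcβ : c * β = Real.log (p / q) := by
        rw [hcdef]; field_simp
      have hc'β : c' * β' = Real.log (p / q) := by
        rw [hc'def]; field_simp
      have hexplog : Real.exp (-Real.log (p / q)) = q / p := by
        rw [Real.exp_neg, Real.exp_log (div_pos hp0 hq0), inv_div]
      -- right integral
      have hIoi : (∫ y in Ioi x₀, φ y) ≤ β * (M + q / Real.log (p / q)) := by
        have hsplit : (∫ y in Ioi x₀, φ y) =
            (∫ y in Ioc x₀ (x₀ + β), φ y) + ∫ y in Ioi (x₀ + β), φ y := by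
          rw [← setIntegral_union (Ioc_disjoint_Ioi le_rfl) measurableSet_Ioi
            hint.integrableOn hint.integrableOn,
            Ioc_union_Ioi_eq_Ioi (by linarith : x₀ ≤ x₀ + β)]
        have hb1 : (∫ y in Ioc x₀ (x₀ + β), φ y) ≤ M * β := by
          calc (∫ y in Ioc x₀ (x₀ + β), φ y) ≤ ∫ _ in Ioc x₀ (x₀ + β), M :=
                setIntegral_mono_on hint.integrableOn (integrableOn_const
                  (by rw [Real.volume_Ioc]; exact ENNReal.ofReal_ne_top))
                  measurableSet_Ioc (fun x _ => hle x)
            _ = M * β := by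
                rw [setIntegral_const, measureReal_def, Real.volume_Ioc, smul_eq_mul,
                  ENNReal.toReal_ofReal (by linarith)]
                ring_nf
        have hb2 : (∫ y in Ioi (x₀ + β), φ y) ≤ q * β / Real.log (p / q) := by
          calc (∫ y in Ioi (x₀ + β), φ y)
              ≤ ∫ y in Ioi (x₀ + β), p * Real.exp (-(c * (y - x₀))) :=
                setIntegral_mono_on hint.integrableOn gright_int measurableSet_Ioi
                  (fun y hy => hright y hy)
            _ = (p * Real.exp (c * x₀)) * (Real.exp (-(c * (x₀ + β))) / c) := by
                rw [gright_eq, integral_const_mul, (expInt_Ioi hc0 (x₀ + β)).2]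
            _ = q * β / Real.log (p / q) := by
                have e1 : Real.exp (c * x₀) * Real.exp (-(c * (x₀ + β))) =
                    Real.exp (-(c * β)) := by
                  rw [← Real.exp_add]; ring_nf
                calc p * Real.exp (c * x₀) * (Real.exp (-(c * (x₀ + β))) / c)
                    = p * (Real.exp (c * x₀) * Real.exp (-(c * (x₀ + β)))) / c := by ring
                  _ = p * Real.exp (-(c * β)) / c := by rw [e1]
                  _ = p * (q / p) / c := by rw [hcβ, hexplog]
                  _ = q / c := by
                      rw [mul_div_cancel₀ _ hp0.ne']
                  _ = q * β / Real.log (p / q) := by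
                      rw [hcdef, div_div_eq_mul_div]
        calc (∫ y in Ioi x₀, φ y) = (∫ y in Ioc x₀ (x₀ + β), φ y) +
              ∫ y in Ioi (x₀ + β), φ y := hsplit
          _ ≤ M * β + q * β / Real.log (p / q) := add_le_add hb1 hb2
          _ = β * (M + q / Real.log (p / q)) := by ring
      -- left integral
      have hIic : (∫ y in Iic x₀, φ y) ≤ β' * (M + q / Real.log (p / q)) := by
        have hsplit : (∫ y in Iic x₀, φ y) =
            (∫ y in Iic (x₀ - β'), φ y) + ∫ y in Ioc (x₀ - β') x₀, φ y := by
          rw [← setIntegral_union (Iic_disjoint_Ioc le_rfl) measurableSet_Ioc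
            hint.integrableOn hint.integrableOn,
            Iic_union_Ioc_eq_Iic (by linarith : x₀ - β' ≤ x₀)]
        have hb1 : (∫ y in Ioc (x₀ - β') x₀, φ y) ≤ M * β' := by
          calc (∫ y in Ioc (x₀ - β') x₀, φ y) ≤ ∫ _ in Ioc (x₀ - β') x₀, M :=
                setIntegral_mono_on hint.integrableOn (integrableOn_const
                  (by rw [Real.volume_Ioc]; exact ENNReal.ofReal_ne_top))
                  measurableSet_Ioc (fun x _ => hle x)
            _ = M * β' := by
                rw [setIntegral_const, measureReal_def, Real.volume_Ioc, smul_eq_mul,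
                  ENNReal.toReal_ofReal (by linarith)]
                ring_nf
        have hb2 : (∫ y in Iic (x₀ - β'), φ y) ≤ q * β' / Real.log (p / q) := by
          calc (∫ y in Iic (x₀ - β'), φ y)
              ≤ ∫ y in Iic (x₀ - β'), p * Real.exp (-(c' * (x₀ - y))) := by
                apply setIntegral_mono_ae_restrict hint.integrableOn gleft_int
                have hne : ∀ᵐ (y : ℝ), y ≠ x₀ - β' := by
                  refine ae_iff.2 ?_
                  simpa using measure_singleton (x₀ - β')
                filter_upwards [ae_restrict_mem measurableSet_Iic,
                  (ae_restrict_of_ae hne :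
                    ∀ᵐ (y : ℝ) ∂volume.restrict (Iic (x₀ - β')), y ≠ x₀ - β')]
                  with y hy hy2
                exact hleft y hy (lt_of_le_of_ne hy hy2)
            _ = (p * Real.exp (-(c' * x₀))) * (Real.exp (c' * (x₀ - β')) / c') := by
                rw [gleft_eq, integral_const_mul,
                  (expInt_Iic hc'0 (x₀ - β')).2]
            _ = q * β' / Real.log (p / q) := by
                have e1 : Real.exp (-(c' * x₀)) * Real.exp (c' * (x₀ - β')) =
                    Real.exp (-(c' * β')) := by
                  rw [← Real.exp_add]; ring_nf
                calc p * Real.exp (-(c' * x₀)) * (Real.exp (c' * (x₀ - β')) / c')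
                    = p * (Real.exp (-(c' * x₀)) * Real.exp (c' * (x₀ - β'))) / c' := by ring
                  _ = p * Real.exp (-(c' * β')) / c' := by rw [e1]
                  _ = p * (q / p) / c' := by rw [hc'β, hexplog]
                  _ = q / c' := by
                      rw [mul_div_cancel₀ _ hp0.ne']
                  _ = q * β' / Real.log (p / q) := by
                      rw [hc'def, div_div_eq_mul_div]
        calc (∫ y in Iic x₀, φ y) = (∫ y in Iic (x₀ - β'), φ y) +
              ∫ y in Ioc (x₀ - β') x₀, φ y := hsplit
          _ ≤ q * β' / Real.log (p / q) + M * β' := add_le_add hb2 hb1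
          _ = β' * (M + q / Real.log (p / q)) := by ring
      have hCpos : 0 ≤ M + q / Real.log (p / q) := by positivity
      calc (∫ x, φ x) = (∫ y in Iic x₀, φ y) + ∫ y in Ioi x₀, φ y :=
            (intervalIntegral.integral_Iic_add_Ioi hint.integrableOn hint.integrableOn).symm
        _ ≤ β' * (M + q / Real.log (p / q)) + β * (M + q / Real.log (p / q)) :=
            add_le_add hIic hIoi
        _ = (M + q / Real.log (p / q)) * (β + β') := by ring
        _ ≤ (M + q / Real.log (p / q)) * (L + 2 * δ) :=
            mul_le_mul_of_nonneg_left hsum hCpos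
    -- take δ → 0
    have hCpos : 0 < M + q / Real.log (p / q) := by positivity
    have : (∫ x, φ x) ≤ (M + q / Real.log (p / q)) * L := by
      apply le_of_forall_pos_le_add
      intro η hη
      have hδ : 0 < η / (2 * (M + q / Real.log (p / q))) := by positivity
      have := bound _ hδ
      calc (∫ x, φ x) ≤ (M + q / Real.log (p / q)) *
            (L + 2 * (η / (2 * (M + q / Real.log (p / q))))) := this
        _ = (M + q / Real.log (p / q)) * L + η := by
            field_simp
    exact this
  -- take ε → 0
  have main : (∫ x, φ x) ≤ (M + (M - s) / Real.log (M / (M - s))) * L := by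
    have hcont : ContinuousAt
        (fun ε : ℝ => (M + (M - s) / Real.log ((M - ε) / (M - s))) * L) 0 := by
      have h1 : ContinuousAt (fun ε : ℝ => Real.log ((M - ε) / (M - s))) 0 := by
        have hb : ContinuousAt (fun ε : ℝ => (M - ε) / (M - s)) 0 :=
          (continuousAt_const.sub continuousAt_id).div_const _
        exact hb.log (by simp only [sub_zero]; exact (div_pos hM0 hMs).ne')
      have h2 : Real.log ((M - 0) / (M - s)) ≠ 0 := by
        rw [sub_zero]; exact hlogpos.ne'
      exact (continuousAt_const.add (continuousAt_const.div h1 h2)).mul continuousAt_const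
    have hlim : Tendsto (fun ε : ℝ => (M + (M - s) / Real.log ((M - ε) / (M - s))) * L)
        (nhdsWithin 0 (Ioi 0)) (nhds ((M + (M - s) / Real.log (M / (M - s))) * L)) := by
      have h2 : Tendsto (fun ε : ℝ => (M + (M - s) / Real.log ((M - ε) / (M - s))) * L)
          (nhdsWithin 0 (Ioi 0))
          (nhds ((M + (M - s) / Real.log ((M - 0) / (M - s))) * L)) :=
        hcont.tendsto.mono_left nhdsWithin_le_nhds
      simpa using h2
    refine ge_of_tendsto hlim ?_
    filter_upwards [Ioo_mem_nhdsGT hs] with ε hε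
    exact key ε hε
  -- conclude
  have hloglb : s / M ≤ Real.log (M / (M - s)) := by
    have h1 : Real.log ((M - s) / M) ≤ (M - s) / M - 1 :=
      Real.log_le_sub_one_of_pos (by positivity)
    have h2 : Real.log (M / (M - s)) = -Real.log ((M - s) / M) := by
      rw [← Real.log_inv, inv_div]
    have h3 : (M - s) / M - 1 = -(s / M) := by
      field_simp
      ring
    rw [h2]
    linarith [h1.trans_eq h3]
  have hfinal : (∫ x, φ x) / M ^ 2 * s ≤ L := by
    have h1 : M + (M - s) / Real.log (M / (M - s)) ≤ M ^ 2 / s := by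
      have h2 : (M - s) / Real.log (M / (M - s)) ≤ (M - s) / (s / M) :=
        div_le_div_of_nonneg_left (by linarith) (by positivity) hloglb
      have h3 : (M - s) / (s / M) = (M - s) * M / s := by
        rw [div_div_eq_mul_div]
      have h4 : M + (M - s) * M / s = M ^ 2 / s := by
        field_simp
        ring
      linarith [h2.trans_eq h3]
    have h5 : (∫ x, φ x) ≤ M ^ 2 / s * L :=
      main.trans (mul_le_mul_of_nonneg_right h1 hL0)
    have hM2 : (0:ℝ) < M ^ 2 := by positivity
    rw [div_mul_eq_mul_div, div_le_iff₀ hM2]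
    calc (∫ x, φ x) * s ≤ (M ^ 2 / s * L) * s := by
          exact mul_le_mul_of_nonneg_right h5 hs.le
      _ = L * M ^ 2 := by
          field_simp
  have := ENNReal.ofReal_le_ofReal hfinal
  rwa [hLdef, ENNReal.ofReal_toReal hfin.ne] at this
end

section
/- Let φ : ℝ → ℝ≥0 be log-concave with 0 < ∫_ℝ φ < ∞. Then for every t with 0 < t ≤ ‖φ‖_∞/2, the superlevel set {φ > t} has Lebesgue measure at most (2‖φ‖₁/‖φ‖_∞) · |log(t/‖φ‖_∞)|. -/
open MeasureTheory

lemma seg_lower (φ : ℝ → ℝ) (hφ : IsLogConcave φ) {A t u v : ℝ}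
    (hii : IntervalIntegrable φ volume u v)
    (ht0 : 0 < t) (htA : t < A) (huv : u ≤ v) (hu : A ≤ φ u) (hv : t ≤ φ v) :
    (v - u) * ((A - t) / Real.log (A / t)) ≤ ∫ x in u..v, φ x := by
  have hA0 : 0 < A := ht0.trans htA
  set c := Real.log (A / t) with hc
  have hc0 : 0 < c := Real.log_pos (by rw [lt_div_iff₀ ht0]; linarith)
  rcases eq_or_lt_of_le huv with rfl | hlt
  · simp
  have hvu : (0:ℝ) < v - u := by linarith
  set k : ℝ := -c / (v - u) with hk
  set d : ℝ := c * u / (v - u) with hd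
  have hkne : k ≠ 0 := div_ne_zero (by linarith) (by linarith)
  have hpoint : ∀ x ∈ Set.Icc u v, A * Real.exp (k * x + d) ≤ φ x := by
    intro x hx
    set s : ℝ := (x - u) / (v - u) with hs
    have hx' : x = (1 - s) * u + s * v := by rw [hs]; field_simp; ring
    have hkd : k * x + d = -(c * s) := by rw [hk, hd, hs]; field_simp; ring
    have hs0 : 0 ≤ s := div_nonneg (by linarith [hx.1]) hvu.le
    have hs1 : s ≤ 1 := (div_le_one hvu).mpr (by linarith [hx.2])
    rw [hkd]
    have key : A * Real.exp (-(c * s)) = A ^ (1 - s) * t ^ s := by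
      rw [Real.rpow_def_of_pos hA0, Real.rpow_def_of_pos ht0, ← Real.exp_add]
      nth_rewrite 1 [← Real.exp_log hA0]
      rw [← Real.exp_add, hc, Real.log_div (by linarith) (by linarith)]
      ring_nf
    rw [key]
    rcases eq_or_lt_of_le hs0 with h0 | h0
    · have : x = u := by rw [hx', ← h0]; ring
      rw [← h0, this]
      simpa using hu
    rcases eq_or_lt_of_le hs1 with h1 | h1
    · have : x = v := by rw [hx', h1]; ring
      rw [h1, this]
      simpa using hv
    calc A ^ (1 - s) * t ^ s
        ≤ φ u ^ (1 - s) * φ v ^ s := by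
          apply mul_le_mul
          · exact Real.rpow_le_rpow hA0.le hu (by linarith)
          · exact Real.rpow_le_rpow ht0.le hv hs0
          · exact Real.rpow_nonneg ht0.le _
          · exact Real.rpow_nonneg (by linarith : (0:ℝ) ≤ φ u) _
      _ ≤ φ ((1 - s) * u + s * v) := hφ u v s ⟨h0, h1⟩
      _ = φ x := by rw [← hx']
  have hgint : IntervalIntegrable (fun x => A * Real.exp (k * x + d)) volume u v :=
    (Continuous.intervalIntegrable (by continuity) u v)
  have hmono := intervalIntegral.integral_mono_on huv hgint hii hpoint
  have hcomp : (∫ x in u..v, A * Real.exp (k * x + d)) = (v - u) * ((A - t) / c) := by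
    rw [intervalIntegral.integral_const_mul,
      intervalIntegral.integral_comp_mul_add Real.exp hkne d,
      integral_exp]
    have h1 : k * u + d = 0 := by rw [hk, hd]; field_simp; ring
    have h2 : k * v + d = -c := by rw [hk, hd]; field_simp; ring
    rw [h1, h2, Real.exp_zero, Real.exp_neg, Real.exp_log (div_pos hA0 ht0), smul_eq_mul, hk]
    field_simp
    ring
  calc (v - u) * ((A - t) / c) = ∫ x in u..v, A * Real.exp (k * x + d) := hcomp.symm
    _ ≤ ∫ x in u..v, φ x := hmono

lemma seg_lower' (φ : ℝ → ℝ) (hφ : IsLogConcave φ) {A t u v : ℝ}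
    (hii : IntervalIntegrable φ volume u v)
    (ht0 : 0 < t) (htA : t < A) (huv : u ≤ v) (hu : t ≤ φ u) (hv : A ≤ φ v) :
    (v - u) * ((A - t) / Real.log (A / t)) ≤ ∫ x in u..v, φ x := by
  have hψ : IsLogConcave (fun x => φ (-x)) := by
    intro x y s hs
    have h := hφ (-x) (-y) s hs
    rw [show (1 - s) * -x + s * -y = -((1 - s) * x + s * y) from by ring] at h
    exact h
  have hii' : IntervalIntegrable (fun x => φ (-x)) volume (-v) (-u) :=
    (IntervalIntegrable.iff_comp_neg (by simp)).mp hii.symm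
  have h := seg_lower (fun x => φ (-x)) hψ hii' ht0 htA (by linarith)
    (by simpa using hv) (by simpa using hu)
  rw [intervalIntegral.integral_comp_neg] at h
  simpa [show -u - -v = v - u by ring] using h

theorem superlevel_measure_upper_bound (φ : ℝ → ℝ) (hφ0 : ∀ x, 0 ≤ φ x)
    (hφ : IsLogConcave φ) (hmeas : Measurable φ) (hint : Integrable φ)
    (hpos : 0 < ∫ x, φ x) (t : ℝ) (ht : 0 < t) (htM : t ≤ sSup (Set.range φ) / 2) :
    volume {x | t < φ x}
      ≤ ENNReal.ofReal (2 * (∫ x, φ x) / sSup (Set.range φ)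
          * |Real.log (t / sSup (Set.range φ))|) := by
  by_cases hbdd : BddAbove (Set.range φ)
  swap
  · rw [Real.sSup_of_not_bddAbove hbdd] at htM; linarith
  set M := sSup (Set.range φ) with hM
  set T := ∫ x, φ x with hT
  have hMt : t < M := by linarith
  have hM0 : 0 < M := ht.trans hMt
  have hu0 : 0 < Real.log (M / t) := Real.log_pos (by rw [lt_div_iff₀ ht]; linarith)
  have habs : |Real.log (t / M)| = Real.log (M / t) := by
    rw [show t / M = (M / t)⁻¹ by rw [inv_div], Real.log_inv, abs_neg, abs_of_pos hu0]
  rw [habs]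
  set C := 2 * T / M * Real.log (M / t) with hC
  -- integral over an interval is at most T
  have hintle : ∀ u v : ℝ, u ≤ v → (∫ x in u..v, φ x) ≤ T := by
    intro u v huv
    rw [intervalIntegral.integral_of_le huv]
    exact setIntegral_le_integral hint (Filter.Eventually.of_forall hφ0)
  -- key distance bound
  have key : ∀ a ∈ {x | t < φ x}, ∀ b ∈ {x | t < φ x}, a ≤ b → b - a ≤ C := by
    intro a ha b hb hab
    have hba : 0 ≤ b - a := by linarith
    have main : ∀ A ∈ Set.Ioo t M, (b - a) * ((A - t) / Real.log (A / t)) ≤ T := by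
      intro A hA
      obtain ⟨_, ⟨x₀, rfl⟩, hx₀⟩ := exists_lt_of_lt_csSup (Set.range_nonempty φ) hA.2
      have hAt : t < A := hA.1
      have hK0 : 0 ≤ (A - t) / Real.log (A / t) :=
        div_nonneg (by linarith) (Real.log_pos (by rw [lt_div_iff₀ ht]; linarith)).le
      rcases le_or_gt x₀ a with hxa | hxa
      · have h := seg_lower φ hφ (hint.intervalIntegrable) ht hAt (hxa.trans hab)
          hx₀.le (le_of_lt hb)
        calc (b - a) * ((A - t) / Real.log (A / t))
            ≤ (b - x₀) * ((A - t) / Real.log (A / t)) := by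
              apply mul_le_mul_of_nonneg_right (by linarith) hK0
          _ ≤ ∫ x in x₀..b, φ x := h
          _ ≤ T := hintle _ _ (by linarith)
      rcases le_or_gt b x₀ with hbx | hbx
      · have h := seg_lower' φ hφ (hint.intervalIntegrable) ht hAt (hab.trans hbx)
          (le_of_lt ha) hx₀.le
        calc (b - a) * ((A - t) / Real.log (A / t))
            ≤ (x₀ - a) * ((A - t) / Real.log (A / t)) := by
              apply mul_le_mul_of_nonneg_right (by linarith) hK0
          _ ≤ ∫ x in a..x₀, φ x := h
          _ ≤ T := hintle _ _ (by linarith)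
      · have h1 := seg_lower' φ hφ (hint.intervalIntegrable) ht hAt hxa.le
          (le_of_lt ha) hx₀.le
        have h2 := seg_lower φ hφ (hint.intervalIntegrable) ht hAt hbx.le
          hx₀.le (le_of_lt hb)
        have hsum : (∫ x in a..x₀, φ x) + (∫ x in x₀..b, φ x) = ∫ x in a..b, φ x :=
          intervalIntegral.integral_add_adjacent_intervals
            (hint.intervalIntegrable) (hint.intervalIntegrable)
        have : (b - a) * ((A - t) / Real.log (A / t)) ≤ ∫ x in a..b, φ x := by
          rw [← hsum]
          have : (b - a) * ((A - t) / Real.log (A / t))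
              = (x₀ - a) * ((A - t) / Real.log (A / t))
                + (b - x₀) * ((A - t) / Real.log (A / t)) := by ring
          rw [this]
          exact add_le_add h1 h2
        exact this.trans (hintle _ _ hab)
    -- take the limit A → M⁻
    have hcont : ContinuousAt (fun A : ℝ => (b - a) * ((A - t) / Real.log (A / t))) M := by
      apply ContinuousAt.mul continuousAt_const
      apply ContinuousAt.div (by fun_prop)
      · exact (Real.continuousAt_log (by positivity)).comp
          (continuousAt_id.div continuousAt_const (by positivity))
      · exact ne_of_gt hu0
    have hlim : (b - a) * ((M - t) / Real.log (M / t)) ≤ T := by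
      refine le_of_tendsto (hcont.continuousWithinAt : Filter.Tendsto _ (nhdsWithin M (Set.Iio M)) _) ?_
      filter_upwards [Ioo_mem_nhdsLT_of_mem (Set.mem_Ioc.mpr ⟨hMt, le_refl M⟩)] with A hA
      exact main A hA
    -- conclude
    have h2 : (b - a) * (M - t) ≤ T * Real.log (M / t) := by
      rw [← mul_div_assoc] at hlim
      exact (div_le_iff₀ hu0).mp hlim
    rw [hC]
    rw [div_mul_eq_mul_div, le_div_iff₀ hM0]
    nlinarith [h2, hba, htM]
  calc volume {x | t < φ x} ≤ EMetric.diam {x | t < φ x} := Real.volume_le_diam _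
    _ ≤ ENNReal.ofReal C := by
        apply EMetric.diam_le
        intro a ha b hb
        rw [edist_dist]
        apply ENNReal.ofReal_le_ofReal
        rw [Real.dist_eq]
        rcases le_total a b with h | h
        · rw [abs_of_nonpos (by linarith)]
          simpa using key a ha b hb h
        · rw [abs_of_nonneg (by linarith)]
          exact key b hb a ha h
end

section
/- Let φ : ℝ → ℝ≥0 be log-concave with 0 < ∫_ℝ φ < ∞. Then for every t with 0 < t ≤ ‖φ‖_∞/2, the integral of φ over the sublevel set {φ < t} is at most (2‖φ‖₁/‖φ‖_∞) · t. -/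
open MeasureTheory

section Aux

open Set Filter

lemma aux_hasDeriv (k x₀ M' : ℝ) (hk : k ≠ 0) (x : ℝ) :
    HasDerivAt (fun x => -(M'/k) * Real.exp (-(k * (x - x₀))))
      (M' * Real.exp (-(k * (x - x₀)))) x := by
  have h1 : HasDerivAt (fun x => -(k * (x - x₀))) (-k) x := by
    exact (((hasDerivAt_id x).sub_const x₀).const_mul k).neg.congr_deriv (by simp)
  have h2 := (h1.exp).const_mul (-(M'/k))
  refine h2.congr_deriv ?_
  field_simp

lemma aux_exp_integrableOn (k c x₀ M' : ℝ) (hk : 0 < k) :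
    IntegrableOn (fun x => M' * Real.exp (-(k * (x - x₀)))) (Set.Ioi c) := by
  have h0 : (fun x => M' * Real.exp (-(k * (x - x₀))))
      = (fun x => (M' * Real.exp (k * x₀)) * Real.exp (-k * x)) := by
    funext x
    rw [show -(k * (x - x₀)) = k * x₀ + -k * x by ring, Real.exp_add]
    ring
  rw [h0]
  exact (exp_neg_integrableOn_Ioi c hk).const_mul _

lemma aux_exp_tail (k c x₀ M' : ℝ) (hk : 0 < k) :
    ∫ x in Set.Ioi c, M' * Real.exp (-(k * (x - x₀))) = M' * Real.exp (-(k * (c - x₀))) / k := by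
  have htend : Filter.Tendsto (fun x => -(M'/k) * Real.exp (-(k * (x - x₀))))
      Filter.atTop (nhds 0) := by
    have h3 : Filter.Tendsto (fun x : ℝ => -(k * (x - x₀))) Filter.atTop Filter.atBot := by
      apply Filter.tendsto_neg_atTop_atBot.comp
      exact (Filter.tendsto_atTop_add_const_right _ (-x₀) Filter.tendsto_id).const_mul_atTop hk
    have := (Real.tendsto_exp_atBot.comp h3).const_mul (-(M'/k))
    simpa using this
  have := integral_Ioi_of_hasDerivAt_of_tendsto'
    (fun x _ => aux_hasDeriv k x₀ M' hk.ne' x) (aux_exp_integrableOn k c x₀ M' hk) htend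
  rw [this]
  field_simp
  ring

lemma aux_exp_Ioc (k x₀ b M' : ℝ) (hk : 0 < k) (hb : x₀ ≤ b) :
    ∫ x in Set.Ioc x₀ b, M' * Real.exp (-(k * (x - x₀)))
      = M' * (1 - Real.exp (-(k * (b - x₀)))) / k := by
  rw [← intervalIntegral.integral_of_le hb]
  rw [intervalIntegral.integral_eq_sub_of_hasDerivAt
    (fun x _ => aux_hasDeriv k x₀ M' hk.ne' x)
    (Continuous.intervalIntegrable (by continuity) _ _)]
  simp
  field_simp
  ring

lemma aux_tail_ptwise (M' s u θ ρ : ℝ) (hs : 0 < s) (hM' : s < M') (hθ : θ ∈ Set.Ioo (0:ℝ) 1)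
    (hu : 0 ≤ u) (h : M' ^ (1 - θ) * u ^ θ ≤ s) (hρ : ρ = Real.log M' - Real.log s) :
    u ≤ M' * Real.exp (-(ρ / θ)) := by
  have hM0 : (0:ℝ) < M' := hs.trans hM'
  rcases eq_or_lt_of_le hu with h0 | hu0
  · exact le_trans h0.symm.le (by positivity)
  have hlog := Real.log_le_log (by positivity) h
  rw [Real.log_mul (by positivity) (by positivity), Real.log_rpow hM0, Real.log_rpow hu0] at hlog
  have key : Real.log u ≤ Real.log M' - ρ / θ := by
    have hrw : Real.log M' - ρ / θ = (Real.log M' * θ - ρ)/θ := by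
      rw [eq_div_iff hθ.1.ne', sub_mul, div_mul_cancel₀ _ hθ.1.ne']
    rw [hrw, le_div_iff₀ hθ.1]
    nlinarith [hθ.1]
  calc u = Real.exp (Real.log u) := (Real.exp_log hu0).symm
    _ ≤ Real.exp (Real.log M' - ρ / θ) := Real.exp_le_exp.2 key
    _ = M' * Real.exp (-(ρ/θ)) := by rw [sub_eq_add_neg, Real.exp_add, Real.exp_log hM0]

lemma aux_exp_eq_rpow (M' s θ ρ : ℝ) (hs : 0 < s) (hM0 : 0 < M')
    (hρ : ρ = Real.log M' - Real.log s) :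
    M' * Real.exp (-(ρ * θ)) = M' ^ (1 - θ) * s ^ θ := by
  have h1 : M' * Real.exp (-(ρ * θ)) = Real.exp (Real.log M' + -(ρ * θ)) := by
    rw [Real.exp_add, Real.exp_log hM0]
  rw [h1, Real.rpow_def_of_pos hM0, Real.rpow_def_of_pos hs, ← Real.exp_add]
  congr 1
  rw [hρ]; ring

lemma aux_exp_neg_rho (M' s ρ : ℝ) (hs : 0 < s) (hM0 : 0 < M')
    (hρ : ρ = Real.log M' - Real.log s) :
    Real.exp (-ρ) = s / M' := by
  rw [hρ, neg_sub, Real.exp_sub, Real.exp_log hs, Real.exp_log hM0]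

lemma isLogConcave_comp_neg {φ : ℝ → ℝ} (hφ : IsLogConcave φ) :
    IsLogConcave (fun x => φ (-x)) := by
  intro x y θ hθ
  have h2 : (1-θ)*(-x)+θ*(-y) = -((1-θ)*x+θ*y) := by ring
  have := hφ (-x) (-y) θ hθ
  rw [h2] at this
  exact this

lemma aux_union_le (f : ℝ → ℝ) (hf0 : ∀ x, 0 ≤ f x) (hint : Integrable f)
    (A B : Set ℝ) (hA : MeasurableSet A) (hB : MeasurableSet B) :
    ∫ x in A ∪ B, f x ≤ (∫ x in A, f x) + ∫ x in B, f x := by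
  have h1 : A ∪ B = A ∪ (B \ A) := (Set.union_diff_self).symm
  rw [h1, setIntegral_union disjoint_sdiff_self_right (hB.diff hA)
    hint.integrableOn hint.integrableOn]
  refine add_le_add le_rfl ?_
  exact setIntegral_mono_set hint.integrableOn (Filter.Eventually.of_forall hf0)
    (HasSubset.Subset.eventuallyLE Set.diff_subset)

/-- Tail bound: beyond the superlevel set, the integral is at most `s (b - x₀) / ρ`. -/
lemma tail_le (φ : ℝ → ℝ) (hφ0 : ∀ x, 0 ≤ φ x) (hφ : IsLogConcave φ)
    (hint : Integrable φ) (s x₀ b : ℝ) (hs : 0 < s) (hM' : s < φ x₀)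
    (hx₀b : x₀ ≤ b) (hout : ∀ x, b < x → φ x ≤ s) :
    ∫ x in Set.Ioi b, φ x ≤ s * (b - x₀) / (Real.log (φ x₀) - Real.log s) := by
  set M' := φ x₀ with hM'def
  set ρ := Real.log M' - Real.log s with hρdef
  have hM0 : 0 < M' := hs.trans hM'
  have hρ0 : 0 < ρ := sub_pos.2 (Real.log_lt_log hs hM')
  apply le_of_forall_pos_le_add
  intro ε hε
  set δ := ε / (s + s/ρ) with hδdef
  have hδ : 0 < δ := div_pos hε (by positivity)
  set d := b - x₀ + δ with hddef
  have hd : 0 < d := by simp only [hddef]; linarith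
  set k := ρ / d with hkdef
  have hk : 0 < k := div_pos hρ0 hd
  have hsplit : ∫ x in Set.Ioi b, φ x
      = (∫ x in Set.Ioc b (b+δ), φ x) + ∫ x in Set.Ioi (b+δ), φ x := by
    rw [← setIntegral_union (Set.Ioc_disjoint_Ioi le_rfl) measurableSet_Ioi
      hint.integrableOn hint.integrableOn, Set.Ioc_union_Ioi_eq_Ioi (by linarith)]
  have hbound1 : ∫ x in Set.Ioc b (b+δ), φ x ≤ s * δ := by
    have h1 : ∫ x in Set.Ioc b (b+δ), φ x ≤ ∫ _x in Set.Ioc b (b+δ), s :=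
      setIntegral_mono_on hint.integrableOn
        (integrableOn_const measure_Ioc_lt_top.ne) measurableSet_Ioc
        (fun x hx => hout x hx.1)
    have h2 : ∫ _x in Set.Ioc b (b+δ), s = δ * s := by
      rw [setIntegral_const, measureReal_def, Real.volume_Ioc, smul_eq_mul,
        ENNReal.toReal_ofReal (by linarith : (0:ℝ) ≤ b + δ - b)]
      ring_nf
    rw [h2] at h1
    linarith
  have hptw : ∀ x ∈ Set.Ioi (b+δ), φ x ≤ M' * Real.exp (-(k * (x - x₀))) := by
    intro x hx
    have hxgt : b + δ < x := hx
    have hxx₀ : d < x - x₀ := by simp only [hddef]; linarith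
    have hxx₀' : 0 < x - x₀ := hd.trans hxx₀
    set θ := d / (x - x₀) with hθdef
    have hθ : θ ∈ Set.Ioo (0:ℝ) 1 := ⟨div_pos hd hxx₀', (div_lt_one hxx₀').2 hxx₀⟩
    have hcomb : (1-θ) * x₀ + θ * x = b + δ := by
      have : θ * (x - x₀) = d := div_mul_cancel₀ _ hxx₀'.ne'
      nlinarith [this]
    have hle : M' ^ (1-θ) * (φ x) ^ θ ≤ s := by
      have := hφ x₀ x θ hθ
      rw [hcomb] at this
      exact this.trans (hout _ (by linarith))
    have := aux_tail_ptwise M' s (φ x) θ ρ hs hM' hθ (hφ0 x) hle hρdef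
    have heq : ρ / θ = k * (x - x₀) := by
      rw [hθdef, hkdef]
      field_simp
    rwa [heq] at this
  have hbound2 : ∫ x in Set.Ioi (b+δ), φ x ≤ s * d / ρ := by
    have h1 : ∫ x in Set.Ioi (b+δ), φ x
        ≤ ∫ x in Set.Ioi (b+δ), M' * Real.exp (-(k * (x - x₀))) :=
      setIntegral_mono_on hint.integrableOn (aux_exp_integrableOn k (b+δ) x₀ M' hk)
        measurableSet_Ioi hptw
    rw [aux_exp_tail k (b+δ) x₀ M' hk] at h1
    have h2 : k * (b + δ - x₀) = ρ := by
      have hbd : b + δ - x₀ = d := by rw [hddef]; ring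
      rw [hkdef, hbd, div_mul_cancel₀ _ hd.ne']
    rw [h2, aux_exp_neg_rho M' s ρ hs hM0 hρdef] at h1
    have h3 : M' * (s / M') / k = s * d / ρ := by
      rw [hkdef]
      field_simp
    rwa [h3] at h1
  have hfin : δ * (s + s/ρ) = ε := div_mul_cancel₀ _ (by positivity)
  have : s * d / ρ = s * (b - x₀) / ρ + s * δ / ρ := by
    rw [hddef]; ring
  rw [hsplit]
  have hsd : s * δ / ρ + s * δ = δ * (s + s/ρ) := by ring
  linarith [hbound1, hbound2]

/-- Bulk lower bound on the superlevel interval. -/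
lemma bulk_ge (φ : ℝ → ℝ) (hφ0 : ∀ x, 0 ≤ φ x) (hφ : IsLogConcave φ)
    (hint : Integrable φ) (s x₀ b' : ℝ) (hs : 0 < s) (hM' : s < φ x₀)
    (hx₀b : x₀ ≤ b') (hb' : s ≤ φ b') :
    (φ x₀ - s) * (b' - x₀) / (Real.log (φ x₀) - Real.log s) ≤ ∫ x in Set.Ioc x₀ b', φ x := by
  set M' := φ x₀ with hM'def
  set ρ := Real.log M' - Real.log s with hρdef
  have hM0 : 0 < M' := hs.trans hM'
  have hρ0 : 0 < ρ := sub_pos.2 (Real.log_lt_log hs hM')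
  rcases eq_or_lt_of_le hx₀b with heq | hlt
  · rw [← heq]
    simp only [sub_self, mul_zero, zero_div]
    exact setIntegral_nonneg measurableSet_Ioc (fun x _ => hφ0 x)
  set k := ρ / (b' - x₀) with hkdef
  have hbx : 0 < b' - x₀ := by linarith
  have hk : 0 < k := div_pos hρ0 hbx
  have hptw : ∀ x ∈ Set.Ioc x₀ b', M' * Real.exp (-(k * (x - x₀))) ≤ φ x := by
    intro x hx
    rcases eq_or_lt_of_le hx.2 with hxb | hxb
    · have h2 : k * (x - x₀) = ρ := by rw [hxb, hkdef]; field_simp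
      rw [h2, aux_exp_neg_rho M' s ρ hs hM0 hρdef, hxb]
      rw [mul_div_assoc', mul_comm, mul_div_assoc, div_self hM0.ne', mul_one]
      exact hb'
    · set θ := (x - x₀) / (b' - x₀) with hθdef
      have hθ : θ ∈ Set.Ioo (0:ℝ) 1 := ⟨div_pos (by linarith [hx.1]) hbx,
        (div_lt_one hbx).2 (by linarith)⟩
      have hcomb : (1-θ) * x₀ + θ * b' = x := by
        have : θ * (b' - x₀) = x - x₀ := div_mul_cancel₀ _ hbx.ne'
        nlinarith [this]
      have heq : k * (x - x₀) = ρ * θ := by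
        rw [hkdef, hθdef]
        field_simp
      rw [heq, aux_exp_eq_rpow M' s θ ρ hs hM0 hρdef]
      calc M' ^ (1-θ) * s ^ θ ≤ M' ^ (1-θ) * (φ b') ^ θ := by
            apply mul_le_mul_of_nonneg_left (Real.rpow_le_rpow hs.le hb' hθ.1.le)
            positivity
        _ ≤ φ ((1-θ) * x₀ + θ * b') := hφ x₀ b' θ hθ
        _ = φ x := by rw [hcomb]
  have h1 : ∫ x in Set.Ioc x₀ b', M' * Real.exp (-(k * (x - x₀))) ≤ ∫ x in Set.Ioc x₀ b', φ x :=
    setIntegral_mono_on ((by continuity : Continuous fun x => M' * Real.exp (-(k * (x - x₀)))).integrableOn_Ioc)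
      hint.integrableOn measurableSet_Ioc hptw
  rw [aux_exp_Ioc k x₀ b' M' hk hx₀b] at h1
  have h2 : k * (b' - x₀) = ρ := by rw [hkdef]; field_simp
  rw [h2, aux_exp_neg_rho M' s ρ hs hM0 hρdef] at h1
  have h3 : M' * (1 - s / M') / k = (M' - s) * (b' - x₀) / ρ := by
    rw [hkdef]
    field_simp
  rwa [h3] at h1

end Aux

section Core

open Set Filter

lemma final_arith (SS I M M' s t P : ℝ) (hup : SS ≤ s * P) (hlow : (M' - s) * P ≤ I)
    (hP0 : 0 ≤ P) (hs : 0 < s) (hst : s < t) (hM : 0 < M) (hM'M2 : M / 2 < M' - s) :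
    SS ≤ 2 * I / M * t := by
  have h1 : (M/2) * P ≤ (M' - s) * P := mul_le_mul_of_nonneg_right hM'M2.le hP0
  have h2 : M * P ≤ 2 * I := by linarith
  have h3 : SS ≤ t * P := by
    have := mul_le_mul_of_nonneg_right hst.le hP0
    linarith
  have h7 : P ≤ 2 * I / M := by rw [le_div_iff₀ hM]; linarith
  calc SS ≤ t * P := h3
    _ ≤ t * (2 * I / M) := mul_le_mul_of_nonneg_left h7 (by linarith)
    _ = 2 * I / M * t := by ring

set_option maxHeartbeats 1000000 in
lemma core_bound (φ : ℝ → ℝ) (hφ0 : ∀ x, 0 ≤ φ x)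
    (hφ : IsLogConcave φ) (hmeas : Measurable φ) (hint : Integrable φ)
    (hpos : 0 < ∫ x, φ x) (hbdd : BddAbove (Set.range φ)) (s t : ℝ) (hs : 0 < s)
    (hst : s < t) (htM : t ≤ sSup (Set.range φ) / 2) :
    ∫ x in {x | φ x ≤ s}, φ x ≤ 2 * (∫ x, φ x) / sSup (Set.range φ) * t := by
  set M := sSup (Set.range φ) with hMdef
  have hM : 0 < M := by linarith
  have hsM : 2 * s < M := by linarith
  obtain ⟨y, ⟨x₀, rfl⟩, hx₀⟩ := exists_lt_of_lt_csSup (Set.range_nonempty φ)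
    (show (M + 2*s)/2 < M by linarith)
  set M' := φ x₀ with hM'def
  have hsM' : s < M' := by linarith
  have hM'M2 : M/2 < M' - s := by linarith
  have hM0 : 0 < M' := hs.trans hsM'
  set ρ := Real.log M' - Real.log s with hρdef
  have hρ0 : 0 < ρ := sub_pos.2 (Real.log_lt_log hs hsM')
  set T := {x : ℝ | s < φ x} with hTdef
  have hx₀T : x₀ ∈ T := hsM'
  have hTconv : ∀ x ∈ T, ∀ y ∈ T, ∀ z, x ≤ z → z ≤ y → z ∈ T := by
    intro x hxT y hyT z hxz hzy
    rcases eq_or_lt_of_le hxz with rfl | hxz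
    · exact hxT
    rcases eq_or_lt_of_le hzy with rfl | hzy
    · exact hyT
    have hxy : x < y := hxz.trans hzy
    set θ := (z - x) / (y - x) with hθdef
    have hyx : 0 < y - x := by linarith
    have hθI : θ ∈ Set.Ioo (0:ℝ) 1 := ⟨div_pos (by linarith) hyx, (div_lt_one hyx).2 (by linarith)⟩
    have hcomb : (1-θ) * x + θ * y = z := by
      have : θ * (y - x) = z - x := div_mul_cancel₀ _ hyx.ne'
      nlinarith [this]
    have hkey := hφ x y θ hθI
    rw [hcomb] at hkey
    have h1 : s ^ (1-θ) < (φ x) ^ (1-θ) :=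
      Real.rpow_lt_rpow hs.le hxT (by linarith [hθI.2])
    have h2 : s ^ θ < (φ y) ^ θ := Real.rpow_lt_rpow hs.le hyT hθI.1
    have h3 : s ^ (1-θ) * s ^ θ = s := by
      rw [← Real.rpow_add hs]
      simp
    have h4 : s ^ (1-θ) * s ^ θ < (φ x) ^ (1-θ) * (φ y) ^ θ :=
      mul_lt_mul'' h1 h2 (by positivity) (by positivity)
    have : s < φ z := by rw [← h3]; exact h4.trans_le hkey
    exact this
  -- boundedness of T
  have hTba : BddAbove T := by
    by_contra h
    obtain ⟨n, hn⟩ := exists_nat_gt ((∫ x, φ x) / s)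
    rw [not_bddAbove_iff] at h
    obtain ⟨y, hyT, hy⟩ := h (x₀ + n)
    have hsub : Set.Icc x₀ (x₀ + n) ⊆ T := by
      intro z hz
      exact hTconv x₀ hx₀T y hyT z hz.1 (hz.2.trans hy.le)
    have h1 : s * n ≤ ∫ x in Set.Icc x₀ (x₀ + n), φ x := by
      have h2 : ∫ _x in Set.Icc x₀ (x₀ + n), s ≤ ∫ x in Set.Icc x₀ (x₀ + n), φ x :=
        setIntegral_mono_on (integrableOn_const measure_Icc_lt_top.ne)
          hint.integrableOn measurableSet_Icc (fun z hz => (hsub hz).le)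
      have h3 : ∫ _x in Set.Icc x₀ (x₀ + n), s = (n : ℝ) * s := by
        rw [setIntegral_const, measureReal_def, Real.volume_Icc, smul_eq_mul,
          ENNReal.toReal_ofReal (by simp : (0:ℝ) ≤ x₀ + n - x₀)]
        ring_nf
      rw [h3] at h2
      linarith
    have h4 : ∫ x in Set.Icc x₀ (x₀ + n), φ x ≤ ∫ x, φ x :=
      setIntegral_le_integral hint (Filter.Eventually.of_forall hφ0)
    rw [div_lt_iff₀ hs] at hn
    linarith
  have hTbb : BddBelow T := by
    by_contra h
    obtain ⟨n, hn⟩ := exists_nat_gt ((∫ x, φ x) / s)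
    rw [not_bddBelow_iff] at h
    obtain ⟨y, hyT, hy⟩ := h (x₀ - n)
    have hsub : Set.Icc (x₀ - n) x₀ ⊆ T := by
      intro z hz
      exact hTconv y hyT x₀ hx₀T z (hy.le.trans hz.1) hz.2
    have h1 : s * n ≤ ∫ x in Set.Icc (x₀ - n) x₀, φ x := by
      have h2 : ∫ _x in Set.Icc (x₀ - n) x₀, s ≤ ∫ x in Set.Icc (x₀ - n) x₀, φ x :=
        setIntegral_mono_on (integrableOn_const measure_Icc_lt_top.ne)
          hint.integrableOn measurableSet_Icc (fun z hz => (hsub hz).le)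
      have h3 : ∫ _x in Set.Icc (x₀ - n) x₀, s = (n : ℝ) * s := by
        rw [setIntegral_const, measureReal_def, Real.volume_Icc, smul_eq_mul,
          ENNReal.toReal_ofReal (by simp : (0:ℝ) ≤ x₀ - (x₀ - n))]
        ring_nf
      rw [h3] at h2
      linarith
    have h4 : ∫ x in Set.Icc (x₀ - n) x₀, φ x ≤ ∫ x, φ x :=
      setIntegral_le_integral hint (Filter.Eventually.of_forall hφ0)
    rw [div_lt_iff₀ hs] at hn
    linarith
  set a := sInf T with hadef
  set b := sSup T with hbdef
  have ha : a ≤ x₀ := csInf_le hTbb hx₀T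
  have hb : x₀ ≤ b := le_csSup hTba hx₀T
  have hbout : ∀ x, b < x → φ x ≤ s := by
    intro x hx
    by_contra h
    push_neg at h
    exact absurd (le_csSup hTba (h : x ∈ T)) (not_le.2 hx)
  have haout : ∀ x, x < a → φ x ≤ s := by
    intro x hx
    by_contra h
    push_neg at h
    exact absurd (csInf_le hTbb (h : x ∈ T)) (not_le.2 hx)
  -- tails
  have htailR : ∫ x in Set.Ioi b, φ x ≤ s * (b - x₀) / ρ :=
    tail_le φ hφ0 hφ hint s x₀ b hs hsM' hb hbout
  set ψ : ℝ → ℝ := fun x => φ (-x) with hψdef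
  have hψ0 : ∀ x, 0 ≤ ψ x := fun x => hφ0 (-x)
  have hψlc : IsLogConcave ψ := isLogConcave_comp_neg hφ
  have hψint : Integrable ψ := hint.comp_neg
  have hψx₀ : ψ (-x₀) = φ x₀ := by simp [hψdef]
  have htailL : ∫ x in Set.Iic a, φ x ≤ s * (x₀ - a) / ρ := by
    have h1 := tail_le ψ hψ0 hψlc hψint s (-x₀) (-a) hs (by rw [hψx₀]; exact hsM')
      (neg_le_neg ha) (fun x hx => haout (-x) (by linarith))
    rw [hψx₀] at h1
    have h2 : (∫ x in Set.Ioi (-a), ψ x) = ∫ x in Set.Iic a, φ x := by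
      rw [hψdef]
      have := integral_comp_neg_Ioi (-a) φ
      simpa using this
    rw [h2] at h1
    have h3 : s * (-a - -x₀) = s * (x₀ - a) := by ring
    rwa [h3] at h1
  -- bulk bounds
  have hbulkR : (M' - s) * (b - x₀) / ρ ≤ ∫ x in Set.Ioc x₀ b, φ x := by
    apply le_of_forall_pos_le_add
    intro ε hε
    set δ := ε * ρ / (M' - s) with hδdef
    have hδ : 0 < δ := by
      apply div_pos (mul_pos hε hρ0); linarith
    obtain ⟨b1, hb1T, hb1⟩ := exists_lt_of_lt_csSup ⟨x₀, hx₀T⟩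
      (show b - δ < b by linarith)
    set b'' := max b1 x₀ with hb''def
    have hb''T : b'' ∈ T := by
      rcases max_cases b1 x₀ with ⟨h, _⟩ | ⟨h, _⟩ <;> rw [hb''def, h]
      exacts [hb1T, hx₀T]
    have hx₀b'' : x₀ ≤ b'' := le_max_right _ _
    have hb''b : b'' ≤ b := max_le (le_csSup hTba hb1T) hb
    have hb2 : b - δ < b'' := hb1.trans_le (le_max_left _ _)
    have h1 := bulk_ge φ hφ0 hφ hint s x₀ b'' hs hsM' hx₀b'' (le_of_lt hb''T)
    have h2 : ∫ x in Set.Ioc x₀ b'', φ x ≤ ∫ x in Set.Ioc x₀ b, φ x :=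
      setIntegral_mono_set hint.integrableOn (Filter.Eventually.of_forall hφ0)
        (HasSubset.Subset.eventuallyLE (Set.Ioc_subset_Ioc_right hb''b))
    have h3 : (M' - s) * (b - x₀) / ρ ≤ (M' - s) * (b'' - x₀) / ρ + ε := by
      have h4 : (M' - s) * (b - x₀) / ρ - (M' - s) * (b'' - x₀) / ρ
          = (M' - s) * (b - b'') / ρ := by ring
      have h5 : (M' - s) * (b - b'') / ρ ≤ (M' - s) * δ / ρ := by
        gcongr
        · linarith
      have h6 : (M' - s) * δ / ρ = ε := by
        rw [hδdef, mul_comm (M' - s) (ε * ρ / (M' - s)), div_mul_cancel₀ _ (by linarith : M' - s ≠ 0), mul_div_cancel_right₀ _ hρ0.ne']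
      linarith
    linarith
  have hbulkL : (M' - s) * (x₀ - a) / ρ ≤ ∫ x in Set.Ioc a x₀, φ x := by
    apply le_of_forall_pos_le_add
    intro ε hε
    set δ := ε * ρ / (M' - s) with hδdef
    have hδ : 0 < δ := by
      apply div_pos (mul_pos hε hρ0); linarith
    obtain ⟨a1, ha1T, ha1⟩ := exists_lt_of_csInf_lt ⟨x₀, hx₀T⟩
      (show a < a + δ by linarith)
    set a'' := min a1 x₀ with ha''def
    have ha''T : a'' ∈ T := by
      rcases min_cases a1 x₀ with ⟨h, _⟩ | ⟨h, _⟩ <;> rw [ha''def, h]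
      exacts [ha1T, hx₀T]
    have ha''x₀ : a'' ≤ x₀ := min_le_right _ _
    have haa'' : a ≤ a'' := le_min (csInf_le hTbb ha1T) ha
    have ha2 : a'' < a + δ := (min_le_left _ _).trans_lt ha1
    have h1 := bulk_ge ψ hψ0 hψlc hψint s (-x₀) (-a'') hs (by rw [hψx₀]; exact hsM')
      (neg_le_neg ha''x₀) (by show s ≤ φ (- -a''); rw [neg_neg]; exact (le_of_lt ha''T))
    rw [hψx₀] at h1
    have h2 : (∫ x in Set.Ioc (-x₀) (-a''), ψ x) = ∫ x in Set.Ioc a'' x₀, φ x := by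
      rw [hψdef, ← intervalIntegral.integral_of_le (neg_le_neg ha''x₀),
        intervalIntegral.integral_comp_neg, neg_neg, neg_neg,
        intervalIntegral.integral_of_le ha''x₀]
    rw [h2] at h1
    have h2' : ∫ x in Set.Ioc a'' x₀, φ x ≤ ∫ x in Set.Ioc a x₀, φ x :=
      setIntegral_mono_set hint.integrableOn (Filter.Eventually.of_forall hφ0)
        (HasSubset.Subset.eventuallyLE (Set.Ioc_subset_Ioc_left haa''))
    have h3 : (M' - s) * (x₀ - a) / ρ ≤ (M' - s) * (-a'' - -x₀) / ρ + ε := by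
      have h5 : (M' - s) * (x₀ - a) / ρ - (M' - s) * (-a'' - -x₀) / ρ
          = (M' - s) * (a'' - a) / ρ := by ring
      have h6 : (M' - s) * (a'' - a) / ρ ≤ (M' - s) * δ / ρ := by
        gcongr
        · linarith
      have h7 : (M' - s) * δ / ρ = ε := by
        rw [hδdef, mul_comm (M' - s) (ε * ρ / (M' - s)), div_mul_cancel₀ _ (by linarith : M' - s ≠ 0), mul_div_cancel_right₀ _ hρ0.ne']
      linarith
    linarith
  -- combine
  have hIoo : Set.Ioo a b ⊆ T := by
    intro z hz
    obtain ⟨x1, hx1T, hx1⟩ := exists_lt_of_csInf_lt ⟨x₀, hx₀T⟩ hz.1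
    obtain ⟨y1, hy1T, hy1⟩ := exists_lt_of_lt_csSup ⟨x₀, hx₀T⟩ hz.2
    exact hTconv x1 hx1T y1 hy1T z hx1.le hy1.le
  have hS : {x : ℝ | φ x ≤ s} ⊆ Set.Iic a ∪ Set.Ici b := by
    intro x hx
    by_contra h
    simp only [Set.mem_union, Set.mem_Iic, Set.mem_Ici, not_or, not_le] at h
    have hxT : x ∈ T := hIoo ⟨h.1, h.2⟩
    simp only [Set.mem_setOf_eq] at hx hxT
    exact absurd hx (not_le.2 hxT)
  have hup : ∫ x in {x | φ x ≤ s}, φ x ≤ s * (x₀ - a) / ρ + s * (b - x₀) / ρ := by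
    calc ∫ x in {x | φ x ≤ s}, φ x
        ≤ ∫ x in Set.Iic a ∪ Set.Ici b, φ x :=
          setIntegral_mono_set hint.integrableOn (Filter.Eventually.of_forall hφ0)
            (HasSubset.Subset.eventuallyLE hS)
      _ ≤ (∫ x in Set.Iic a, φ x) + ∫ x in Set.Ici b, φ x :=
          aux_union_le φ hφ0 hint _ _ measurableSet_Iic measurableSet_Ici
      _ = (∫ x in Set.Iic a, φ x) + ∫ x in Set.Ioi b, φ x := by
          rw [integral_Ici_eq_integral_Ioi]
      _ ≤ s * (x₀ - a) / ρ + s * (b - x₀) / ρ := add_le_add htailL htailR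
  have hlow : (M' - s) * (x₀ - a) / ρ + (M' - s) * (b - x₀) / ρ ≤ ∫ x, φ x := by
    have h1 : (∫ x in Set.Ioc a x₀, φ x) + (∫ x in Set.Ioc x₀ b, φ x)
        = ∫ x in Set.Ioc a b, φ x := by
      rw [← setIntegral_union (Set.Ioc_disjoint_Ioc_of_le le_rfl) measurableSet_Ioc
        hint.integrableOn hint.integrableOn, Set.Ioc_union_Ioc_eq_Ioc ha hb]
    have h2 : ∫ x in Set.Ioc a b, φ x ≤ ∫ x, φ x :=
      setIntegral_le_integral hint (Filter.Eventually.of_forall hφ0)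
    linarith [hbulkL, hbulkR]
  -- final arithmetic
  have hP0 : 0 ≤ (x₀ - a) / ρ + (b - x₀) / ρ :=
    add_nonneg (div_nonneg (by linarith) hρ0.le) (div_nonneg (by linarith) hρ0.le)
  have hup' : ∫ x in {x | φ x ≤ s}, φ x ≤ s * ((x₀ - a) / ρ + (b - x₀) / ρ) := by
    have e1 : s * ((x₀ - a) / ρ + (b - x₀) / ρ) = s * (x₀ - a) / ρ + s * (b - x₀) / ρ := by
      ring
    exact le_trans hup (le_of_eq e1.symm)
  have hlow' : (M' - s) * ((x₀ - a) / ρ + (b - x₀) / ρ) ≤ ∫ x, φ x := by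
    have e2 : (M' - s) * ((x₀ - a) / ρ + (b - x₀) / ρ)
        = (M' - s) * (x₀ - a) / ρ + (M' - s) * (b - x₀) / ρ := by ring
    exact le_trans (le_of_eq e2) hlow
  exact final_arith _ _ M M' s t _ hup' hlow' hP0 hs hst hM hM'M2

end Core

theorem sublevel_integral_upper_bound (φ : ℝ → ℝ) (hφ0 : ∀ x, 0 ≤ φ x)
    (hφ : IsLogConcave φ) (hmeas : Measurable φ) (hint : Integrable φ)
    (hpos : 0 < ∫ x, φ x) (t : ℝ) (ht : 0 < t) (htM : t ≤ sSup (Set.range φ) / 2) :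
    ∫ x in {x | φ x < t}, φ x ≤ 2 * (∫ x, φ x) / sSup (Set.range φ) * t := by
  by_cases hbdd : BddAbove (Set.range φ)
  · set A : ℕ → Set ℝ := fun n => {x | φ x ≤ t - t / (n + 2)} with hAdef
    have hmeasA : ∀ n, MeasurableSet (A n) := fun n => hmeas measurableSet_Iic
    have hmono : Monotone A := by
      intro n m hnm x hx
      simp only [hAdef, Set.mem_setOf_eq] at hx ⊢
      have hc : ((n:ℝ) + 2) ≤ ((m:ℝ) + 2) := by
        have : ((n:ℝ)) ≤ (m:ℝ) := Nat.cast_le.2 hnm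
        linarith
      have h1 : t / ((m:ℝ) + 2) ≤ t / ((n:ℝ) + 2) :=
        div_le_div_of_nonneg_left ht.le (by positivity) hc
      exact le_trans hx (by linarith)
    have hU : ⋃ n, A n = {x | φ x < t} := by
      ext x
      simp only [Set.mem_iUnion, Set.mem_setOf_eq, hAdef]
      constructor
      · rintro ⟨n, hn⟩
        have h1 : 0 < t / ((n:ℝ) + 2) := by positivity
        linarith
      · intro hx
        obtain ⟨n, hn⟩ := exists_nat_gt (t / (t - φ x))
        have h1 : 0 < t - φ x := by linarith
        rw [div_lt_iff₀ h1] at hn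
        refine ⟨n, ?_⟩
        have h3 : t / ((n:ℝ) + 2) < t - φ x := by
          rw [div_lt_iff₀ (by positivity)]
          nlinarith
        linarith
    have htend := tendsto_setIntegral_of_monotone hmeasA hmono
      (by rw [hU]; exact hint.integrableOn)
    rw [← hU]
    refine le_of_tendsto htend (Filter.Eventually.of_forall fun n => ?_)
    have hsn : 0 < t - t / ((n:ℝ) + 2) := by
      have : t / ((n:ℝ) + 2) < t := div_lt_self ht (by have := Nat.cast_nonneg (α := ℝ) n; linarith)
      linarith
    have hstn : t - t / ((n:ℝ) + 2) < t := by
      have : 0 < t / ((n:ℝ) + 2) := by positivity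
      linarith
    exact core_bound φ hφ0 hφ hmeas hint hpos hbdd _ t hsn hstn htM
  · exfalso
    rw [Real.sSup_of_not_bddAbove hbdd] at htM
    norm_num at htM
    linarith
end

section
/- Let λ ∈ (0,1) and f, g, h : ℝ → ℝ≥0 be measurable functions with positive finite integrals satisfying h((1-λ)x + λy) ≥ f(x)^(1-λ) g(y)^λ for all x, y ∈ ℝ, and ∫ h < 2 (∫ f)^(1-λ) (∫ g)^λ. Then f and g are bounded. -/
open MeasureTheory

/-- A nonnegative integrable function with positive integral is bounded below by some
`ε > 0` on a set of positive finite measure. -/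
lemma exists_superlevel (g : ℝ → ℝ) (hg0 : ∀ x, 0 ≤ g x) (hgm : Measurable g)
    (hgi : Integrable g) (hgpos : 0 < ∫ x, g x) :
    ∃ ε : ℝ, 0 < ε ∧ 0 < volume {x | ε ≤ g x} ∧ volume {x | ε ≤ g x} < ⊤ := by
  by_contra hcon
  push_neg at hcon
  have hnull : ∀ n : ℕ, volume {x | (1:ℝ)/(n+1) ≤ g x} = 0 := by
    intro n
    have hpos : (0:ℝ) < 1/(n+1) := by positivity
    by_contra hne
    have h1 : 0 < volume {x | (1:ℝ)/(n+1) ≤ g x} :=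
      lt_of_le_of_ne zero_le (Ne.symm hne)
    exact absurd (hcon _ hpos h1) (not_le.mpr (hgi.measure_ge_lt_top hpos))
  have hU : {x : ℝ | 0 < g x} ⊆ ⋃ n : ℕ, {x | (1:ℝ)/(n+1) ≤ g x} := by
    intro x hx
    have hx' : 0 < g x := hx
    obtain ⟨n, hn⟩ := exists_nat_one_div_lt hx'
    exact Set.mem_iUnion.mpr ⟨n, le_of_lt hn⟩
  have h0 : volume {x : ℝ | 0 < g x} = 0 :=
    measure_mono_null hU (measure_iUnion_null hnull)
  have hae : g =ᵐ[volume] 0 := by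
    filter_upwards [measure_eq_zero_iff_ae_notMem.mp h0] with x hxx
    have : ¬ 0 < g x := hxx
    show g x = 0
    exact le_antisymm (not_lt.mp this) (hg0 x)
  rw [integral_congr_ae hae] at hgpos
  simp at hgpos

/-- Main auxiliary lemma: one side of the conclusion. -/
lemma bdd_aux (l : ℝ) (hl0 : 0 < l) (hl1 : l < 1) (f g h : ℝ → ℝ)
    (hf0 : ∀ x, 0 ≤ f x) (hg0 : ∀ x, 0 ≤ g x) (hh0 : ∀ x, 0 ≤ h x)
    (hgm : Measurable g) (hgi : Integrable g) (hhi : Integrable h)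
    (hgpos : 0 < ∫ x, g x)
    (hcond : ∀ x y : ℝ, f x ^ (1 - l) * g y ^ l ≤ h ((1 - l) * x + l * y)) :
    ∃ C : ℝ, ∀ᵐ x ∂(volume : Measure ℝ), f x ≤ C := by
  obtain ⟨ε, hε, hSpos, hSfin⟩ := exists_superlevel g hg0 hgm hgi hgpos
  set S := {x | ε ≤ g x} with hS
  have hSm : MeasurableSet S := measurableSet_le measurable_const hgm
  set m : ℝ := (volume S).toReal with hm
  have hmpos : 0 < m := ENNReal.toReal_pos hSpos.ne' hSfin.ne
  have hl1' : (0:ℝ) < 1 - l := by linarith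
  set I : ℝ := ∫ x, h x with hI
  have hIpos : 0 ≤ I := integral_nonneg hh0
  set D : ℝ := I / (l * ε ^ l * m) + 1 with hD
  have hDpos : 0 < D := by positivity
  set C : ℝ := D ^ (1 - l)⁻¹ with hC
  refine ⟨C, ?_⟩
  by_contra hcont
  -- get a point x₀ with C < f x₀
  have hx : ∃ x₀, C < f x₀ := by
    by_contra hno
    push_neg at hno
    exact hcont (Filter.Eventually.of_forall hno)
  obtain ⟨x₀, hx₀⟩ := hx
  have hC0 : 0 ≤ C := le_of_lt (by positivity)
  have hCpow : C ^ (1 - l) = D := Real.rpow_inv_rpow hDpos.le hl1'.ne'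
  -- the translated-dilated function
  set H : ℝ → ℝ := fun y => h (l * y + (1 - l) * x₀) with hHdef
  have hHint : Integrable H := by
    have h1 : Integrable (fun z => h (z + (1 - l) * x₀)) := hhi.comp_add_right _
    exact h1.comp_mul_left' hl0.ne'
  have hHlb : ∀ y ∈ S, C ^ (1 - l) * ε ^ l ≤ H y := by
    intro y hy
    have h1 : f x₀ ^ (1 - l) * g y ^ l ≤ H y := by
      simpa [hHdef, add_comm] using hcond x₀ y
    refine le_trans ?_ h1
    have hfC : C ^ (1 - l) ≤ f x₀ ^ (1 - l) :=
      Real.rpow_le_rpow hC0 hx₀.le hl1'.le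
    have hgε : ε ^ l ≤ g y ^ l := Real.rpow_le_rpow hε.le hy hl0.le
    exact mul_le_mul hfC hgε (Real.rpow_nonneg hε.le _) (Real.rpow_nonneg (hf0 x₀) _)
  have key : C ^ (1 - l) * ε ^ l * m ≤ ∫ y in S, H y := by
    have := setIntegral_ge_of_const_le_real hSm hSfin.ne hHlb hHint.integrableOn
    rw [Measure.real] at this
    exact this
  have key2 : (∫ y in S, H y) ≤ ∫ y, H y :=
    setIntegral_le_integral hHint (Filter.Eventually.of_forall (fun y => hh0 _))
  have hint : (∫ y, H y) = |l⁻¹| * I := by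
    have : (∫ y, H y) = |l⁻¹| • ∫ z, h (z + (1 - l) * x₀) :=
      Measure.integral_comp_mul_left (fun z => h (z + (1 - l) * x₀)) l
    rw [this, integral_add_right_eq_self]
    simp [smul_eq_mul, hI]
  have habs : |l⁻¹| = l⁻¹ := abs_of_pos (by positivity)
  have hfinal : l * (C ^ (1 - l) * ε ^ l * m) ≤ I := by
    have := le_trans key key2
    rw [hint, habs] at this
    calc l * (C ^ (1 - l) * ε ^ l * m) ≤ l * (l⁻¹ * I) := by
          exact mul_le_mul_of_nonneg_left this hl0.le
      _ = I := by field_simp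
  rw [hCpow] at hfinal
  have hlt : I < l * (D * ε ^ l * m) := by
    have hεl : 0 < ε ^ l := Real.rpow_pos_of_pos hε l
    have : I < (I / (l * ε ^ l * m) + 1) * (l * ε ^ l * m) := by
      rw [add_mul, div_mul_cancel₀ _ (by positivity), one_mul]
      linarith [mul_pos (mul_pos hl0 hεl) hmpos]
    calc I < (I / (l * ε ^ l * m) + 1) * (l * ε ^ l * m) := this
      _ = l * (D * ε ^ l * m) := by rw [← hD]; ring
  linarith

theorem bounded_of_near_equality (l : ℝ) (hl : l ∈ Set.Ioo (0:ℝ) 1) (f g h : ℝ → ℝ)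
    (hf0 : ∀ x, 0 ≤ f x) (hg0 : ∀ x, 0 ≤ g x) (hh0 : ∀ x, 0 ≤ h x)
    (hfm : Measurable f) (hgm : Measurable g) (hhm : Measurable h)
    (hfi : Integrable f) (hgi : Integrable g) (hhi : Integrable h)
    (hfpos : 0 < ∫ x, f x) (hgpos : 0 < ∫ x, g x) (hhpos : 0 < ∫ x, h x)
    (hcond : ∀ x y : ℝ, f x ^ (1 - l) * g y ^ l ≤ h ((1 - l) * x + l * y))
    (hsmall : ∫ x, h x < 2 * (∫ x, f x) ^ (1 - l) * (∫ x, g x) ^ l) :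
    (∃ C : ℝ, ∀ᵐ x ∂(volume : Measure ℝ), f x ≤ C) ∧
    (∃ C : ℝ, ∀ᵐ x ∂(volume : Measure ℝ), g x ≤ C) := by
  obtain ⟨hl0, hl1⟩ := hl
  constructor
  · exact bdd_aux l hl0 hl1 f g h hf0 hg0 hh0 hgm hgi hhi hgpos hcond
  · have hcond' : ∀ x y : ℝ, g x ^ (1 - (1 - l)) * f y ^ (1 - l) ≤
        h ((1 - (1 - l)) * x + (1 - l) * y) := by
      intro x y
      have := hcond y x
      calc g x ^ (1 - (1 - l)) * f y ^ (1 - l)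
          = f y ^ (1 - l) * g x ^ l := by ring_nf
        _ ≤ h ((1 - l) * y + l * x) := hcond y x
        _ = h ((1 - (1 - l)) * x + (1 - l) * y) := by ring_nf
    exact bdd_aux (1 - l) (by linarith) (by linarith) g f h hg0 hf0 hh0 hfm hfi hhi hfpos hcond'
end

section
/- Let τ ∈ (0, 1/2], λ ∈ [τ, 1-τ], and let f, g, h : ℝ → ℝ≥0 be measurable with positive finite integrals, satisfying h((1-λ)x + λy) ≥ f(x)^(1-λ) g(y)^λ for all x, y, and ∫ h < (1+ε)(∫ f)^(1-λ)(∫ g)^λ with 0 < ε < 2⁻⁶ τ³. Then |(‖f‖_∞/‖g‖_∞) · (‖g‖₁/‖f‖₁) − 1| ≤ 4 τ^(−3/2) ε^(1/2). -/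
open MeasureTheory Set Filter Real
open scoped ENNReal

lemma one_dim_bm {A B T : Set ℝ} (hA : MeasurableSet A) (hB : MeasurableSet B)
    (hT : MeasurableSet T) (hA0 : 0 < volume A) (hB0 : 0 < volume B)
    (hAt : volume A ≠ ⊤) (hBt : volume B ≠ ⊤)
    (hsub : ∀ a ∈ A, ∀ b ∈ B, a + b ∈ T) :
    volume A + volume B ≤ volume T := by
  apply ENNReal.le_of_forall_pos_le_add
  intro ε hε _
  set δ : ℝ≥0∞ := min (min (volume A) (volume B)) ((ε : ℝ≥0∞)/2) with hδdef
  have hδ0 : δ ≠ 0 := by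
    have h1 : (0:ℝ≥0∞) < (ε : ℝ≥0∞)/2 := by
      apply ENNReal.div_pos (by exact_mod_cast hε.ne') (by norm_num)
    have : 0 < δ := lt_min (lt_min hA0 hB0) h1
    exact this.ne'
  obtain ⟨K, hKA, hKc, hKm⟩ := hA.exists_isCompact_lt_add hAt hδ0
  obtain ⟨L, hLB, hLc, hLm⟩ := hB.exists_isCompact_lt_add hBt hδ0
  have hK0 : 0 < volume K := by
    by_contra hc
    push_neg at hc
    simp only [le_zero_iff] at hc
    rw [hc, zero_add] at hKm
    exact absurd (le_trans (min_le_left _ _) (min_le_left _ _) : δ ≤ volume A)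
      (not_le.2 hKm)
  have hL0 : 0 < volume L := by
    by_contra hc
    push_neg at hc
    simp only [le_zero_iff] at hc
    rw [hc, zero_add] at hLm
    exact absurd (le_trans (min_le_left _ _) (min_le_right _ _) : δ ≤ volume B)
      (not_le.2 hLm)
  have hKne : K.Nonempty := nonempty_of_measure_ne_zero hK0.ne'
  have hLne : L.Nonempty := nonempty_of_measure_ne_zero hL0.ne'
  set x0 : ℝ := sSup K with hx0def
  set y0 : ℝ := sInf L with hy0def
  have hx0K : x0 ∈ K := hKc.sSup_mem hKne
  have hy0L : y0 ∈ L := hLc.sInf_mem hLne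
  set D1 : Set ℝ := (fun b => x0 + b) '' L with hD1def
  set D2 : Set ℝ := ((fun a => a + y0) '' K) \ {x0 + y0} with hD2def
  have hD2m : MeasurableSet D2 := by
    apply MeasurableSet.diff _ (measurableSet_singleton _)
    have : (fun a => a + y0) '' K = (fun a => a - y0) ⁻¹' K := by
      ext z; simp [sub_eq_iff_eq_add, eq_comm, sub_eq_add_neg]
    rw [this]
    exact hKc.measurableSet.preimage (measurable_id.sub_const y0)
  have hdisj : Disjoint D1 D2 := by
    rw [Set.disjoint_left]
    rintro z ⟨b, hbL, rfl⟩ ⟨⟨a, haK, hza⟩, hzne⟩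
    simp only at hza hzne
    apply hzne
    have ha : a ≤ x0 := le_csSup hKc.bddAbove haK
    have hb : y0 ≤ b := csInf_le hLc.bddBelow hbL
    have h1 : x0 + b ≤ x0 + y0 := by rw [← hza]; linarith
    have h2 : x0 + b = x0 + y0 := le_antisymm h1 (by linarith)
    simp [h2]
  have hsubT : D1 ∪ D2 ⊆ T := by
    rintro z (⟨b, hbL, rfl⟩ | ⟨⟨a, haK, rfl⟩, -⟩)
    · exact hsub x0 (hKA hx0K) b (hLB hbL)
    · exact hsub a (hKA haK) y0 (hLB hy0L)
  have hmeas1 : volume D1 = volume L := by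
    rw [hD1def, image_add_left, measure_preimage_add]
  have hmeas2 : volume D2 = volume ((fun a => a + y0) '' K) :=
    measure_diff_null (measure_singleton _)
  have hmeas2' : volume ((fun a => a + y0) '' K) = volume K := by
    have : (fun a => a + y0) '' K = (y0 + ·) '' K := by
      ext z; constructor <;> rintro ⟨a, haK, rfl⟩ <;> exact ⟨a, haK, by ring⟩
    rw [this, image_add_left, measure_preimage_add]
  have hunion : volume D1 + volume D2 ≤ volume T := by
    rw [← measure_union hdisj hD2m]
    exact measure_mono hsubT
  have hKL : volume K + volume L ≤ volume T := by
    rw [← hmeas1, ← hmeas2', ← hmeas2]; rw [add_comm]; exact hunion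
  have hδε : δ ≤ (ε : ℝ≥0∞)/2 := min_le_right _ _
  calc volume A + volume B ≤ (volume K + δ) + (volume L + δ) :=
        add_le_add hKm.le hLm.le
    _ = (volume K + volume L) + (δ + δ) := by ring
    _ ≤ volume T + ((ε : ℝ≥0∞)/2 + (ε : ℝ≥0∞)/2) := add_le_add hKL (add_le_add hδε hδε)
    _ = volume T + ε := by rw [ENNReal.add_halves]

lemma markov_fin (f : ℝ → ℝ) (hfi : Integrable f) {t : ℝ} (ht : 0 < t) :
    volume {x | t < f x} < ⊤ := by
  have hle : volume {y | t < f y} ≤ volume {y | ENNReal.ofReal t ≤ ENNReal.ofReal (f y)} :=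
    measure_mono (fun y hy => ENNReal.ofReal_le_ofReal (le_of_lt hy))
  have hmarkov := mul_meas_ge_le_lintegral₀ (μ := volume)
    (f := fun y => ENNReal.ofReal (f y)) (hfi.aemeasurable.ennreal_ofReal) (ENNReal.ofReal t)
  have hlt : ∫⁻ y, ENNReal.ofReal (f y) < ⊤ := hfi.lintegral_lt_top
  by_contra hc
  push_neg at hc
  have h2 : volume {y | ENNReal.ofReal t ≤ ENNReal.ofReal (f y)} = ⊤ :=
    top_le_iff.mp (le_trans hc hle)
  rw [h2, ENNReal.mul_top (by simp only [ne_eq, ENNReal.ofReal_eq_zero, not_le]; exact ht)]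
    at hmarkov
  exact absurd (top_le_iff.mp hmarkov) hlt.ne

lemma exists_level (g : ℝ → ℝ) (hg0 : ∀ x, 0 ≤ g x) (hgm : Measurable g)
    (hgi : Integrable g) (hgpos : 0 < ∫ x, g x) :
    ∃ t : ℝ, 0 < t ∧ 0 < volume {y | t < g y} ∧ volume {y | t < g y} < ⊤ := by
  have hfin : ∀ t : ℝ, 0 < t → volume {y | t < g y} < ⊤ := by
    intro t ht
    have hle : volume {y | t < g y} ≤ volume {y | ENNReal.ofReal t ≤ ENNReal.ofReal (g y)} := by
      apply measure_mono
      intro y hy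
      exact ENNReal.ofReal_le_ofReal (le_of_lt hy)
    have hmarkov := mul_meas_ge_le_lintegral (μ := volume)
      (f := fun y => ENNReal.ofReal (g y)) (hgm.ennreal_ofReal) (ENNReal.ofReal t)
    have hlt : ∫⁻ y, ENNReal.ofReal (g y) < ⊤ := hgi.lintegral_lt_top
    by_contra hc
    push_neg at hc
    have : volume {y | ENNReal.ofReal t ≤ ENNReal.ofReal (g y)} = ⊤ :=
      top_le_iff.mp (le_trans (top_le_iff.mpr (top_le_iff.mp (le_trans hc hle))) le_rfl)
    rw [this, ENNReal.mul_top (by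
      simp only [ne_eq, ENNReal.ofReal_eq_zero, not_le]
      exact ht)] at hmarkov
    exact absurd (top_le_iff.mp hmarkov) hlt.ne
  have hpos : ∃ t : ℝ, 0 < t ∧ 0 < volume {y | t < g y} := by
    by_contra hc
    push_neg at hc
    have hnull : ∀ n : ℕ, volume {y | 1/(n+1 : ℝ) < g y} = 0 := by
      intro n
      have h1 : (0:ℝ) < 1/(n+1 : ℝ) := by positivity
      have := hc _ h1
      exact le_antisymm this (zero_le)
    have hU : {y | 0 < g y} = ⋃ n : ℕ, {y | 1/(n+1 : ℝ) < g y} := by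
      ext y
      simp only [mem_setOf_eq, mem_iUnion]
      constructor
      · intro hy
        obtain ⟨n, hn⟩ := exists_nat_one_div_lt hy
        exact ⟨n, hn⟩
      · rintro ⟨n, hn⟩
        exact lt_trans (by positivity) hn
    have h0 : volume {y | 0 < g y} = 0 := by
      rw [hU]
      exact measure_iUnion_null hnull
    have hgz : g =ᵐ[volume] 0 := by
      rw [Filter.EventuallyEq, ae_iff]
      have : {y | ¬ g y = 0} ⊆ {y | 0 < g y} := by
        intro y hy
        exact lt_of_le_of_ne (hg0 y) (Ne.symm hy)
      exact measure_mono_null this h0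
    have : ∫ x, g x = 0 := by
      rw [integral_congr_ae hgz]
      simp
    rw [this] at hgpos
    exact lt_irrefl _ hgpos
  obtain ⟨t, ht, htpos⟩ := hpos
  exact ⟨t, ht, htpos, hfin t ht⟩

lemma bounded_aux (l : ℝ) (hl0 : 0 < l) (hl1 : l < 1) (f g h : ℝ → ℝ)
    (hf0 : ∀ x, 0 ≤ f x) (hg0 : ∀ x, 0 ≤ g x) (hh0 : ∀ x, 0 ≤ h x)
    (hgm : Measurable g) (hhm : Measurable h) (hhi : Integrable h)
    (hgi : Integrable g) (hgpos : 0 < ∫ x, g x)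
    (hcond : ∀ x y : ℝ, f x ^ (1 - l) * g y ^ l ≤ h ((1 - l) * x + l * y)) :
    ∃ C : ℝ, ∀ x, f x ≤ C := by
  obtain ⟨t, ht, hS0, hSfin⟩ := exists_level g hg0 hgm hgi hgpos
  set S := {y | t < g y} with hSdef
  have hSm : MeasurableSet S := measurableSet_lt measurable_const hgm
  set V : ℝ := (volume S).toReal with hVdef
  have hV0 : 0 < V := ENNReal.toReal_pos hS0.ne' hSfin.ne
  have hIh0 : 0 ≤ ∫ z, h z := integral_nonneg (fun z => hh0 z)
  have htl : 0 < t ^ l := Real.rpow_pos_of_pos ht l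
  set M : ℝ := (∫ z, h z) / (l * V) / t ^ l with hMdef
  have hM0 : 0 ≤ M := by positivity
  refine ⟨M ^ (1 - l)⁻¹, fun x => ?_⟩
  set a : ℝ := (1 - l) * x with hadef
  set m : ℝ := f x ^ (1 - l) * t ^ l with hmdef
  have hm0 : 0 ≤ m := by
    have := Real.rpow_nonneg (hf0 x) (1 - l)
    positivity
  set T : Set ℝ := (fun z => (z - a) / l) ⁻¹' S with hTdef
  have hTm : MeasurableSet T :=
    hSm.preimage ((measurable_id.sub_const a).div_const l)
  have hhT : ∀ z ∈ T, m ≤ h z := by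
    intro z hz
    have hy : t < g ((z - a) / l) := hz
    have hzz : (1 - l) * x + l * ((z - a) / l) = z := by
      field_simp
      rw [hadef]; ring
    have h1 := hcond x ((z - a) / l)
    rw [hzz] at h1
    refine le_trans ?_ h1
    apply mul_le_mul_of_nonneg_left _ (Real.rpow_nonneg (hf0 x) (1 - l))
    exact Real.rpow_le_rpow ht.le hy.le hl0.le
  have hTvol : volume T = ENNReal.ofReal l * volume S := by
    have hW : T = (fun z => -a + z) ⁻¹' ((l⁻¹ • ·) ⁻¹' S) := by
      ext z
      have hzz : l⁻¹ • (-a + z) = (z - a) / l := by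
        rw [smul_eq_mul, div_eq_inv_mul]
        ring
      simp only [hTdef, mem_preimage, hzz]
    rw [hW, measure_preimage_add,
      Measure.addHaar_preimage_smul volume (by positivity : (l)⁻¹ ≠ 0)]
    congr 1
    rw [Module.finrank_self]
    rw [pow_one, inv_inv, abs_of_pos hl0]
  have hkey : ENNReal.ofReal m * volume T ≤ ENNReal.ofReal (∫ z, h z) := by
    rw [ofReal_integral_eq_lintegral_ofReal hhi (Filter.Eventually.of_forall hh0)]
    calc ENNReal.ofReal m * volume T = ∫⁻ _ in T, ENNReal.ofReal m := (setLIntegral_const T _).symm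
      _ ≤ ∫⁻ z in T, ENNReal.ofReal (h z) := by
          apply setLIntegral_mono (Measurable.ennreal_ofReal hhm)
          intro z hz
          exact ENNReal.ofReal_le_ofReal (hhT z hz)
      _ ≤ ∫⁻ z, ENNReal.ofReal (h z) := setLIntegral_le_lintegral T _
  -- convert to real inequality
  have hreal : m * (l * V) ≤ ∫ z, h z := by
    rw [hTvol] at hkey
    have hvolS : volume S = ENNReal.ofReal V := (ENNReal.ofReal_toReal hSfin.ne).symm
    rw [hvolS, ← ENNReal.ofReal_mul hl0.le, ← ENNReal.ofReal_mul hm0] at hkey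
    exact (ENNReal.ofReal_le_ofReal_iff hIh0).mp hkey
  have h2 : f x ^ (1 - l) ≤ M := by
    rw [hMdef, div_div, le_div_iff₀ (by positivity : (0:ℝ) < l * V * t ^ l)]
    calc f x ^ (1 - l) * (l * V * t ^ l) = m * (l * V) := by rw [hmdef]; ring
      _ ≤ ∫ z, h z := hreal
  have h3 : (f x ^ (1 - l)) ^ (1 - l)⁻¹ ≤ M ^ (1 - l)⁻¹ :=
    Real.rpow_le_rpow (Real.rpow_nonneg (hf0 x) _) h2
      (by have h4 : (0:ℝ) < 1 - l := by linarith
          positivity)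
  rwa [Real.rpow_rpow_inv (hf0 x) (by linarith : (1:ℝ) - l ≠ 0)] at h3

lemma essSup_facts (f : ℝ → ℝ) (hf0 : ∀ x, 0 ≤ f x) (hfi : Integrable f)
    (hfpos : 0 < ∫ x, f x) (C : ℝ) (hC : ∀ x, f x ≤ C) :
    0 < essSup f volume ∧ (∀ᵐ x, f x ≤ essSup f volume) ∧
    ∀ t : ℝ, t < essSup f volume → 0 < volume {x | t < f x} := by
  haveI hne : (ae (volume : Measure ℝ)).NeBot := by
    rw [MeasureTheory.ae_neBot]
    intro h0
    have h1 := congrArg (fun μ : Measure ℝ => μ (Set.Ioo (0:ℝ) 1)) h0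
    simp [Real.volume_Ioo] at h1
  have hbdd : IsBoundedUnder (· ≤ ·) (ae volume) f := isBoundedUnder_of ⟨C, fun x => hC x⟩
  have hbdd' : IsBoundedUnder (· ≥ ·) (ae volume) f := isBoundedUnder_of ⟨0, fun x => hf0 x⟩
  have hcobdd : IsCoboundedUnder (· ≤ ·) (ae volume) f := hbdd'.isCoboundedUnder_le
  have haeF : ∀ᵐ x, f x ≤ essSup f volume := ae_le_essSup hbdd
  have hsub : ∀ t : ℝ, volume {x | t < f x} = 0 → essSup f volume ≤ t := by
    intro t h0
    have hae : ∀ᵐ x, f x ≤ t := by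
      rw [ae_iff]
      simpa [not_le] using h0
    exact limsup_le_of_le hcobdd hae
  have hpos : 0 < essSup f volume := by
    by_contra hc
    push_neg at hc
    have hae0 : f =ᵐ[volume] 0 := by
      filter_upwards [haeF] with x hx
      exact le_antisymm (le_trans hx hc) (hf0 x)
    have : ∫ x, f x = 0 := by rw [integral_congr_ae hae0]; simp
    rw [this] at hfpos
    exact lt_irrefl _ hfpos
  refine ⟨hpos, haeF, fun t ht => ?_⟩
  rcases eq_or_lt_of_le ((zero_le) : 0 ≤ volume {x | t < f x}) with heq | hlt
  · exact absurd (hsub t heq.symm) (not_le.mpr ht)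
  · exact hlt

lemma core (l : ℝ) (hl0 : 0 < l) (hl1 : l < 1) (f g h : ℝ → ℝ)
    (hf0 : ∀ x, 0 ≤ f x) (hg0 : ∀ x, 0 ≤ g x) (hh0 : ∀ x, 0 ≤ h x)
    (hfm : Measurable f) (hgm : Measurable g) (hhm : Measurable h)
    (hfi : Integrable f) (hgi : Integrable g) (hhi : Integrable h)
    (F G : ℝ) (hF0 : 0 < F) (hG0 : 0 < G)
    (hFae : ∀ᵐ x, f x ≤ F) (hGae : ∀ᵐ y, g y ≤ G)
    (hFlev : ∀ t : ℝ, t < F → 0 < volume {x | t < f x})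
    (hGlev : ∀ t : ℝ, t < G → 0 < volume {y | t < g y})
    (hcond : ∀ x y : ℝ, f x ^ (1 - l) * g y ^ l ≤ h ((1 - l) * x + l * y)) :
    F ^ (1 - l) * G ^ l * ((1 - l) * (∫ x, f x) / F + l * (∫ x, g x) / G)
      ≤ ∫ x, h x := by
  have hl1' : (0:ℝ) < 1 - l := by linarith
  set c : ℝ := F ^ (1 - l) * G ^ l with hcdef
  have hc0 : 0 < c := mul_pos (Real.rpow_pos_of_pos hF0 _) (Real.rpow_pos_of_pos hG0 _)
  set KF : ℝ := c / F with hKFdef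
  set KG : ℝ := c / G with hKGdef
  have hKF0 : 0 < KF := div_pos hc0 hF0
  have hKG0 : 0 < KG := div_pos hc0 hG0
  have hFnull : volume {x | F < f x} = 0 := by
    have h1 := ae_iff.mp hFae
    simpa only [not_le] using h1
  have hGnull : volume {y | G < g y} = 0 := by
    have h1 := ae_iff.mp hGae
    simpa only [not_le] using h1
  have hsetF : ∀ s : ℝ, {x | s < KF * f x} = {x | s * F / c < f x} := by
    intro s
    ext x
    rw [mem_setOf_eq, mem_setOf_eq, hKFdef, div_mul_eq_mul_div, lt_div_iff₀ hF0,
      div_lt_iff₀ hc0, mul_comm (f x) c]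
  have hsetG : ∀ s : ℝ, {y | s < KG * g y} = {y | s * G / c < g y} := by
    intro s
    ext y
    rw [mem_setOf_eq, mem_setOf_eq, hKGdef, div_mul_eq_mul_div, lt_div_iff₀ hG0,
      div_lt_iff₀ hc0, mul_comm (g y) c]
  -- pointwise-in-s inequality
  have key : ∀ s ∈ Ioi (0:ℝ),
      ENNReal.ofReal (1 - l) * volume {x | s < KF * f x}
        + ENNReal.ofReal l * volume {y | s < KG * g y} ≤ volume {z | s < h z} := by
    intro s hs
    rw [mem_Ioi] at hs
    rw [hsetF, hsetG]
    by_cases hsc : s < c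
    · -- Brunn-Minkowski step
      set tF : ℝ := s * F / c with htFdef
      set tG : ℝ := s * G / c with htGdef
      have htF0 : 0 < tF := by positivity
      have htG0 : 0 < tG := by positivity
      have htFF : tF < F := by
        rw [htFdef, div_lt_iff₀ hc0]
        nlinarith
      have htGG : tG < G := by
        rw [htGdef, div_lt_iff₀ hc0]
        nlinarith
      set A : Set ℝ := {x | tF < f x} with hAdef
      set B : Set ℝ := {y | tG < g y} with hBdef
      have hAm : MeasurableSet A := measurableSet_lt measurable_const hfm
      have hBm : MeasurableSet B := measurableSet_lt measurable_const hgm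
      have hA0 : 0 < volume A := hFlev tF htFF
      have hB0 : 0 < volume B := hGlev tG htGG
      have hAfin : volume A < ⊤ := markov_fin f hfi htF0
      have hBfin : volume B < ⊤ := markov_fin g hgi htG0
      set A' : Set ℝ := (((1-l)⁻¹) • ·) ⁻¹' A with hA'def
      set B' : Set ℝ := ((l⁻¹) • ·) ⁻¹' B with hB'def
      have hA'm : MeasurableSet A' := hAm.preimage (measurable_const_smul _)
      have hB'm : MeasurableSet B' := hBm.preimage (measurable_const_smul _)
      have hA'vol : volume A' = ENNReal.ofReal (1 - l) * volume A := by
        rw [hA'def, Measure.addHaar_preimage_smul volume (inv_ne_zero hl1'.ne') A]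
        congr 2
        rw [Module.finrank_self, pow_one, inv_inv, abs_of_pos hl1']
      have hB'vol : volume B' = ENNReal.ofReal l * volume B := by
        rw [hB'def, Measure.addHaar_preimage_smul volume (inv_ne_zero hl0.ne') B]
        congr 2
        rw [Module.finrank_self, pow_one, inv_inv, abs_of_pos hl0]
      have hTm : MeasurableSet {z | s < h z} := measurableSet_lt measurable_const hhm
      have hmem : ∀ a ∈ A', ∀ b ∈ B', a + b ∈ {z | s < h z} := by
        intro a ha b hb
        rw [hA'def, mem_preimage, smul_eq_mul] at ha
        rw [hB'def, mem_preimage, smul_eq_mul] at hb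
        set x : ℝ := (1-l)⁻¹ * a with hxdef
        set y : ℝ := l⁻¹ * b with hydef
        have hxA : tF < f x := ha
        have hyB : tG < g y := hb
        have hab : (1 - l) * x + l * y = a + b := by
          rw [hxdef, hydef]
          field_simp
        have he1 : tF ^ (1 - l) * tG ^ l = s := by
          have e2 : tF = (s / c) * F := by rw [htFdef]; ring
          have e3 : tG = (s / c) * G := by rw [htGdef]; ring
          have hsc0 : 0 < s / c := by positivity
          rw [e2, e3, Real.mul_rpow hsc0.le hF0.le, Real.mul_rpow hsc0.le hG0.le]
          calc (s/c) ^ (1-l) * F ^ (1-l) * ((s/c) ^ l * G ^ l)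
              = ((s/c) ^ (1-l) * (s/c) ^ l) * (F ^ (1-l) * G ^ l) := by ring
            _ = (s/c) ^ ((1-l) + l) * c := by
                rw [← Real.rpow_add hsc0, hcdef]
            _ = s := by
                rw [show (1:ℝ) - l + l = 1 by ring, Real.rpow_one, div_mul_cancel₀ _ hc0.ne']
        have hlt2 : s < f x ^ (1 - l) * g y ^ l := by
          rw [← he1]
          exact mul_lt_mul'' (Real.rpow_lt_rpow htF0.le hxA hl1')
            (Real.rpow_lt_rpow htG0.le hyB hl0)
            (Real.rpow_nonneg htF0.le _) (Real.rpow_nonneg htG0.le _)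
        have := hcond x y
        rw [hab] at this
        exact lt_of_lt_of_le hlt2 this
      calc ENNReal.ofReal (1 - l) * volume A + ENNReal.ofReal l * volume B
          = volume A' + volume B' := by rw [hA'vol, hB'vol]
        _ ≤ volume {z | s < h z} := by
            apply one_dim_bm hA'm hB'm hTm ?_ ?_ ?_ ?_ hmem
            · rw [hA'vol]
              exact ENNReal.mul_pos
                (by simp only [ne_eq, ENNReal.ofReal_eq_zero, not_le]; linarith) hA0.ne'
            · rw [hB'vol]
              exact ENNReal.mul_pos
                (by simp only [ne_eq, ENNReal.ofReal_eq_zero, not_le]; linarith) hB0.ne'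
            · rw [hA'vol]
              exact ENNReal.mul_ne_top ENNReal.ofReal_ne_top hAfin.ne
            · rw [hB'vol]
              exact ENNReal.mul_ne_top ENNReal.ofReal_ne_top hBfin.ne
    · -- trivial case
      push_neg at hsc
      have hnullF : volume {x | s * F / c < f x} = 0 := by
        apply measure_mono_null (fun x hx => ?_) hFnull
        rw [mem_setOf_eq] at hx ⊢
        refine lt_of_le_of_lt ?_ hx
        rw [le_div_iff₀ hc0]
        nlinarith
      have hnullG : volume {y | s * G / c < g y} = 0 := by
        apply measure_mono_null (fun y hy => ?_) hGnull
        rw [mem_setOf_eq] at hy ⊢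
        refine lt_of_le_of_lt ?_ hy
        rw [le_div_iff₀ hc0]
        nlinarith
      rw [hnullF, hnullG]
      simp
  -- integrate the key inequality over s ∈ Ioi 0
  have hmeasF : Measurable fun s : ℝ => volume {x | s < KF * f x} :=
    Antitone.measurable (fun s s' hss' => measure_mono (fun x hx => lt_of_le_of_lt hss' hx))
  have hmeasG : Measurable fun s : ℝ => volume {y | s < KG * g y} :=
    Antitone.measurable (fun s s' hss' => measure_mono (fun y hy => lt_of_le_of_lt hss' hy))
  have hintineq : ∫⁻ s in Ioi (0:ℝ),
      (ENNReal.ofReal (1 - l) * volume {x | s < KF * f x}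
        + ENNReal.ofReal l * volume {y | s < KG * g y})
      ≤ ∫⁻ s in Ioi (0:ℝ), volume {z | s < h z} :=
    setLIntegral_mono' measurableSet_Ioi key
  have hsplit : ∫⁻ s in Ioi (0:ℝ),
      (ENNReal.ofReal (1 - l) * volume {x | s < KF * f x}
        + ENNReal.ofReal l * volume {y | s < KG * g y})
      = ENNReal.ofReal (1 - l) * (∫⁻ s in Ioi (0:ℝ), volume {x | s < KF * f x})
        + ENNReal.ofReal l * (∫⁻ s in Ioi (0:ℝ), volume {y | s < KG * g y}) := by
    rw [lintegral_add_left (hmeasF.const_mul _)]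
    rw [lintegral_const_mul _ hmeasF, lintegral_const_mul _ hmeasG]
  have lcF : ∫⁻ s in Ioi (0:ℝ), volume {x | s < KF * f x}
      = ENNReal.ofReal (KF * ∫ x, f x) := by
    have h1 := lintegral_eq_lintegral_meas_lt volume (f := fun x => KF * f x)
      (Eventually.of_forall (fun x => by have := hf0 x; positivity))
      ((hfm.const_mul KF).aemeasurable)
    rw [← h1]
    have h2 : ∀ x, ENNReal.ofReal (KF * f x) = ENNReal.ofReal KF * ENNReal.ofReal (f x) :=
      fun x => ENNReal.ofReal_mul hKF0.le
    simp_rw [h2]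
    rw [lintegral_const_mul _ hfm.ennreal_ofReal,
      ← ofReal_integral_eq_lintegral_ofReal hfi (Eventually.of_forall hf0),
      ← ENNReal.ofReal_mul hKF0.le]
  have lcG : ∫⁻ s in Ioi (0:ℝ), volume {y | s < KG * g y}
      = ENNReal.ofReal (KG * ∫ y, g y) := by
    have h1 := lintegral_eq_lintegral_meas_lt volume (f := fun y => KG * g y)
      (Eventually.of_forall (fun y => by have := hg0 y; positivity))
      ((hgm.const_mul KG).aemeasurable)
    rw [← h1]
    have h2 : ∀ y, ENNReal.ofReal (KG * g y) = ENNReal.ofReal KG * ENNReal.ofReal (g y) :=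
      fun y => ENNReal.ofReal_mul hKG0.le
    simp_rw [h2]
    rw [lintegral_const_mul _ hgm.ennreal_ofReal,
      ← ofReal_integral_eq_lintegral_ofReal hgi (Eventually.of_forall hg0),
      ← ENNReal.ofReal_mul hKG0.le]
  have lcH : ∫⁻ s in Ioi (0:ℝ), volume {z | s < h z} = ENNReal.ofReal (∫ z, h z) := by
    have h1 := lintegral_eq_lintegral_meas_lt volume (f := h)
      (Eventually.of_forall hh0) hhm.aemeasurable
    rw [← h1, ← ofReal_integral_eq_lintegral_ofReal hhi (Eventually.of_forall hh0)]
  rw [hsplit] at hintineq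
  beta_reduce at hintineq
  rw [lcF, lcG, lcH] at hintineq
  have hIf0 : 0 ≤ ∫ x, f x := integral_nonneg hf0
  have hIg0 : 0 ≤ ∫ y, g y := integral_nonneg hg0
  have hIh0 : 0 ≤ ∫ z, h z := integral_nonneg hh0
  rw [← ENNReal.ofReal_mul hl1'.le, ← ENNReal.ofReal_mul hl0.le,
    ← ENNReal.ofReal_add (by positivity) (by positivity)] at hintineq
  have hreal := (ENNReal.ofReal_le_ofReal_iff hIh0).mp hintineq
  calc c * ((1 - l) * (∫ x, f x) / F + l * (∫ x, g x) / G)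
      = (1 - l) * (KF * ∫ x, f x) + l * (KG * ∫ y, g y) := by
        rw [hKFdef, hKGdef]; ring
    _ ≤ ∫ z, h z := hreal

lemma ratio_id (l F G If Ig : ℝ) (hF : 0 < F) (hG : 0 < G) (hIf : 0 < If) (hIg : 0 < Ig) :
    F ^ (1-l) * G ^ l * (If / F)
      = (F / G * (Ig / If)) ^ (-l) * (If ^ (1-l) * Ig ^ l) := by
  have hρ : 0 < F / G * (Ig / If) := by positivity
  have hL0 : 0 < F ^ (1-l) * G ^ l * (If / F) := by positivity
  have hR0 : 0 < (F / G * (Ig / If)) ^ (-l) * (If ^ (1-l) * Ig ^ l) := by positivity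
  have L1 : Real.log (F ^ (1-l) * G ^ l * (If / F))
      = (1-l) * Real.log F + l * Real.log G + (Real.log If - Real.log F) := by
    rw [Real.log_mul (by positivity) (by positivity),
      Real.log_mul (by positivity) (by positivity),
      Real.log_div hIf.ne' hF.ne', Real.log_rpow hF, Real.log_rpow hG]
  have R1 : Real.log ((F / G * (Ig / If)) ^ (-l) * (If ^ (1-l) * Ig ^ l))
      = -l * ((Real.log F - Real.log G) + (Real.log Ig - Real.log If))
        + ((1-l) * Real.log If + l * Real.log Ig) := by
    rw [Real.log_mul (by positivity) (by positivity),
      Real.log_rpow hρ,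
      Real.log_mul (by positivity) (by positivity),
      Real.log_div hF.ne' hG.ne', Real.log_div hIg.ne' hIf.ne',
      Real.log_mul (by positivity) (by positivity),
      Real.log_rpow hIf, Real.log_rpow hIg]
  have heq : Real.log (F ^ (1-l) * G ^ l * (If / F))
      = Real.log ((F / G * (Ig / If)) ^ (-l) * (If ^ (1-l) * Ig ^ l)) := by
    rw [L1, R1]; ring
  calc F ^ (1-l) * G ^ l * (If / F)
      = Real.exp (Real.log (F ^ (1-l) * G ^ l * (If / F))) := (Real.exp_log hL0).symm
    _ = Real.exp (Real.log ((F / G * (Ig / If)) ^ (-l) * (If ^ (1-l) * Ig ^ l))) := by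
        rw [heq]
    _ = _ := Real.exp_log hR0

lemma ratio_id2 (l F G If Ig : ℝ) (hF : 0 < F) (hG : 0 < G) (hIf : 0 < If) (hIg : 0 < Ig) :
    F ^ (1-l) * G ^ l * (Ig / G)
      = (F / G * (Ig / If)) ^ (1-l) * (If ^ (1-l) * Ig ^ l) := by
  have hρ : 0 < F / G * (Ig / If) := by positivity
  have hL0 : 0 < F ^ (1-l) * G ^ l * (Ig / G) := by positivity
  have hR0 : 0 < (F / G * (Ig / If)) ^ (1-l) * (If ^ (1-l) * Ig ^ l) := by positivity
  have L1 : Real.log (F ^ (1-l) * G ^ l * (Ig / G))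
      = (1-l) * Real.log F + l * Real.log G + (Real.log Ig - Real.log G) := by
    rw [Real.log_mul (by positivity) (by positivity),
      Real.log_mul (by positivity) (by positivity),
      Real.log_div hIg.ne' hG.ne', Real.log_rpow hF, Real.log_rpow hG]
  have R1 : Real.log ((F / G * (Ig / If)) ^ (1-l) * (If ^ (1-l) * Ig ^ l))
      = (1-l) * ((Real.log F - Real.log G) + (Real.log Ig - Real.log If))
        + ((1-l) * Real.log If + l * Real.log Ig) := by
    rw [Real.log_mul (by positivity) (by positivity),
      Real.log_rpow hρ,
      Real.log_mul (by positivity) (by positivity),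
      Real.log_div hF.ne' hG.ne', Real.log_div hIg.ne' hIf.ne',
      Real.log_mul (by positivity) (by positivity),
      Real.log_rpow hIf, Real.log_rpow hIg]
  have heq : Real.log (F ^ (1-l) * G ^ l * (Ig / G))
      = Real.log ((F / G * (Ig / If)) ^ (1-l) * (If ^ (1-l) * Ig ^ l)) := by
    rw [L1, R1]; ring
  calc F ^ (1-l) * G ^ l * (Ig / G)
      = Real.exp (Real.log (F ^ (1-l) * G ^ l * (Ig / G))) := (Real.exp_log hL0).symm
    _ = Real.exp (Real.log ((F / G * (Ig / If)) ^ (1-l) * (If ^ (1-l) * Ig ^ l))) := by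
        rw [heq]
    _ = _ := Real.exp_log hR0

lemma scalar_stab (τ l ε ρ : ℝ) (hτ0 : 0 < τ) (hτ2 : τ ≤ 1/2) (hlτ : τ ≤ l)
    (hl1 : l ≤ 1 - τ) (hε : 0 < ε) (hε' : ε < τ^3 / 64) (hρ : 0 < ρ)
    (hineq : (1 - l) * ρ ^ (-l) + l * ρ ^ (1 - l) ≤ 1 + ε) :
    |ρ - 1| ≤ 4 * τ ^ (-(3:ℝ)/2) * ε ^ ((1:ℝ)/2) := by
  have hl0 : 0 < l := lt_of_lt_of_le hτ0 hlτ
  have hl1' : l < 1 := by linarith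
  set a : ℝ := ρ ^ (-(l/2)) with hadef
  set b : ℝ := ρ ^ ((1-l)/2) with hbdef
  set C : ℝ := ρ ^ ((1-2*l)/2) with hCdef
  set r : ℝ := ρ ^ ((1:ℝ)/2) with hrdef
  have ha0 : 0 < a := Real.rpow_pos_of_pos hρ _
  have hb0 : 0 < b := Real.rpow_pos_of_pos hρ _
  have hr0 : 0 < r := Real.rpow_pos_of_pos hρ _
  have hA0 : (0:ℝ) ≤ ρ ^ (-l) := (Real.rpow_pos_of_pos hρ _).le
  have hB0 : (0:ℝ) ≤ ρ ^ (1-l) := (Real.rpow_pos_of_pos hρ _).le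
  have hC0 : (0:ℝ) ≤ C := (Real.rpow_pos_of_pos hρ _).le
  -- three-term AM-GM
  have hamgm := Real.geom_mean_le_arith_mean3_weighted
    (w₁ := 1 - l - τ) (w₂ := l - τ) (w₃ := 2*τ)
    (p₁ := ρ ^ (-l)) (p₂ := ρ ^ (1-l)) (p₃ := C)
    (by linarith) (by linarith) (by linarith) hA0 hB0 hC0 (by ring)
  have hgm : (ρ ^ (-l)) ^ (1-l-τ) * (ρ ^ (1-l)) ^ (l-τ) * C ^ (2*τ) = 1 := by
    rw [hCdef, ← Real.rpow_mul hρ.le, ← Real.rpow_mul hρ.le, ← Real.rpow_mul hρ.le,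
      ← Real.rpow_add hρ, ← Real.rpow_add hρ,
      show -l*(1-l-τ) + (1-l)*(l-τ) + (1-2*l)/2*(2*τ) = 0 by ring, Real.rpow_zero]
  rw [hgm] at hamgm
  -- identities a*a = ρ^(-l), b*b = ρ^(1-l), a*b = C
  have haa : a * a = ρ ^ (-l) := by
    rw [hadef, ← Real.rpow_add hρ, show -(l/2) + -(l/2) = -l by ring]
  have hbb : b * b = ρ ^ (1-l) := by
    rw [hbdef, ← Real.rpow_add hρ, show (1-l)/2 + (1-l)/2 = 1-l by ring]
  have hab : a * b = C := by
    rw [hadef, hbdef, hCdef, ← Real.rpow_add hρ, show -(l/2) + (1-l)/2 = (1-2*l)/2 by ring]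
  have hsq : τ * (a - b)^2 ≤ ε := by
    have hexp : τ * (a - b)^2 = τ * (ρ^(-l)) + τ * (ρ^(1-l)) - 2*τ*C := by
      rw [← haa, ← hbb, ← hab]; ring
    linarith
  have hq2 : (a - b)^2 ≤ ε/τ := by
    rw [le_div_iff₀ hτ0]
    linarith
  set q : ℝ := Real.sqrt (ε/τ) with hqdef
  have hq0 : 0 ≤ q := Real.sqrt_nonneg _
  have habs : |a - b| ≤ q := by
    rw [← Real.sqrt_sq_eq_abs]
    exact Real.sqrt_le_sqrt hq2
  obtain ⟨habs2', habs1⟩ := abs_le.mp habs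
  have habs2 : b - a ≤ q := by linarith
  have hqτ : q ≤ τ/8 := by
    have h1 : ε/τ ≤ (τ/8)^2 := by
      rw [div_le_iff₀ hτ0]
      nlinarith
    calc q ≤ Real.sqrt ((τ/8)^2) := Real.sqrt_le_sqrt h1
      _ = τ/8 := Real.sqrt_sq (by positivity)
  have hq16 : q ≤ 1/16 := by linarith
  have hbar : b = a * r := by
    rw [hadef, hrdef, ← Real.rpow_add hρ, hbdef, show -(l/2) + 1/2 = (1-l)/2 by ring]
  have hρr : ρ = r * r := by
    rw [hrdef, ← Real.rpow_add hρ, show (1:ℝ)/2 + 1/2 = 1 by norm_num, Real.rpow_one]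
  -- main bound: |ρ - 1| ≤ (5/2) * q
  have hmain : |ρ - 1| ≤ (5/2) * q := by
    by_cases hρ1 : 1 ≤ ρ
    · have hb1 : 1 ≤ b := Real.one_le_rpow hρ1 (by linarith)
      have hr1 : 1 ≤ r := Real.one_le_rpow hρ1 (by norm_num)
      have ha15 : 15/16 ≤ a := by linarith
      have h5 : a * (r - 1) = b - a := by rw [hbar]; ring
      have h6 : a * (r - 1) ≤ q := by rw [h5]; exact habs2
      have h7 : (15/16) * (r - 1) ≤ a * (r - 1) :=
        mul_le_mul_of_nonneg_right ha15 (by linarith)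
      have hrq : r - 1 ≤ (16/15) * q := by linarith
      have h8 : r + 1 ≤ 31/15 := by linarith
      have h9 : ρ - 1 = (r - 1) * (r + 1) := by rw [hρr]; ring
      have h10 : (r - 1) * (r + 1) ≤ ((16/15) * q) * (31/15) :=
        mul_le_mul hrq h8 (by linarith) (by positivity)
      rw [abs_of_nonneg (by linarith : (0:ℝ) ≤ ρ - 1)]
      linarith
    · push_neg at hρ1
      have hr1 : r ≤ 1 := Real.rpow_le_one hρ.le hρ1.le (by norm_num)
      have ha1 : 1 ≤ a := by
        rw [hadef]
        apply Real.one_le_rpow_of_pos_of_le_one_of_nonpos hρ hρ1.le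
        linarith
      have h5 : a * (1 - r) = a - b := by rw [hbar]; ring
      have h6 : a * (1 - r) ≤ q := by rw [h5]; exact habs1
      have h7 : 1 * (1 - r) ≤ a * (1 - r) :=
        mul_le_mul_of_nonneg_right ha1 (by linarith)
      have hrq : 1 - r ≤ q := by linarith
      have h9 : 1 - ρ = (1 - r) * (1 + r) := by rw [hρr]; ring
      have h10 : (1 - r) * (1 + r) ≤ q * 2 :=
        mul_le_mul hrq (by linarith) (by linarith) hq0
      rw [abs_of_nonpos (by linarith : ρ - 1 ≤ 0)]
      linarith
  -- compare (5/2) q with the target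
  refine le_trans hmain ?_
  set st : ℝ := Real.sqrt τ with hstdef
  set se : ℝ := Real.sqrt ε with hsedef
  have hst0 : 0 < st := Real.sqrt_pos.mpr hτ0
  have hse0 : 0 < se := Real.sqrt_pos.mpr hε
  have hq_eq : q * st = se := by
    rw [hqdef, hstdef, hsedef, ← Real.sqrt_mul (by positivity) τ,
      div_mul_cancel₀ _ hτ0.ne']
  have h1 : τ ^ ((3:ℝ)/2) = τ * st := by
    rw [show (3:ℝ)/2 = 1 + 1/2 by norm_num, Real.rpow_add hτ0, Real.rpow_one,
      hstdef, Real.sqrt_eq_rpow]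
  have h2 : τ ^ (-(3:ℝ)/2) = (τ * st)⁻¹ := by
    rw [show (-(3:ℝ)/2) = -((3:ℝ)/2) by ring, Real.rpow_neg hτ0.le, h1]
  have hε12 : ε ^ ((1:ℝ)/2) = se := by
    rw [hsedef, Real.sqrt_eq_rpow]
  have hgoal : (5/2) * q * (τ * st) ≤ 4 * se := by
    have e : (5/2) * q * (τ * st) = ((5/2) * τ) * se := by rw [← hq_eq]; ring
    have e2 : (5/2) * τ ≤ 5/4 := by linarith
    have e3 : ((5/2) * τ) * se ≤ (5/4) * se :=
      mul_le_mul_of_nonneg_right e2 hse0.le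
    rw [e]
    linarith
  calc (5/2) * q = (5/2) * q * ((τ * st) * (τ * st)⁻¹) := by
        rw [mul_inv_cancel₀ (by positivity : (τ * st) ≠ 0), mul_one]
    _ = (5/2) * q * (τ * st) * (τ * st)⁻¹ := by ring
    _ ≤ 4 * se * (τ * st)⁻¹ := by
        apply mul_le_mul_of_nonneg_right hgoal (by positivity)
    _ = 4 * τ ^ (-(3:ℝ)/2) * ε ^ ((1:ℝ)/2) := by
        rw [hε12, h2]
        ring


theorem control_sup (τ l ε : ℝ) (hτ : τ ∈ Set.Ioc (0:ℝ) (1/2))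
    (hl : l ∈ Set.Icc τ (1 - τ)) (f g h : ℝ → ℝ)
    (hf0 : ∀ x, 0 ≤ f x) (hg0 : ∀ x, 0 ≤ g x) (hh0 : ∀ x, 0 ≤ h x)
    (hfm : Measurable f) (hgm : Measurable g) (hhm : Measurable h)
    (hfi : Integrable f) (hgi : Integrable g) (hhi : Integrable h)
    (hfpos : 0 < ∫ x, f x) (hgpos : 0 < ∫ x, g x) (hhpos : 0 < ∫ x, h x)
    (hcond : ∀ x y : ℝ, f x ^ (1 - l) * g y ^ l ≤ h ((1 - l) * x + l * y))
    (hε : 0 < ε) (hε' : ε < 2 ^ (-(6:ℤ)) * τ ^ 3)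
    (hsmall : ∫ x, h x < (1 + ε) * ((∫ x, f x) ^ (1 - l) * (∫ x, g x) ^ l)) :
    |essSup f volume / essSup g volume * ((∫ x, g x) / (∫ x, f x)) - 1|
      ≤ 4 * τ ^ (-(3:ℝ)/2) * ε ^ ((1:ℝ)/2) := by
  obtain ⟨hτ0, hτ2⟩ := hτ
  obtain ⟨hlτ, hlτ'⟩ := hl
  have hl0 : 0 < l := lt_of_lt_of_le hτ0 hlτ
  have hl1 : l < 1 := by linarith
  have hl1' : 0 < 1 - l := by linarith
  obtain ⟨Cf, hCf⟩ := bounded_aux l hl0 hl1 f g h hf0 hg0 hh0 hgm hhm hhi hgi hgpos hcond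
  have hcond' : ∀ x y : ℝ, g x ^ (1 - (1 - l)) * f y ^ (1 - l)
      ≤ h ((1 - (1 - l)) * x + (1 - l) * y) := by
    intro x y
    have h1 := hcond y x
    rw [show (1:ℝ) - (1 - l) = l by ring]
    calc g x ^ l * f y ^ (1 - l) = f y ^ (1 - l) * g x ^ l := by ring
      _ ≤ h ((1 - l) * y + l * x) := h1
      _ = h (l * x + (1 - l) * y) := by rw [add_comm]
  obtain ⟨Cg, hCg⟩ := bounded_aux (1 - l) hl1' (by linarith) g f h hg0 hf0 hh0
    hfm hhm hhi hfi hfpos hcond'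
  obtain ⟨hF0, hFae, hFlev⟩ := essSup_facts f hf0 hfi hfpos Cf hCf
  obtain ⟨hG0, hGae, hGlev⟩ := essSup_facts g hg0 hgi hgpos Cg hCg
  set F : ℝ := essSup f volume with hFdef
  set G : ℝ := essSup g volume with hGdef
  have hcore := core l hl0 hl1 f g h hf0 hg0 hh0 hfm hgm hhm hfi hgi hhi
    F G hF0 hG0 hFae hGae hFlev hGlev hcond
  set If : ℝ := ∫ x, f x with hIfdef
  set Ig : ℝ := ∫ x, g x with hIgdef
  have e1 := ratio_id l F G If Ig hF0 hG0 hfpos hgpos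
  have e2 := ratio_id2 l F G If Ig hF0 hG0 hfpos hgpos
  have hρ0 : 0 < F / G * (Ig / If) := by positivity
  have hD0 : 0 < If ^ (1 - l) * Ig ^ l :=
    mul_pos (Real.rpow_pos_of_pos hfpos _) (Real.rpow_pos_of_pos hgpos _)
  have hsum : ((1 - l) * (F / G * (Ig / If)) ^ (-l) + l * (F / G * (Ig / If)) ^ (1 - l))
      * (If ^ (1 - l) * Ig ^ l) ≤ (1 + ε) * (If ^ (1 - l) * Ig ^ l) := by
    calc ((1 - l) * (F / G * (Ig / If)) ^ (-l) + l * (F / G * (Ig / If)) ^ (1 - l))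
        * (If ^ (1 - l) * Ig ^ l)
        = (1 - l) * ((F / G * (Ig / If)) ^ (-l) * (If ^ (1 - l) * Ig ^ l))
          + l * ((F / G * (Ig / If)) ^ (1 - l) * (If ^ (1 - l) * Ig ^ l)) := by ring
      _ = (1 - l) * (F ^ (1 - l) * G ^ l * (If / F))
          + l * (F ^ (1 - l) * G ^ l * (Ig / G)) := by rw [← e1, ← e2]
      _ = F ^ (1 - l) * G ^ l * ((1 - l) * If / F + l * Ig / G) := by ring
      _ ≤ ∫ x, h x := hcore
      _ ≤ (1 + ε) * (If ^ (1 - l) * Ig ^ l) := hsmall.le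
  have hineq : (1 - l) * (F / G * (Ig / If)) ^ (-l)
      + l * (F / G * (Ig / If)) ^ (1 - l) ≤ 1 + ε :=
    le_of_mul_le_mul_right hsum hD0
  have hε64 : ε < τ ^ 3 / 64 := by
    have h2 : (2:ℝ) ^ (-(6:ℤ)) = 1 / 64 := by norm_num
    rw [h2] at hε'
    linarith
  exact scalar_stab τ l ε (F / G * (Ig / If)) hτ0 hτ2 hlτ hlτ' hε hε64 hρ0 hineq
end

section
/- For every sufficiently small ε > 0 there exist log-concave probability densities f, g on ℝ such that ∫_ℝ sup_{z = x/2 + y/2} f(x)^(1/2) g(y)^(1/2) dz < 1 + ε, while ∫_ℝ |g(x) − f(x+w)| dx ≥ c ε^(1/2) for every w ∈ ℝ, where c ∈ (0,1) is an absolute constant. -/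
open MeasureTheory

open Set in
lemma indicator_logConcave {s : Set ℝ} (hs : Convex ℝ s) {a : ℝ} (ha : 0 ≤ a) :
    IsLogConcave (s.indicator fun _ => a) := by
  intro x y t ht
  obtain ⟨ht0, ht1⟩ := ht
  by_cases hx : x ∈ s
  · by_cases hy : y ∈ s
    · have hm : (1 - t) * x + t * y ∈ s := hs hx hy (by linarith) ht0.le (by ring)
      rw [indicator_of_mem hx, indicator_of_mem hy, indicator_of_mem hm]
      rcases eq_or_lt_of_le ha with h | h
      · rw [← h, Real.zero_rpow (by linarith : (1:ℝ) - t ≠ 0), zero_mul]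
      · rw [← Real.rpow_add h]
        have : (1 - t) + t = 1 := by ring
        rw [this, Real.rpow_one]
    · rw [indicator_of_notMem hy, Real.zero_rpow ht0.ne', mul_zero]
      exact indicator_nonneg (fun _ _ => ha) _
  · rw [indicator_of_notMem hx,
      Real.zero_rpow (by intro h; rw [sub_eq_zero] at h; linarith), zero_mul]
    exact indicator_nonneg (fun _ _ => ha) _

lemma integrable_ind {a b c : ℝ} :
    Integrable ((Set.Icc a b).indicator fun _ => c) := by
  rw [integrable_indicator_iff measurableSet_Icc]
  exact integrableOn_const (by simp [Real.volume_Icc])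

lemma integral_ind {a b c : ℝ} (hab : a ≤ b) :
    (∫ x, (Set.Icc a b).indicator (fun _ => c) x) = (b - a) * c := by
  rw [integral_indicator_const c measurableSet_Icc, measureReal_def, Real.volume_Icc,
    ENNReal.toReal_ofReal (by linarith)]
  simp [smul_eq_mul]

open Set in
lemma sup_conv {δ : ℝ} (hδ : 0 < δ) (z : ℝ) :
    (⨆ x : ℝ, (Set.Icc (0:ℝ) 1).indicator (fun _ => (1:ℝ)) x ^ ((1:ℝ)/2) *
      (Set.Icc (0:ℝ) (1+δ)).indicator (fun _ => (1+δ)⁻¹) (2 * z - x) ^ ((1:ℝ)/2)) =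
    (Set.Icc (0:ℝ) (1+δ/2)).indicator (fun _ => ((1+δ)⁻¹) ^ ((1:ℝ)/2)) z := by
  set f : ℝ → ℝ := (Set.Icc (0:ℝ) 1).indicator (fun _ => (1:ℝ)) with hf
  set g : ℝ → ℝ := (Set.Icc (0:ℝ) (1+δ)).indicator (fun _ => (1+δ)⁻¹) with hg
  have h1δ : (0:ℝ) < 1 + δ := by linarith
  set a' : ℝ := ((1+δ)⁻¹) ^ ((1:ℝ)/2) with ha'
  have hbound : ∀ x : ℝ, f x ^ ((1:ℝ)/2) * g (2 * z - x) ^ ((1:ℝ)/2) ≤ a' := by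
    intro x
    have h1 : f x ^ ((1:ℝ)/2) ≤ 1 := by
      have : f x ≤ 1 := indicator_le' (fun _ _ => le_refl 1) (fun _ _ => zero_le_one) x
      calc f x ^ ((1:ℝ)/2) ≤ 1 ^ ((1:ℝ)/2) :=
            Real.rpow_le_rpow (indicator_nonneg (fun _ _ => zero_le_one) x) this (by norm_num)
        _ = 1 := Real.one_rpow _
    have h2 : g (2*z-x) ^ ((1:ℝ)/2) ≤ a' := by
      apply Real.rpow_le_rpow (indicator_nonneg (fun _ _ => by positivity) _)
      · exact indicator_le' (fun _ _ => le_refl _) (fun _ _ => by positivity) _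
      · norm_num
    calc f x ^ ((1:ℝ)/2) * g (2*z-x) ^ ((1:ℝ)/2)
        ≤ 1 * a' := mul_le_mul h1 h2 (Real.rpow_nonneg (indicator_nonneg (fun _ _ => by positivity) _) _) zero_le_one
      _ = a' := one_mul _
  by_cases hz : z ∈ Set.Icc (0:ℝ) (1+δ/2)
  · rw [indicator_of_mem hz]
    obtain ⟨hz0, hz1⟩ := hz
    refine le_antisymm (ciSup_le hbound) ?_
    set x₀ : ℝ := min 1 (2*z) with hx0
    have hx₀mem : x₀ ∈ Set.Icc (0:ℝ) 1 := by
      constructor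
      · exact le_min (by norm_num) (by linarith)
      · exact min_le_left _ _
    have hymem : 2*z - x₀ ∈ Set.Icc (0:ℝ) (1+δ) := by
      rcases le_total (2*z) 1 with h | h
      · rw [hx0, min_eq_right h]; constructor <;> [linarith; linarith]
      · rw [hx0, min_eq_left h]; constructor <;> [linarith; linarith]
    have key : f x₀ ^ ((1:ℝ)/2) * g (2*z - x₀) ^ ((1:ℝ)/2) = a' := by
      rw [hf, hg, indicator_of_mem hx₀mem, indicator_of_mem hymem, Real.one_rpow, one_mul]
    calc a' = f x₀ ^ ((1:ℝ)/2) * g (2*z - x₀) ^ ((1:ℝ)/2) := key.symm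
      _ ≤ _ := le_ciSup ⟨a', forall_mem_range.2 hbound⟩ x₀
  · rw [indicator_of_notMem hz]
    have hzero : ∀ x : ℝ, f x ^ ((1:ℝ)/2) * g (2 * z - x) ^ ((1:ℝ)/2) = 0 := by
      intro x
      by_cases hx : x ∈ Set.Icc (0:ℝ) 1
      · by_cases hy : 2*z - x ∈ Set.Icc (0:ℝ) (1+δ)
        · exfalso
          apply hz
          obtain ⟨h1, h2⟩ := hx; obtain ⟨h3, h4⟩ := hy
          constructor <;> linarith
        · rw [hg, indicator_of_notMem hy, Real.zero_rpow (by norm_num), mul_zero]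
      · rw [hf, indicator_of_notMem hx, Real.zero_rpow (by norm_num), zero_mul]
    simp only [hzero, ciSup_const]

open Set in
theorem sharp_example_dim1 :
    ∃ c ∈ Set.Ioo (0:ℝ) 1, ∃ ε₀ > (0:ℝ), ∀ ε ∈ Set.Ioo (0:ℝ) ε₀,
      ∃ f g : ℝ → ℝ, Measurable f ∧ Measurable g ∧
        (∀ x, 0 ≤ f x) ∧ (∀ x, 0 ≤ g x) ∧
        IsLogConcave f ∧ IsLogConcave g ∧
        (∫ x, f x) = 1 ∧ (∫ x, g x) = 1 ∧
        (∫ z, ⨆ x : ℝ, f x ^ ((1:ℝ)/2) * g (2 * z - x) ^ ((1:ℝ)/2)) < 1 + ε ∧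
        ∀ w : ℝ, c * ε ^ ((1:ℝ)/2) ≤ ∫ x, |g x - f (x + w)| := by
  refine ⟨1/2, by norm_num, 1, by norm_num, ?_⟩
  rintro ε ⟨hε0, hε1⟩
  set δ : ℝ := ε ^ ((1:ℝ)/2) with hδdef
  have hδ0 : 0 < δ := Real.rpow_pos_of_pos hε0 _
  have hδ1 : δ < 1 := Real.rpow_lt_one hε0.le hε1 (by norm_num)
  have hδ2 : δ ^ 2 = ε := by
    rw [hδdef, ← Real.rpow_natCast (ε ^ ((1:ℝ)/2)) 2, ← Real.rpow_mul hε0.le]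
    norm_num
  have h1δ : (0:ℝ) < 1 + δ := by linarith
  refine ⟨(Set.Icc (0:ℝ) 1).indicator (fun _ => (1:ℝ)),
    (Set.Icc (0:ℝ) (1+δ)).indicator (fun _ => (1+δ)⁻¹),
    (measurable_const.indicator measurableSet_Icc),
    (measurable_const.indicator measurableSet_Icc),
    indicator_nonneg (fun _ _ => zero_le_one),
    indicator_nonneg (fun _ _ => by positivity),
    indicator_logConcave (convex_Icc _ _) zero_le_one,
    indicator_logConcave (convex_Icc _ _) (by positivity),
    ?_, ?_, ?_, ?_⟩
  · rw [integral_ind zero_le_one]; ring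
  · rw [integral_ind (by linarith)]
    field_simp
    ring
  · have hrw : (∫ z, ⨆ x : ℝ, (Set.Icc (0:ℝ) 1).indicator (fun _ => (1:ℝ)) x ^ ((1:ℝ)/2) *
        (Set.Icc (0:ℝ) (1+δ)).indicator (fun _ => (1+δ)⁻¹) (2 * z - x) ^ ((1:ℝ)/2)) =
        (1 + δ/2) * ((1+δ)⁻¹) ^ ((1:ℝ)/2) := by
      simp_rw [sup_conv hδ0]
      rw [integral_ind (by linarith)]; ring_nf
    rw [hrw]
    set s : ℝ := (1+δ) ^ ((1:ℝ)/2) with hs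
    have hspos : 0 < s := Real.rpow_pos_of_pos h1δ _
    have hs2 : s ^ 2 = 1 + δ := by
      rw [hs, ← Real.rpow_natCast ((1+δ) ^ ((1:ℝ)/2)) 2, ← Real.rpow_mul h1δ.le]
      norm_num
    have hinv : ((1+δ)⁻¹) ^ ((1:ℝ)/2) = s⁻¹ := by
      rw [Real.inv_rpow h1δ.le]
    rw [hinv, ← div_eq_mul_inv, div_lt_iff₀ hspos]
    have hsgt1 : 1 < s := by nlinarith
    nlinarith [sq_nonneg (s - 1 - δ/2 + δ^2), sq_nonneg (s-1), mul_pos hδ0 hδ0]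
  · intro w
    have hgle : ∀ x : ℝ, (Set.Icc (0:ℝ) (1+δ)).indicator (fun _ => (1+δ)⁻¹) x ≤ (1+δ)⁻¹ :=
      fun x => indicator_le' (fun _ _ => le_refl _) (fun _ _ => by positivity) x
    have hpt : ∀ x : ℝ, (Set.Icc (-w) (1-w)).indicator (fun _ => δ/(1+δ)) x ≤
        |(Set.Icc (0:ℝ) (1+δ)).indicator (fun _ => (1+δ)⁻¹) x -
          (Set.Icc (0:ℝ) 1).indicator (fun _ => (1:ℝ)) (x + w)| := by
      intro x
      by_cases hx : x ∈ Set.Icc (-w) (1-w)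
      · rw [indicator_of_mem hx]
        obtain ⟨h1, h2⟩ := hx
        have hxw : x + w ∈ Set.Icc (0:ℝ) 1 := ⟨by linarith, by linarith⟩
        rw [indicator_of_mem hxw]
        have h3 := hgle x
        have h4 : δ/(1+δ) = 1 - (1+δ)⁻¹ := by field_simp; ring
        calc δ/(1+δ) ≤ 1 - (Set.Icc (0:ℝ) (1+δ)).indicator (fun _ => (1+δ)⁻¹) x := by
              rw [h4]; linarith
          _ ≤ |(Set.Icc (0:ℝ) (1+δ)).indicator (fun _ => (1+δ)⁻¹) x - 1| := by
              rw [abs_sub_comm]; exact le_abs_self _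
      · rw [indicator_of_notMem hx]; exact abs_nonneg _
    have hint : Integrable (fun x => |(Set.Icc (0:ℝ) (1+δ)).indicator (fun _ => (1+δ)⁻¹) x -
        (Set.Icc (0:ℝ) 1).indicator (fun _ => (1:ℝ)) (x + w)|) :=
      (integrable_ind.sub (integrable_ind.comp_add_right w)).abs
    have hmono : (∫ x, (Set.Icc (-w) (1-w)).indicator (fun _ => δ/(1+δ)) x) ≤
        ∫ x, |(Set.Icc (0:ℝ) (1+δ)).indicator (fun _ => (1+δ)⁻¹) x -
          (Set.Icc (0:ℝ) 1).indicator (fun _ => (1:ℝ)) (x + w)| :=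
      integral_mono integrable_ind hint hpt
    rw [integral_ind (by linarith)] at hmono
    have heq : (1 - w - -w) * (δ/(1+δ)) = δ/(1+δ) := by ring_nf
    rw [heq] at hmono
    refine le_trans ?_ hmono
    rw [le_div_iff₀ h1δ]
    nlinarith
end

section
/- For every ε > 0 there exist measurable functions f, h : ℝ → ℝ≥0 with h(x/2 + y/2) ≥ f(x)^(1/2) f(y)^(1/2) for all x, y ∈ ℝ and ∫_ℝ h < (1+ε) ∫_ℝ f, but such that the log-concave hull F of f satisfies ∫_ℝ (F − f) ≥ (1/2) ∫_ℝ f. -/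
open MeasureTheory

noncomputable def fAux (a A : ℝ) : ℝ → ℝ := fun x =>
  Set.indicator (Set.Icc 0 1) (fun _ => (1:ℝ)) x
  + Set.indicator (Set.Icc (2*A) (2*A+1)) (fun _ => a) x

noncomputable def gAux (a A : ℝ) : ℝ → ℝ := fun z =>
  Set.indicator (Set.Icc 0 (2*A+1))
    (fun z => Real.exp (Real.log a * max (z-1) 0 / (2*A))) z

lemma fAux_nonneg (a A : ℝ) (ha : 0 ≤ a) (x : ℝ) : 0 ≤ fAux a A x := by
  unfold fAux
  have h1 : 0 ≤ Set.indicator (Set.Icc (0:ℝ) 1) (fun _ => (1:ℝ)) x :=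
    Set.indicator_nonneg (fun _ _ => zero_le_one) x
  have h2 : 0 ≤ Set.indicator (Set.Icc (2*A) (2*A+1)) (fun _ => a) x :=
    Set.indicator_nonneg (fun _ _ => ha) x
  linarith

lemma gAux_nonneg (a A : ℝ) (z : ℝ) : 0 ≤ gAux a A z :=
  Set.indicator_nonneg (fun _ _ => (Real.exp_pos _).le) z

lemma fAux_val_one (a A : ℝ) (hA : 1 ≤ A) {x : ℝ} (hx : x ∈ Set.Icc (0:ℝ) 1) :
    fAux a A x = 1 := by
  have hx2 : x ∉ Set.Icc (2*A) (2*A+1) := by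
    intro h
    have := h.1
    have := hx.2
    linarith
  unfold fAux
  rw [Set.indicator_of_mem hx, Set.indicator_of_notMem hx2]
  ring

lemma fAux_val_two (a A : ℝ) (hA : 1 ≤ A) {x : ℝ} (hx : x ∈ Set.Icc (2*A) (2*A+1)) :
    fAux a A x = a := by
  have hx2 : x ∉ Set.Icc (0:ℝ) 1 := by
    intro h
    have := h.2
    have := hx.1
    linarith
  unfold fAux
  rw [Set.indicator_of_mem hx, Set.indicator_of_notMem hx2]
  ring

lemma gAux_logconcave (a A : ℝ) (ha0 : 0 < a) (ha1 : a < 1) (hA : 0 < A) :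
    IsLogConcave (gAux a A) := by
  intro x y t ht
  obtain ⟨ht0, ht1⟩ := ht
  by_cases hx : x ∈ Set.Icc (0:ℝ) (2*A+1)
  · by_cases hy : y ∈ Set.Icc (0:ℝ) (2*A+1)
    · -- main case
      have hz : (1-t)*x + t*y ∈ Set.Icc (0:ℝ) (2*A+1) := by
        constructor
        · nlinarith [hx.1, hy.1]
        · nlinarith [hx.2, hy.2]
      unfold gAux
      rw [Set.indicator_of_mem hx, Set.indicator_of_mem hy, Set.indicator_of_mem hz]
      rw [← Real.exp_mul, ← Real.exp_mul, ← Real.exp_add, Real.exp_le_exp]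
      have hla : Real.log a < 0 := Real.log_neg ha0 ha1
      have hmax : max ((1-t)*x + t*y - 1) 0 ≤ (1-t) * max (x-1) 0 + t * max (y-1) 0 := by
        apply max_le
        · have h1 : (1-t)*(x-1) ≤ (1-t) * max (x-1) 0 :=
            mul_le_mul_of_nonneg_left (le_max_left _ _) (by linarith)
          have h2 : t*(y-1) ≤ t * max (y-1) 0 :=
            mul_le_mul_of_nonneg_left (le_max_left _ _) (by linarith)
          nlinarith
        · have := le_max_right (x-1) (0:ℝ)
          have := le_max_right (y-1) (0:ℝ)
          nlinarith
      have hkey : Real.log a * ((1-t) * max (x-1) 0 + t * max (y-1) 0) ≤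
          Real.log a * max ((1-t)*x + t*y - 1) 0 :=
        mul_le_mul_of_nonpos_left hmax hla.le
      have h2A : (0:ℝ) < 2*A := by linarith
      calc Real.log a * max (x - 1) 0 / (2 * A) * (1 - t) +
            Real.log a * max (y - 1) 0 / (2 * A) * t
          = Real.log a * ((1-t) * max (x-1) 0 + t * max (y-1) 0) / (2*A) := by ring
        _ ≤ Real.log a * max ((1-t)*x + t*y - 1) 0 / (2*A) :=
            (div_le_div_iff_of_pos_right h2A).mpr hkey
    · have hy0 : gAux a A y = 0 := Set.indicator_of_notMem hy _
      rw [hy0, Real.zero_rpow (by linarith), mul_zero]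
      exact gAux_nonneg a A _
  · have hx0 : gAux a A x = 0 := Set.indicator_of_notMem hx _
    rw [hx0, Real.zero_rpow (by linarith), zero_mul]
    exact gAux_nonneg a A _

lemma fAux_le_gAux (a A : ℝ) (ha0 : 0 < a) (ha1 : a < 1) (hA : 1 ≤ A) :
    ∀ x, fAux a A x ≤ gAux a A x := by
  intro x
  have hla : Real.log a < 0 := Real.log_neg ha0 ha1
  by_cases hx : x ∈ Set.Icc (0:ℝ) 1
  · have hx' : x ∈ Set.Icc (0:ℝ) (2*A+1) := ⟨hx.1, by linarith [hx.2]⟩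
    rw [fAux_val_one a A hA hx]
    unfold gAux
    rw [Set.indicator_of_mem hx']
    have : max (x-1) 0 = 0 := max_eq_right (by linarith [hx.2])
    rw [this]
    simp
  · by_cases hx2 : x ∈ Set.Icc (2*A) (2*A+1)
    · have hx' : x ∈ Set.Icc (0:ℝ) (2*A+1) := ⟨by linarith [hx2.1], hx2.2⟩
      rw [fAux_val_two a A hA hx2]
      unfold gAux
      rw [Set.indicator_of_mem hx']
      have hm : max (x-1) 0 = x - 1 := max_eq_left (by linarith [hx2.1])
      rw [hm]
      have h2A : (0:ℝ) < 2*A := by linarith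
      calc a = Real.exp (Real.log a) := (Real.exp_log ha0).symm
        _ ≤ Real.exp (Real.log a * (x-1) / (2*A)) := Real.exp_le_exp.mpr (by
            have hfrac : (x-1)/(2*A) ≤ 1 := by
              rw [div_le_one h2A]; linarith [hx2.2]
            have hkey := mul_le_mul_of_nonpos_left hfrac hla.le
            rw [mul_one] at hkey
            rw [mul_div_assoc]
            exact hkey)
    · have : fAux a A x = 0 := by
        unfold fAux
        rw [Set.indicator_of_notMem hx, Set.indicator_of_notMem hx2]
        ring
      rw [this]
      exact gAux_nonneg a A x

lemma gAux_le_majorant (a A : ℝ) (ha0 : 0 < a) (ha1 : a < 1) (hA : 1 ≤ A)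
    (G : ℝ → ℝ) (hG0 : ∀ x, 0 ≤ G x) (hGlc : IsLogConcave G)
    (hGf : ∀ x, fAux a A x ≤ G x) : ∀ z, gAux a A z ≤ G z := by
  intro z
  have hla : Real.log a < 0 := Real.log_neg ha0 ha1
  have h2A : (0:ℝ) < 2*A := by linarith
  by_cases hz : z ∈ Set.Icc (0:ℝ) (2*A+1)
  · unfold gAux
    rw [Set.indicator_of_mem hz]
    by_cases hz1 : z ≤ 1
    · have : max (z-1) 0 = 0 := max_eq_right (by linarith)
      rw [this]
      have hG1 : (1:ℝ) ≤ G z := by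
        have := hGf z
        rwa [fAux_val_one a A hA ⟨hz.1, hz1⟩] at this
      simpa using hG1
    · push_neg at hz1
      have hm : max (z-1) 0 = z - 1 := max_eq_left (by linarith)
      rw [hm]
      by_cases hz2 : z = 2*A+1
      · have hGa : a ≤ G z := by
          have := hGf z
          rwa [fAux_val_two a A hA ⟨by rw [hz2]; linarith, by rw [hz2]⟩] at this
        calc Real.exp (Real.log a * (z-1) / (2*A))
            = Real.exp (Real.log a) := by rw [hz2]; congr 1; field_simp; ring
          _ = a := Real.exp_log ha0
          _ ≤ G z := hGa
      · have hzlt : z < 2*A+1 := lt_of_le_of_ne hz.2 hz2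
        set t : ℝ := (z-1)/(2*A) with htdef
        have ht0 : 0 < t := div_pos (by linarith) h2A
        have ht1 : t < 1 := by
          rw [htdef, div_lt_one h2A]; linarith
        have hG1 : (1:ℝ) ≤ G 1 := by
          have := hGf 1
          rwa [fAux_val_one a A hA ⟨by norm_num, le_refl 1⟩] at this
        have hGa : a ≤ G (2*A+1) := by
          have := hGf (2*A+1)
          rwa [fAux_val_two a A hA ⟨by linarith, le_refl _⟩] at this
        have hlc := hGlc 1 (2*A+1) t ⟨ht0, ht1⟩
        have hzeq : (1-t)*1 + t*(2*A+1) = z := by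
          rw [htdef]; field_simp; ring
        rw [hzeq] at hlc
        have hstep : a ^ t ≤ G 1 ^ (1-t) * G (2*A+1) ^ t := by
          have h1 : (1:ℝ) ≤ G 1 ^ (1-t) := by
            calc (1:ℝ) = 1 ^ (1-t) := (Real.one_rpow _).symm
              _ ≤ G 1 ^ (1-t) := Real.rpow_le_rpow zero_le_one hG1 (by linarith)
          have h2 : a ^ t ≤ G (2*A+1) ^ t := Real.rpow_le_rpow ha0.le hGa ht0.le
          calc a ^ t = 1 * a ^ t := (one_mul _).symm
            _ ≤ G 1 ^ (1-t) * G (2*A+1) ^ t := by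
                apply mul_le_mul h1 h2 (Real.rpow_nonneg ha0.le _)
                positivity
        calc Real.exp (Real.log a * (z-1) / (2*A))
            = Real.exp (Real.log a * t) := by rw [htdef]; ring_nf
          _ = a ^ t := (Real.rpow_def_of_pos ha0 t).symm
          _ ≤ G 1 ^ (1-t) * G (2*A+1) ^ t := hstep
          _ ≤ G z := hlc
  · unfold gAux
    rw [Set.indicator_of_notMem hz]
    exact hG0 z

theorem no_log_concave_hull (ε : ℝ) (hε : 0 < ε) :
    ∃ f h : ℝ → ℝ, Measurable f ∧ Measurable h ∧
      (∀ x, 0 ≤ f x) ∧ (∀ x, 0 ≤ h x) ∧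
      (∀ x y : ℝ, f x ^ ((1:ℝ)/2) * f y ^ ((1:ℝ)/2) ≤ h (x/2 + y/2)) ∧
      (∫ x, h x) < (1 + ε) * ∫ x, f x ∧
      ∀ F : ℝ → ℝ, (∀ x, 0 ≤ F x) → IsLogConcave F → (∀ x, f x ≤ F x) →
        (∀ G : ℝ → ℝ, (∀ x, 0 ≤ G x) → IsLogConcave G → (∀ x, f x ≤ G x) →
          ∀ x, F x ≤ G x) →
        (1/2) * ∫ x, f x ≤ ∫ x, (F x - f x) := by
  set b : ℝ := min ε 1 / 2 with hbdef
  have hb0 : 0 < b := by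
    have : 0 < min ε 1 := lt_min hε one_pos
    rw [hbdef]; linarith
  have hb2 : b ≤ 1/2 := by
    have := min_le_right ε 1
    rw [hbdef]; linarith
  have hbε : b ≤ ε/2 := by
    have := min_le_left ε 1
    rw [hbdef]; linarith
  set a : ℝ := b^2 with hadef
  have ha0 : 0 < a := by positivity
  have ha1 : a < 1 := by nlinarith
  set A : ℝ := 2 + 1/b with hAdef
  have hinvb : 2 ≤ 1/b := by
    rw [le_div_iff₀ hb0]; linarith
  have hA1 : 1 ≤ A := by rw [hAdef]; linarith
  have hA4 : 4 ≤ A := by rw [hAdef]; linarith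
  have hA0 : 0 < A := by linarith
  clear_value A a b
  set f : ℝ → ℝ := fAux a A with hfdef
  set h : ℝ → ℝ := fun x =>
    fAux a A x + Set.indicator (Set.Icc A (A+1)) (fun _ => b) x with hhdef
  -- integrability of the pieces
  have hmIcc : ∀ p q : ℝ, MeasurableSet (Set.Icc p q) := fun p q => measurableSet_Icc
  have hintc : ∀ (p q c : ℝ),
      Integrable (Set.indicator (Set.Icc p q) (fun _ => c)) := by
    intro p q c
    exact (integrableOn_const measure_Icc_lt_top.ne).integrable_indicator
      (hmIcc p q)
  have hfint : Integrable f := by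
    rw [hfdef]; unfold fAux
    exact (hintc 0 1 1).add (hintc (2*A) (2*A+1) a)
  have hIc : ∀ (p q c : ℝ), p ≤ q →
      (∫ x, Set.indicator (Set.Icc p q) (fun _ => c) x) = (q - p) * c := by
    intro p q c hpq
    rw [integral_indicator_const c (hmIcc p q), Real.volume_real_Icc_of_le hpq,
      smul_eq_mul]
  have hIf : (∫ x, f x) = 1 + a := by
    rw [hfdef]; unfold fAux
    rw [integral_add (hintc 0 1 1) (hintc (2*A) (2*A+1) a),
      hIc 0 1 1 (by norm_num), hIc (2*A) (2*A+1) a (by linarith)]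
    ring
  have hIh : (∫ x, h x) = 1 + a + b := by
    rw [hhdef]
    rw [integral_add hfint (hintc A (A+1) b), hIf, hIc A (A+1) b (by linarith)]
    ring
  -- rpow facts
  have hbpow : a ^ ((1:ℝ)/2) = b := by
    rw [hadef, ← Real.rpow_natCast b 2, ← Real.rpow_mul hb0.le]
    norm_num
  refine ⟨f, h, ?_, ?_, ?_, ?_, ?_, ?_, ?_⟩
  · -- f measurable
    rw [hfdef]; unfold fAux
    exact ((measurable_const.indicator (hmIcc 0 1)).add
      (measurable_const.indicator (hmIcc (2*A) (2*A+1))))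
  · -- h measurable
    rw [hhdef]
    refine Measurable.add ?_ (measurable_const.indicator (hmIcc A (A+1)))
    unfold fAux
    exact ((measurable_const.indicator (hmIcc 0 1)).add
      (measurable_const.indicator (hmIcc (2*A) (2*A+1))))
  · exact fun x => fAux_nonneg a A ha0.le x
  · intro x
    rw [hhdef]
    have h1 := fAux_nonneg a A ha0.le x
    have h2 : 0 ≤ Set.indicator (Set.Icc A (A+1)) (fun _ => b) x :=
      Set.indicator_nonneg (fun _ _ => hb0.le) x
    simpa using add_nonneg h1 h2
  · -- midpoint inequality
    intro x y
    have hhf : ∀ z, fAux a A z ≤ h z := by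
      intro z
      rw [hhdef]
      have : 0 ≤ Set.indicator (Set.Icc A (A+1)) (fun _ => b) z :=
        Set.indicator_nonneg (fun _ _ => hb0.le) z
      simp only []
      linarith
    have hhb : ∀ z, z ∈ Set.Icc A (A+1) → b ≤ h z := by
      intro z hz
      rw [hhdef]
      have h1 := fAux_nonneg a A ha0.le z
      simp only [Set.indicator_of_mem hz]
      linarith
    have hh0 : ∀ z, (0:ℝ) ≤ h z := by
      intro z
      have := hhf z; have := fAux_nonneg a A ha0.le z; linarith
    by_cases hx1 : x ∈ Set.Icc (0:ℝ) 1
    · by_cases hy1 : y ∈ Set.Icc (0:ℝ) 1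
      · -- both in first interval
        rw [hfdef, fAux_val_one a A hA1 hx1, fAux_val_one a A hA1 hy1,
          Real.one_rpow, one_mul]
        have hmid : x/2 + y/2 ∈ Set.Icc (0:ℝ) 1 := by
          constructor
          · linarith [hx1.1, hy1.1]
          · linarith [hx1.2, hy1.2]
        calc (1:ℝ) = fAux a A (x/2 + y/2) := (fAux_val_one a A hA1 hmid).symm
          _ ≤ h (x/2 + y/2) := hhf _
      · by_cases hy2 : y ∈ Set.Icc (2*A) (2*A+1)
        · -- mixed
          rw [hfdef, fAux_val_one a A hA1 hx1, fAux_val_two a A hA1 hy2,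
            Real.one_rpow, one_mul, hbpow]
          have hmid : x/2 + y/2 ∈ Set.Icc A (A+1) := by
            constructor
            · linarith [hx1.1, hy2.1]
            · linarith [hx1.2, hy2.2]
          exact hhb _ hmid
        · have : f y = 0 := by
            rw [hfdef]; unfold fAux
            rw [Set.indicator_of_notMem hy1, Set.indicator_of_notMem hy2]; ring
          rw [this, Real.zero_rpow (by norm_num), mul_zero]
          exact hh0 _
    · by_cases hx2 : x ∈ Set.Icc (2*A) (2*A+1)
      · by_cases hy1 : y ∈ Set.Icc (0:ℝ) 1
        · -- mixed, swapped
          rw [hfdef, fAux_val_two a A hA1 hx2, fAux_val_one a A hA1 hy1,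
            Real.one_rpow, mul_one, hbpow]
          have hmid : x/2 + y/2 ∈ Set.Icc A (A+1) := by
            constructor
            · linarith [hx2.1, hy1.1]
            · linarith [hx2.2, hy1.2]
          exact hhb _ hmid
        · by_cases hy2 : y ∈ Set.Icc (2*A) (2*A+1)
          · -- both in second interval
            rw [hfdef, fAux_val_two a A hA1 hx2, fAux_val_two a A hA1 hy2,
              ← Real.rpow_add ha0]
            norm_num
            have hmid : x/2 + y/2 ∈ Set.Icc (2*A) (2*A+1) := by
              constructor
              · linarith [hx2.1, hy2.1]
              · linarith [hx2.2, hy2.2]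
            calc a = fAux a A (x/2 + y/2) := (fAux_val_two a A hA1 hmid).symm
              _ ≤ h (x/2 + y/2) := hhf _
          · have : f y = 0 := by
              rw [hfdef]; unfold fAux
              rw [Set.indicator_of_notMem hy1, Set.indicator_of_notMem hy2]; ring
            rw [this, Real.zero_rpow (by norm_num), mul_zero]
            exact hh0 _
      · have : f x = 0 := by
          rw [hfdef]; unfold fAux
          rw [Set.indicator_of_notMem hx1, Set.indicator_of_notMem hx2]; ring
        rw [this, Real.zero_rpow (by norm_num), zero_mul]
        exact hh0 _
  · -- integral comparison
    rw [hIh, hIf]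
    nlinarith
  · -- the hull part
    intro F hF0 hFlc hFf hmin
    have hFG : ∀ x, F x ≤ gAux a A x :=
      hmin (gAux a A) (gAux_nonneg a A) (gAux_logconcave a A ha0 ha1 hA0)
        (fAux_le_gAux a A ha0 ha1 hA1)
    have hGF : ∀ x, gAux a A x ≤ F x :=
      gAux_le_majorant a A ha0 ha1 hA1 F hF0 hFlc hFf
    have hFeq : F = gAux a A := funext fun x => le_antisymm (hFG x) (hGF x)
    rw [hFeq, hIf]
    -- gAux integrable
    have hgcont : Continuous (fun z : ℝ => Real.exp (Real.log a * max (z-1) 0 / (2*A))) := by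
      fun_prop
    have hgint : Integrable (gAux a A) := by
      unfold gAux
      exact (hgcont.integrableOn_Icc).integrable_indicator (hmIcc 0 (2*A+1))
    have hdiffint : Integrable (fun x => gAux a A x - f x) := hgint.sub hfint
    have hlb : ∀ x, Set.indicator (Set.Icc (2:ℝ) A) (fun _ => b) x ≤ gAux a A x - f x := by
      intro x
      by_cases hx : x ∈ Set.Icc (2:ℝ) A
      · rw [Set.indicator_of_mem hx]
        have hf0 : f x = 0 := by
          rw [hfdef]; unfold fAux
          rw [Set.indicator_of_notMem, Set.indicator_of_notMem]
          · ring
          · intro hmem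
            have := hmem.1
            have := hx.2
            linarith
          · intro hmem
            have := hmem.2
            have := hx.1
            linarith
        rw [hf0, sub_zero]
        have hx' : x ∈ Set.Icc (0:ℝ) (2*A+1) := ⟨by linarith [hx.1], by linarith [hx.2]⟩
        unfold gAux
        rw [Set.indicator_of_mem hx']
        have hm : max (x-1) 0 = x - 1 := max_eq_left (by linarith [hx.1])
        rw [hm]
        have hlogb : Real.log b < 0 := Real.log_neg hb0 (by linarith)
        have hloga : Real.log a = 2 * Real.log b := by
          rw [hadef, sq, Real.log_mul hb0.ne' hb0.ne']; ring
        have hexp : Real.log b ≤ Real.log a * (x-1) / (2*A) := by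
          rw [hloga]
          have hfrac : (x-1)/A ≤ 1 := by
            rw [div_le_one hA0]; linarith [hx.2]
          have hkey := mul_le_mul_of_nonpos_left hfrac hlogb.le
          rw [mul_one] at hkey
          calc Real.log b ≤ Real.log b * ((x-1)/A) := hkey
            _ = 2 * Real.log b * (x-1) / (2*A) := by field_simp
        calc b = Real.exp (Real.log b) := (Real.exp_log hb0).symm
          _ ≤ Real.exp (Real.log a * (x-1) / (2*A)) := Real.exp_le_exp.mpr hexp
      · rw [Set.indicator_of_notMem hx]
        have := fAux_le_gAux a A ha0 ha1 hA1 x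
        rw [hfdef]
        linarith
    have hmono := integral_mono (hintc 2 A b) hdiffint hlb
    rw [hIc 2 A b (by linarith)] at hmono
    have hAb : (A - 2) * b = 1 := by
      rw [hAdef]
      field_simp
      ring
    rw [hAb] at hmono
    have ha14 : a ≤ 1 := ha1.le
    calc (1:ℝ)/2 * (1 + a) ≤ 1 := by linarith
      _ ≤ ∫ x, (gAux a A x - f x) := hmono
end
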